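/- arXiv:1710.06129 — 4 statements merged into one kernel-verified Lean document; each statement's English description precedes it below -/
import Mathlib

section
/- Let Δ be a simplicial complex and T a nonempty face of Δ that is not a facet, with |T| = k. Let i be such that H̃_i([Δ]_{>k−1}) = H̃_{i−1}([Δ]_{>k−1}) = 0. Then H̃_{i−1}(lk_Δ(T)) ≅ H̃_{i−1}(ast_{[Δ]_{>k−1}}(ρ(T))). -/
set_option autoImplicit false
set_option maxHeartbeats 1000000
set_option synthInstance.maxHeartbeats 400000

/-- A (finite-vertex) abstract simplicial complex on vertex type `V`,
containing the empty face and closed under taking subsets. -/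
structure SComplex (V : Type) where
  faces : Set (Finset V)
  empty_mem : ∅ ∈ faces
  down_closed : ∀ {s t : Finset V}, s ∈ faces → t ⊆ s → t ∈ faces

namespace SComplex

variable {V : Type}

/-- A facet is a maximal face. -/
def IsFacet (K : SComplex V) (s : Finset V) : Prop :=
  s ∈ K.faces ∧ ∀ t ∈ K.faces, s ⊆ t → t = s

/-- The induced subcomplex `Δ|_W` on a set `W` of vertices. -/
def restrict (K : SComplex V) (W : Set V) : SComplex V where
  faces := {s | s ∈ K.faces ∧ ↑s ⊆ W}
  empty_mem := ⟨K.empty_mem, by simp⟩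
  down_closed := fun hs hts =>
    ⟨K.down_closed hs.1 hts, (Finset.coe_subset.mpr hts).trans hs.2⟩

/-- The link `lk_Δ(T)`.  (When `T` is a face this agrees with the usual link;
the empty face is always included.) -/
def link [DecidableEq V] (K : SComplex V) (T : Finset V) : SComplex V where
  faces := {G | G = ∅ ∨ (Disjoint T G ∧ T ∪ G ∈ K.faces)}
  empty_mem := Or.inl rfl
  down_closed := by
    rintro s t (rfl | ⟨h1, h2⟩) hts
    · exact Or.inl (Finset.subset_empty.mp hts)
    · exact Or.inr ⟨h1.mono_right (Finset.coe_subset.mpr hts : _),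
        K.down_closed h2 (Finset.union_subset_union_right hts)⟩

/-- `[Δ]_{>j}` : the order complex of the poset of faces of `Δ` of cardinality
strictly greater than `j`; its faces are the chains of such faces. -/
def orderComplex (K : SComplex V) (j : ℕ) : SComplex (Finset V) where
  faces := {C | (∀ s ∈ C, s ∈ K.faces ∧ j < s.card) ∧
    ∀ s ∈ C, ∀ t ∈ C, s ⊆ t ∨ t ⊆ s}
  empty_mem := by simp
  down_closed := fun h hts =>
    ⟨fun s hs => h.1 s (hts hs), fun s hs t ht => h.2 s (hts hs) t (hts ht)⟩

/-- The `i`-th nerve complex of the family of sets `A 1, …, A r`: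
faces are the sets of indices whose members intersect in at least `i` vertices. -/
def nerve [DecidableEq V] {r : ℕ} (A : Fin r → Finset V) (i : ℕ) :
    SComplex (Fin r) where
  faces := {F | ∀ hF : F.Nonempty, i ≤ (F.inf' hF A).card}
  empty_mem := fun hF => absurd hF (by simp)
  down_closed := by
    intro s t hs hts ht
    have h1 : s.Nonempty := ht.mono hts
    have h2 : s.inf' h1 A ⊆ t.inf' ht A :=
      Finset.le_inf' ht _ fun b hb => Finset.inf'_le _ (hts hb)
    exact le_trans (hs h1) (Finset.card_le_card h2)

/-- `A` enumerates (without repetition) the facets of `K`. -/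
def FacetEnum (K : SComplex V) {r : ℕ} (A : Fin r → Finset V) : Prop :=
  Function.Injective A ∧ ∀ s : Finset V, K.IsFacet s ↔ ∃ a, A a = s

/-- A simplicial complex is connected if it has a vertex and any two vertices
are joined by a path of edges. -/
def Conn [DecidableEq V] (K : SComplex V) : Prop :=
  (∃ v, {v} ∈ K.faces) ∧ ∀ v w : V, {v} ∈ K.faces → {w} ∈ K.faces →
    Relation.ReflTransGen (fun a b => ({a, b} : Finset V) ∈ K.faces) v w

/-- There is a simplicial isomorphism between `K₁` and `K₂`. -/
def SimplicialIso {V₁ V₂ : Type} [DecidableEq V₂]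
    (K₁ : SComplex V₁) (K₂ : SComplex V₂) : Prop :=
  ∃ f : V₁ → V₂, Set.InjOn f {v | {v} ∈ K₁.faces} ∧
    (∀ s ∈ K₁.faces, s.image f ∈ K₂.faces) ∧
    (∀ t ∈ K₂.faces, ∃ s ∈ K₁.faces, s.image f = t)

section Homology

variable (k : Type) [Field k]

/-- The space of simplicial `ℓ`-chains (on faces of cardinality `ℓ`), with
coefficients in `k`.  (Note the shift: level `ℓ` corresponds to homological
degree `ℓ - 1` in reduced homology; level `0` is spanned by the empty face.) -/
abbrev chainSpace (K : SComplex V) (ℓ : ℕ) : Type :=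
  {s : Finset V // s ∈ K.faces ∧ s.card = ℓ} → k

open Classical in
/-- The simplicial boundary map (expressed on chains-as-functions via cofaces),
using a classical well-ordering of the vertices for the orientation signs. -/
noncomputable def boundary [Fintype V] [DecidableEq V] (K : SComplex V) (ℓ : ℕ) :
    chainSpace k K (ℓ + 1) →ₗ[k] chainSpace k K ℓ where
  toFun g := fun t => ∑ v ∈ t.1ᶜ.attach,
    if h : insert v.1 t.1 ∈ K.faces then
      ((-1 : k) ^ (((↑t.1 : Set V) ∩ {w | WellOrderingRel w v.1}).ncard)) *
        g ⟨insert v.1 t.1, h, by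
          rw [Finset.card_insert_of_notMem (Finset.mem_compl.mp v.2), t.2.2]⟩
    else 0
  map_add' := by
    intro g h
    funext t
    rw [Pi.add_apply, ← Finset.sum_add_distrib]
    refine Finset.sum_congr rfl fun v _ => ?_
    split <;> simp [mul_add]
  map_smul' := by
    intro c g
    funext t
    rw [RingHom.id_apply, Pi.smul_apply, Finset.smul_sum]
    refine Finset.sum_congr rfl fun v _ => ?_
    split <;> simp [smul_eq_mul] <;> ring

/-- Cycles at level `ℓ`; at level `0` every chain is a cycle. -/
noncomputable def cycles [Fintype V] [DecidableEq V] (K : SComplex V) :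
    (ℓ : ℕ) → Submodule k (chainSpace k K ℓ)
  | 0 => ⊤
  | (n + 1) => LinearMap.ker (boundary k K n)

/-- The `i`-th reduced simplicial homology of `K` with coefficients in the
field `k` (here `i : ℤ`; it vanishes by definition for `i < -1`). -/
noncomputable def Hred [Fintype V] [DecidableEq V] (K : SComplex V) (i : ℤ) :
    ModuleCat k :=
  if i < -1 then ModuleCat.of k PUnit
  else ModuleCat.of k
    ((cycles k K (i + 1).toNat) ⧸
      (Submodule.comap (cycles k K (i + 1).toNat).subtype
        (LinearMap.range (boundary k K (i + 1).toNat))))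

end Homology

section Enumerative

/-- `f_i(Δ)`: the number of faces of cardinality `i + 1`. -/
noncomputable def fvec (K : SComplex V) (i : ℕ) : ℕ :=
  Set.ncard {s | s ∈ K.faces ∧ s.card = i + 1}

/-- The (non-reduced) Euler characteristic `χ(Δ) = Σ_h (-1)^h f_h(Δ)`. -/
noncomputable def euler [Fintype V] (K : SComplex V) : ℤ :=
  ∑ h ∈ Finset.range (Fintype.card V + 1), (-1) ^ h * (fvec K h : ℤ)

/-- The reduced Euler characteristic `χ̃(Δ) = -1 + Σ_h (-1)^h f_h(Δ)`. -/
noncomputable def reducedEuler [Fintype V] (K : SComplex V) : ℤ :=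
  euler K - 1

/-- The `h`-vector: `h_k = Σ_{i=0}^k (-1)^{k-i} C(d-i, k-i) f_{i-1}`. -/
noncomputable def hvec (K : SComplex V) (d : ℕ) (j : ℕ) : ℤ :=
  ∑ i ∈ Finset.range (j + 1),
    (-1) ^ (j - i) * ((d - i).choose (j - i) : ℤ) *
      (if i = 0 then 1 else (fvec K (i - 1) : ℤ))

end Enumerative

section StanleyReisner

variable (k : Type) [Field k]

/-- The Stanley–Reisner ideal of `K`: generated by the squarefree monomials
supported on non-faces. -/
noncomputable def srIdeal (K : SComplex V) : Ideal (MvPolynomial V k) :=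
  Ideal.span {p | ∃ s : Finset V, s ∉ K.faces ∧ p = ∏ v ∈ s, MvPolynomial.X v}

/-- The Stanley–Reisner ring `k[Δ]`. -/
abbrev srRing (K : SComplex V) : Type := MvPolynomial V k ⧸ srIdeal k K

/-- The depth of a module `M` with respect to an ideal `I`: the supremum of
the lengths of `M`-regular sequences consisting of elements of `I`. -/
noncomputable def idealDepth (R : Type) [CommRing R] (I : Ideal R)
    (M : Type) [AddCommGroup M] [Module R M] : ℕ :=
  sSup {n | ∃ rs : List R, rs.length = n ∧ (∀ r ∈ rs, r ∈ I) ∧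
    RingTheory.Sequence.IsRegular M rs}

/-- `depth k[Δ]`: the depth of the Stanley–Reisner ring with respect to its
graded maximal ideal (generated by all the variables). -/
noncomputable def srDepth (K : SComplex V) : ℕ :=
  idealDepth (srRing k K)
    (Ideal.span (Set.range fun v : V =>
      Ideal.Quotient.mk (srIdeal k K) (MvPolynomial.X v)))
    (srRing k K)

end StanleyReisner

end SComplex




set_option linter.unusedSectionVars false

noncomputable section glob
open scoped Classical

namespace SCP

variable (k : Type) [Field k] {W : Type} [Fintype W] [DecidableEq W]

/-- global orientation sign -/
def sgn (t : Finset W) (v : W) : k :=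
  (-1 : k) ^ (((↑t : Set W) ∩ {w | WellOrderingRel w v}).ncard)

variable {k}

lemma sgn_eq (t : Finset W) (v : W) :
    (sgn k t v : k) = (-1 : k) ^ ((t.filter (fun w => WellOrderingRel w v)).card) := by
  have h : ((↑t : Set W) ∩ {w | WellOrderingRel w v})
      = ↑(t.filter (fun w => WellOrderingRel w v)) := by
    ext w; simp
  rw [sgn, h, Set.ncard_coe_finset]

lemma sgn_mul_self (t : Finset W) (v : W) : (sgn k t v) * sgn k t v = 1 := by
  rw [sgn, ← mul_pow]; norm_num

lemma sgn_insert {t : Finset W} {v : W} (hv : v ∉ t) (w : W) :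
    (sgn k (insert v t) w) = (if WellOrderingRel v w then (-1:k) else 1) * sgn k t w := by
  rw [sgn_eq, sgn_eq, Finset.filter_insert]
  split
  · rw [Finset.card_insert_of_notMem (fun hc => hv (Finset.mem_of_mem_filter v hc)), pow_succ]
    ring
  · rw [one_mul]

lemma sgn_anticomm {t : Finset W} {v w : W} (hvw : v ≠ w) (hv : v ∉ t) (hw : w ∉ t) :
    sgn k t v * sgn k (insert v t) w = -(sgn k t w * sgn k (insert w t) v) := by
  rcases trichotomous_of WellOrderingRel v w with h | h | h
  · rw [sgn_insert hv w, if_pos h, sgn_insert hw v, if_neg (asymm_of WellOrderingRel h)]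
    ring
  · exact absurd h hvw
  · rw [sgn_insert hv w, if_neg (asymm_of WellOrderingRel h), sgn_insert hw v, if_pos h]
    ring

lemma sgn_anticomm2 {t : Finset W} {v w : W} (hvw : v ≠ w) (hv : v ∉ t) (hw : w ∉ t) :
    sgn k (insert v t) w * sgn k (insert w t) v = -(sgn k t v * sgn k t w) := by
  rcases trichotomous_of WellOrderingRel v w with h | h | h
  · rw [sgn_insert hv w, if_pos h, sgn_insert hw v, if_neg (asymm_of WellOrderingRel h)]
    ring
  · exact absurd h hvw
  · rw [sgn_insert hv w, if_neg (asymm_of WellOrderingRel h), sgn_insert hw v, if_pos h]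
    ring

variable (k)

/-- the global (all-cardinalities) coface/boundary operator -/
def Bd : (Finset W → k) →ₗ[k] (Finset W → k) where
  toFun G := fun t => ∑ v ∈ tᶜ, sgn k t v * G (insert v t)
  map_add' := by
    intro g h; funext t
    rw [Pi.add_apply, ← Finset.sum_add_distrib]
    exact Finset.sum_congr rfl fun v _ => by rw [Pi.add_apply]; ring
  map_smul' := by
    intro c g; funext t
    rw [RingHom.id_apply, Pi.smul_apply, Finset.smul_sum]
    exact Finset.sum_congr rfl fun v _ => by rw [Pi.smul_apply, smul_eq_mul, smul_eq_mul]; ring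

lemma Bd_apply (G : Finset W → k) (t : Finset W) :
    Bd k G t = ∑ v ∈ tᶜ, sgn k t v * G (insert v t) := rfl

/-- the global cone operator with apex `a` -/
def Ca (a : W) : (Finset W → k) →ₗ[k] (Finset W → k) where
  toFun G := fun t => if a ∈ t then sgn k (t.erase a) a * G (t.erase a) else 0
  map_add' := by
    intro g h; funext t
    by_cases hat : a ∈ t <;> simp [hat, mul_add]
  map_smul' := by
    intro c g; funext t
    by_cases hat : a ∈ t <;> simp [hat, smul_eq_mul] <;> ring

lemma Ca_apply (a : W) (G : Finset W → k) (t : Finset W) :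
    Ca k a G t = if a ∈ t then sgn k (t.erase a) a * G (t.erase a) else 0 := rfl

variable {k}

lemma Bd_Bd (G : Finset W → k) : Bd k (Bd k G) = 0 := by
  funext t
  rw [Bd_apply, Pi.zero_apply]
  have h1 : ∀ v ∈ tᶜ, sgn k t v * Bd k G (insert v t)
      = ∑ w ∈ tᶜ.erase v, sgn k t v * (sgn k (insert v t) w * G (insert w (insert v t))) := by
    intro v hv
    rw [Bd_apply, Finset.compl_insert, Finset.mul_sum]
  rw [Finset.sum_congr rfl h1, Finset.sum_sigma']
  refine Finset.sum_involution (fun p _ => ⟨p.2, p.1⟩) ?_ ?_ ?_ ?_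
  · intro p hp
    simp only [Finset.mem_sigma, Finset.mem_erase] at hp
    obtain ⟨h1, h2, h3⟩ := hp
    have hv : p.1 ∉ t := Finset.mem_compl.mp h1
    have hw : p.2 ∉ t := Finset.mem_compl.mp h3
    rw [Finset.insert_comm]
    have := sgn_anticomm (k := k) (Ne.symm h2) hv hw
    calc sgn k t p.1 * (sgn k (insert p.1 t) p.2 * G (insert p.1 (insert p.2 t)))
          + sgn k t p.2 * (sgn k (insert p.2 t) p.1 * G (insert p.1 (insert p.2 t)))
        = (sgn k t p.1 * sgn k (insert p.1 t) p.2
            + sgn k t p.2 * sgn k (insert p.2 t) p.1) * G (insert p.1 (insert p.2 t)) := by ring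
      _ = 0 := by rw [this]; ring
  · intro p hp _
    simp only [Finset.mem_sigma, Finset.mem_erase] at hp
    intro hc
    have : p.1 = p.2 := by
      have := congrArg Sigma.fst hc
      simp at this
      exact this.symm
    exact hp.2.1 this.symm
  · intro p hp
    simp only [Finset.mem_sigma, Finset.mem_erase] at hp ⊢
    exact ⟨hp.2.2, Ne.symm hp.2.1, hp.1⟩
  · intro p _; rfl

end SCP

namespace SCP
variable {k : Type} [Field k] {W : Type} [Fintype W] [DecidableEq W]

lemma Bd_Ca_add_Ca_Bd (a : W) (G : Finset W → k) :
    Bd k (Ca k a G) + Ca k a (Bd k G) = G := by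
  funext t
  rw [Pi.add_apply, Bd_apply, Ca_apply]
  by_cases hat : a ∈ t
  · obtain ⟨t', ha', rfl⟩ : ∃ t', a ∉ t' ∧ insert a t' = t :=
      ⟨t.erase a, Finset.notMem_erase a t, Finset.insert_erase hat⟩
    rw [if_pos (Finset.mem_insert_self a t'), Finset.erase_insert ha', Bd_apply,
      Finset.mul_sum, Finset.compl_insert]
    have hstep : ∀ v ∈ t'ᶜ.erase a,
        sgn k (insert a t') v * (Ca k a) G (insert v (insert a t'))
        = sgn k (insert a t') v * (sgn k (insert v t') a * G (insert v t')) := by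
      intro v hv
      obtain ⟨hva, hvt⟩ := Finset.mem_erase.mp hv
      have hvt' : v ∉ t' := Finset.mem_compl.mp hvt
      have hanotin : a ∉ insert v t' := by
        intro hc
        rcases Finset.mem_insert.mp hc with h | h
        · exact hva h.symm
        · exact ha' h
      rw [Finset.insert_comm, Ca_apply, if_pos (Finset.mem_insert_self a (insert v t')),
        Finset.erase_insert hanotin]
    rw [Finset.sum_congr rfl hstep]
    have hsplit : ∑ w ∈ t'ᶜ, sgn k t' a * (sgn k t' w * G (insert w t'))
        = sgn k t' a * (sgn k t' a * G (insert a t'))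
          + ∑ w ∈ t'ᶜ.erase a, sgn k t' a * (sgn k t' w * G (insert w t')) :=
      (Finset.add_sum_erase _ _ (Finset.mem_compl.mpr ha')).symm
    rw [hsplit, ← mul_assoc, sgn_mul_self, one_mul, add_comm (G (insert a t')) _,
      ← add_assoc, ← Finset.sum_add_distrib]
    have hzero : ∀ v ∈ t'ᶜ.erase a,
        sgn k (insert a t') v * (sgn k (insert v t') a * G (insert v t'))
          + sgn k t' a * (sgn k t' v * G (insert v t')) = 0 := by
      intro v hv
      obtain ⟨hva, hvt⟩ := Finset.mem_erase.mp hv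
      have hvt' : v ∉ t' := Finset.mem_compl.mp hvt
      have key := sgn_anticomm2 (k := k) (t := t') hva hvt' ha'
      calc sgn k (insert a t') v * (sgn k (insert v t') a * G (insert v t'))
            + sgn k t' a * (sgn k t' v * G (insert v t'))
          = (sgn k (insert v t') a * sgn k (insert a t') v) * G (insert v t')
            + (sgn k t' v * sgn k t' a) * G (insert v t') := by ring
        _ = 0 := by rw [key]; ring
    rw [Finset.sum_congr rfl hzero, Finset.sum_const_zero, zero_add]
  · rw [if_neg hat, add_zero]
    rw [Finset.sum_eq_single_of_mem a (Finset.mem_compl.mpr hat)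
      (fun v hv hva => by
        have hvt : v ∉ t := Finset.mem_compl.mp hv
        have : a ∉ insert v t := by
          intro hc
          rcases Finset.mem_insert.mp hc with h | h
          · exact hva h.symm
          · exact hat h
        rw [Ca_apply, if_neg this, mul_zero])]
    rw [Ca_apply, if_pos (Finset.mem_insert_self a t), Finset.erase_insert hat,
      ← mul_assoc, sgn_mul_self, one_mul]

end SCP



noncomputable section plumbing
open scoped Classical
open SComplex

namespace SCP
variable (k : Type) [Field k] {W : Type} [Fintype W] [DecidableEq W]

/-- extend a chain to a global function -/
def ext (X : SComplex W) (ℓ : ℕ) : chainSpace k X ℓ →ₗ[k] (Finset W → k) where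
  toFun g := fun s => if h : s ∈ X.faces ∧ s.card = ℓ then g ⟨s, h⟩ else 0
  map_add' := by
    intro g h; funext s
    by_cases hs : s ∈ X.faces ∧ s.card = ℓ
    · simp [hs]
    · simp [hs]
  map_smul' := by
    intro c g; funext s
    by_cases hs : s ∈ X.faces ∧ s.card = ℓ
    · simp [hs]
    · simp [hs]

/-- restrict a global function to a chain -/
def res (X : SComplex W) (ℓ : ℕ) : (Finset W → k) →ₗ[k] chainSpace k X ℓ where
  toFun G := fun s => G s.1
  map_add' := by intro g h; rfl
  map_smul' := by intro c g; rfl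

variable {k}

/-- supported on faces of cardinality ℓ -/
def Spt (X : SComplex W) (ℓ : ℕ) (G : Finset W → k) : Prop :=
  ∀ s, G s ≠ 0 → s ∈ X.faces ∧ s.card = ℓ

lemma ext_apply (X : SComplex W) (ℓ : ℕ) (g : chainSpace k X ℓ) (s : Finset W) :
    ext k X ℓ g s = if h : s ∈ X.faces ∧ s.card = ℓ then g ⟨s, h⟩ else 0 := rfl

lemma res_apply (X : SComplex W) (ℓ : ℕ) (G : Finset W → k)
    (s : {s : Finset W // s ∈ X.faces ∧ s.card = ℓ}) :
    res k X ℓ G s = G s.1 := rfl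

lemma spt_ext (X : SComplex W) (ℓ : ℕ) (g : chainSpace k X ℓ) : Spt X ℓ (ext k X ℓ g) := by
  intro s hs
  by_contra hc
  exact hs (dif_neg hc)

lemma res_ext (X : SComplex W) (ℓ : ℕ) (g : chainSpace k X ℓ) :
    res k X ℓ (ext k X ℓ g) = g := by
  funext s
  rw [res_apply, ext_apply, dif_pos s.2]

lemma ext_res {X : SComplex W} {ℓ : ℕ} {G : Finset W → k} (h : Spt X ℓ G) :
    ext k X ℓ (res k X ℓ G) = G := by
  funext s
  rw [ext_apply]
  by_cases hs : s ∈ X.faces ∧ s.card = ℓ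
  · rw [dif_pos hs]; rfl
  · rw [dif_neg hs]
    by_contra hc
    exact hs (h s fun h0 => hc h0.symm)

lemma boundary_eq (X : SComplex W) (ℓ : ℕ) (g : chainSpace k X (ℓ+1)) :
    boundary k X ℓ g = res k X ℓ (Bd k (ext k X (ℓ+1) g)) := by
  funext t
  show _ = Bd k (ext k X (ℓ+1) g) t.1
  rw [Bd_apply]
  rw [boundary]
  simp only [LinearMap.coe_mk, AddHom.coe_mk]
  rw [← Finset.sum_attach t.1ᶜ (fun v => sgn k t.1 v * ext k X (ℓ+1) g (insert v t.1))]
  refine Finset.sum_congr rfl fun v _ => ?_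
  by_cases h : insert v.1 t.1 ∈ X.faces
  · rw [dif_pos h, ext_apply, dif_pos ⟨h, by
      rw [Finset.card_insert_of_notMem (Finset.mem_compl.mp v.2), t.2.2]⟩]
    rfl
  · rw [dif_neg h, ext_apply, dif_neg (fun hc => h hc.1), mul_zero]

lemma spt_Bd {X : SComplex W} {ℓ : ℕ} {G : Finset W → k} (h : Spt X (ℓ+1) G) :
    Spt X ℓ (Bd k G) := by
  intro t ht
  rw [Bd_apply] at ht
  obtain ⟨v, hv, hne⟩ := Finset.exists_ne_zero_of_sum_ne_zero ht
  have hG : G (insert v t) ≠ 0 := fun h0 => hne (by rw [h0, mul_zero])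
  obtain ⟨hf, hc⟩ := h _ hG
  refine ⟨X.down_closed hf (Finset.subset_insert v t), ?_⟩
  rw [Finset.card_insert_of_notMem (Finset.mem_compl.mp hv)] at hc
  exact Nat.succ_injective hc

lemma boundary_boundary (X : SComplex W) (ℓ : ℕ) (g : chainSpace k X (ℓ+2)) :
    boundary k X ℓ (boundary k X (ℓ+1) g) = 0 := by
  rw [boundary_eq, boundary_eq, ext_res (spt_Bd (spt_ext X (ℓ+2) g)), Bd_Bd]
  exact map_zero _

lemma mem_cycles_of_boundary (X : SComplex W) (ℓ : ℕ) (g : chainSpace k X (ℓ+1)) :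
    boundary k X ℓ g ∈ cycles k X ℓ := by
  match ℓ with
  | 0 => exact Submodule.mem_top
  | Nat.succ n => exact LinearMap.mem_ker.mpr (boundary_boundary X n g)

variable (k)

/-- homology at level ℓ (degree ℓ-1), matching the pinned `Hred`. -/
abbrev Hlv (X : SComplex W) (ℓ : ℕ) : Type :=
  (cycles k X ℓ) ⧸ (Submodule.comap (cycles k X ℓ).subtype
      (LinearMap.range (boundary k X ℓ)))

end SCP
end plumbing


noncomputable section chainmaps
open scoped Classical
open SComplex

namespace SCP
variable (k : Type) [Field k] {W₁ W₂ W₃ : Type}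
  [Fintype W₁] [DecidableEq W₁] [Fintype W₂] [DecidableEq W₂] [Fintype W₃] [DecidableEq W₃]

/-- a chain map between the chain complexes of two simplicial complexes -/
structure CM (X : SComplex W₁) (Y : SComplex W₂) where
  f : ∀ n, chainSpace k X n →ₗ[k] chainSpace k Y n
  comm : ∀ n (g : chainSpace k X (n+1)), f n (boundary k X n g) = boundary k Y n (f (n+1) g)

variable {k}
variable {X : SComplex W₁} {Y : SComplex W₂} {Z : SComplex W₃}

lemma CM.mapCycles (c : CM k X Y) (m : ℕ) :
    ∀ x ∈ cycles k X m, c.f m x ∈ cycles k Y m := by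
  match m with
  | 0 => exact fun x _ => Submodule.mem_top
  | Nat.succ n =>
    intro x hx
    rw [cycles, LinearMap.mem_ker] at hx ⊢
    rw [← c.comm n x, hx, map_zero]

def CM.restrictCycles (c : CM k X Y) (m : ℕ) : cycles k X m →ₗ[k] cycles k Y m :=
  (c.f m).restrict (c.mapCycles m)

lemma CM.restrictCycles_coe (c : CM k X Y) (m : ℕ) (x : cycles k X m) :
    (c.restrictCycles m x : chainSpace k Y m) = c.f m x := rfl

def CM.H (c : CM k X Y) (m : ℕ) : Hlv k X m →ₗ[k] Hlv k Y m :=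
  Submodule.liftQ _ ((Submodule.mkQ _).comp (c.restrictCycles m)) (by
    intro x hx
    rw [Submodule.mem_comap] at hx
    obtain ⟨y, hy⟩ := hx
    rw [LinearMap.mem_ker, LinearMap.comp_apply, Submodule.mkQ_apply,
      Submodule.Quotient.mk_eq_zero, Submodule.mem_comap]
    refine ⟨c.f (m+1) y, ?_⟩
    rw [← c.comm m y, hy]
    rfl)

lemma CM.H_mk (c : CM k X Y) (m : ℕ) (x : cycles k X m) :
    c.H m (Submodule.Quotient.mk x) = Submodule.Quotient.mk (c.restrictCycles m x) := by
  rw [CM.H, Submodule.liftQ_apply]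
  rfl

def CM.cid (X : SComplex W₁) : CM k X X where
  f := fun _ => LinearMap.id
  comm := fun _ _ => rfl

def CM.comp (c₂ : CM k Y Z) (c₁ : CM k X Y) : CM k X Z where
  f := fun n => (c₂.f n).comp (c₁.f n)
  comm := by
    intro n g
    simp only [LinearMap.comp_apply, c₁.comm, c₂.comm]

lemma CM.H_cid (m : ℕ) : (CM.cid (k := k) X).H m = LinearMap.id := by
  apply LinearMap.ext
  intro q
  obtain ⟨x, rfl⟩ := Submodule.Quotient.mk_surjective _ q
  rw [CM.H_mk, LinearMap.id_apply]
  congr 1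

lemma CM.H_comp (c₂ : CM k Y Z) (c₁ : CM k X Y) (m : ℕ) :
    (c₂.comp c₁).H m = (c₂.H m).comp (c₁.H m) := by
  apply LinearMap.ext
  intro q
  obtain ⟨x, rfl⟩ := Submodule.Quotient.mk_surjective _ q
  rw [LinearMap.comp_apply, CM.H_mk, CM.H_mk, CM.H_mk]
  congr 1

/-- homotopic chain maps induce the same map on homology -/
lemma CM.H_eq_of_homotopy (c d : CM k X Y)
    (h : ∀ n, chainSpace k X n →ₗ[k] chainSpace k Y (n+1))
    (hom0 : ∀ g, c.f 0 g - d.f 0 g = boundary k Y 0 (h 0 g))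
    (homS : ∀ n (g : chainSpace k X (n+1)), c.f (n+1) g - d.f (n+1) g
        = boundary k Y (n+1) (h (n+1) g) + h n (boundary k X n g)) (m : ℕ) :
    c.H m = d.H m := by
  apply LinearMap.ext
  intro q
  obtain ⟨x, rfl⟩ := Submodule.Quotient.mk_surjective _ q
  rw [CM.H_mk, CM.H_mk, Submodule.Quotient.eq, Submodule.mem_comap]
  have hcoe : (cycles k Y m).subtype (c.restrictCycles m x - d.restrictCycles m x)
      = c.f m (x : chainSpace k X m) - d.f m (x : chainSpace k X m) := rfl
  rw [hcoe]
  match m with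
  | 0 => exact ⟨h 0 x, (hom0 x).symm⟩
  | Nat.succ n =>
    refine ⟨h (n+1) x, ?_⟩
    have hx : boundary k X n (x : chainSpace k X (n+1)) = 0 := x.2
    rw [homS n x, hx, map_zero, add_zero]

/-- a homotopy equivalence induces an isomorphism on homology -/
def CM.equivH (c : CM k X Y) (d : CM k Y X)
    (h1 : ∀ n, chainSpace k X n →ₗ[k] chainSpace k X (n+1))
    (h1hom0 : ∀ g, (d.comp c).f 0 g - (CM.cid X).f 0 g = boundary k X 0 (h1 0 g))
    (h1homS : ∀ n (g : chainSpace k X (n+1)), (d.comp c).f (n+1) g - (CM.cid X).f (n+1) g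
        = boundary k X (n+1) (h1 (n+1) g) + h1 n (boundary k X n g))
    (h2 : ∀ n, chainSpace k Y n →ₗ[k] chainSpace k Y (n+1))
    (h2hom0 : ∀ g, (c.comp d).f 0 g - (CM.cid Y).f 0 g = boundary k Y 0 (h2 0 g))
    (h2homS : ∀ n (g : chainSpace k Y (n+1)), (c.comp d).f (n+1) g - (CM.cid Y).f (n+1) g
        = boundary k Y (n+1) (h2 (n+1) g) + h2 n (boundary k Y n g)) (m : ℕ) :
    Hlv k X m ≃ₗ[k] Hlv k Y m :=
  LinearEquiv.ofLinear (c.H m) (d.H m)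
    (by rw [← CM.H_comp, CM.H_eq_of_homotopy (c.comp d) (CM.cid Y) h2 h2hom0 h2homS m, CM.H_cid])
    (by rw [← CM.H_comp, CM.H_eq_of_homotopy (d.comp c) (CM.cid X) h1 h1hom0 h1homS m, CM.H_cid])

end SCP
end chainmaps


noncomputable section snakeprelim
open scoped Classical
open SComplex

namespace SCP
variable (k : Type) [Field k] {V : Type} [Fintype V] [DecidableEq V]

/-- the order complex `Γ` -/
def Gam (K : SComplex V) (T : Finset V) : SComplex (Finset V) :=
  orderComplex K (T.card - 1)

/-- the anti-star `A` of `ρ(T)` in `Γ` -/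
def Ast (K : SComplex V) (T : Finset V) : SComplex (Finset V) :=
  (Gam K T).restrict {s | s ≠ T}

/-- the link `L` of `ρ(T)` in `Γ` -/
def Lk2 (K : SComplex V) (T : Finset V) : SComplex (Finset V) :=
  link (Gam K T) {T}

variable {k}
variable {K : SComplex V} {T : Finset V}

lemma T_mem_Gam (hT : T ∈ K.faces) (hTne : T ≠ ∅) : ({T} : Finset (Finset V)) ∈ (Gam K T).faces := by
  refine ⟨?_, ?_⟩
  · intro s hs
    rw [Finset.mem_singleton] at hs
    subst hs
    exact ⟨hT, Nat.sub_lt (Finset.card_pos.mpr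
      (Finset.nonempty_iff_ne_empty.mpr hTne)) one_pos⟩
  · intro s hs t ht
    rw [Finset.mem_singleton] at hs ht
    subst hs; subst ht
    exact Or.inl subset_rfl

lemma mem_Lk2_iff (hT : T ∈ K.faces) (hTne : T ≠ ∅) (G : Finset (Finset V)) :
    G ∈ (Lk2 K T).faces ↔ T ∉ G ∧ insert T G ∈ (Gam K T).faces := by
  constructor
  · rintro (rfl | ⟨hd, hu⟩)
    · refine ⟨Finset.notMem_empty T, ?_⟩
      have : insert T (∅ : Finset (Finset V)) = {T} := rfl
      rw [this]
      exact T_mem_Gam hT hTne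
    · refine ⟨Finset.disjoint_singleton_left.mp hd, ?_⟩
      rwa [Finset.insert_eq]
  · rintro ⟨hTG, hins⟩
    right
    refine ⟨Finset.disjoint_singleton_left.mpr hTG, ?_⟩
    rwa [← Finset.insert_eq]

lemma mem_Ast_iff (s : Finset (Finset V)) :
    s ∈ (Ast K T).faces ↔ s ∈ (Gam K T).faces ∧ T ∉ s := by
  constructor
  · rintro ⟨h1, h2⟩
    exact ⟨h1, fun hc => (h2 (Finset.mem_coe.mpr hc)) rfl⟩
  · rintro ⟨h1, h2⟩
    exact ⟨h1, fun x hx he => h2 (he ▸ (Finset.mem_coe.mp hx))⟩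

lemma Ast_faces_subset (s : Finset (Finset V)) (hs : s ∈ (Ast K T).faces) :
    s ∈ (Gam K T).faces := ((mem_Ast_iff s).mp hs).1

lemma not_T_mem_of_Lk2 (hT : T ∈ K.faces) (hTne : T ≠ ∅) {G : Finset (Finset V)}
    (hG : G ∈ (Lk2 K T).faces) : T ∉ G := ((mem_Lk2_iff hT hTne G).mp hG).1

lemma erase_mem_Lk2 (hT : T ∈ K.faces) (hTne : T ≠ ∅) {u : Finset (Finset V)}
    (hu : u ∈ (Gam K T).faces) (hTu : T ∈ u) : u.erase T ∈ (Lk2 K T).faces := by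
  rw [mem_Lk2_iff hT hTne]
  exact ⟨Finset.notMem_erase T u, by rwa [Finset.insert_erase hTu]⟩

variable (k T)

/-- the sign twist for the link identification -/
def eta (t : Finset (Finset V)) : k :=
  (-1 : k) ^ ((t.filter (fun s => WellOrderingRel T s)).card)

/-- global version of the quotient map to the (shifted) link complex -/
def PsiG : (Finset (Finset V) → k) →ₗ[k] (Finset (Finset V) → k) where
  toFun G := fun t => if T ∉ t then eta k T t * G (insert T t) else 0
  map_add' := by
    intro g h; funext t
    by_cases ht : T ∈ t
    · simp only [Pi.add_apply, if_neg (not_not_intro ht), add_zero]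
    · simp only [Pi.add_apply, if_pos ht, mul_add]
  map_smul' := by
    intro c g; funext t
    by_cases ht : T ∈ t
    · simp only [Pi.smul_apply, if_neg (not_not_intro ht), smul_zero]
    · simp only [Pi.smul_apply, if_pos ht, smul_eq_mul, RingHom.id_apply]; ring

/-- global version of the splitting of `PsiG` -/
def RhoG : (Finset (Finset V) → k) →ₗ[k] (Finset (Finset V) → k) where
  toFun G := fun u => if T ∈ u then eta k T (u.erase T) * G (u.erase T) else 0
  map_add' := by
    intro g h; funext u
    by_cases hu : T ∈ u
    · simp only [Pi.add_apply, if_pos hu, mul_add]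
    · simp only [Pi.add_apply, if_neg hu, add_zero]
  map_smul' := by
    intro c g; funext u
    by_cases hu : T ∈ u
    · simp only [Pi.smul_apply, if_pos hu, smul_eq_mul, RingHom.id_apply]; ring
    · simp only [Pi.smul_apply, if_neg hu, smul_zero]

/-- global restriction to chains avoiding `T` -/
def RstG : (Finset (Finset V) → k) →ₗ[k] (Finset (Finset V) → k) where
  toFun G := fun t => if T ∉ t then G t else 0
  map_add' := by
    intro g h; funext t
    by_cases ht : T ∈ t
    · simp only [Pi.add_apply, if_neg (not_not_intro ht), add_zero]
    · simp only [Pi.add_apply, if_pos ht]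
  map_smul' := by
    intro c g; funext t
    by_cases ht : T ∈ t
    · simp only [Pi.smul_apply, if_neg (not_not_intro ht), smul_zero]
    · simp only [Pi.smul_apply, if_pos ht, RingHom.id_apply]

variable {k T}

lemma PsiG_apply (G : Finset (Finset V) → k) (t : Finset (Finset V)) :
    PsiG k T G t = if T ∉ t then eta k T t * G (insert T t) else 0 := rfl

lemma RhoG_apply (G : Finset (Finset V) → k) (u : Finset (Finset V)) :
    RhoG k T G u = if T ∈ u then eta k T (u.erase T) * G (u.erase T) else 0 := rfl

lemma RstG_apply (G : Finset (Finset V) → k) (t : Finset (Finset V)) :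
    RstG k T G t = if T ∉ t then G t else 0 := rfl

lemma eta_mul_self (t : Finset (Finset V)) : eta k T t * eta k T t = 1 := by
  rw [eta, ← mul_pow]; norm_num

lemma eta_insert {t : Finset (Finset V)} {F : Finset V} (hF : F ∉ t) :
    eta k T (insert F t) = (if WellOrderingRel T F then (-1:k) else 1) * eta k T t := by
  rw [eta, eta, Finset.filter_insert]
  split
  · rw [Finset.card_insert_of_notMem (fun hc => hF (Finset.mem_of_mem_filter F hc)), pow_succ]
    ring
  · rw [one_mul]

/-- GI1 -/
lemma PsiG_RhoG (G : Finset (Finset V) → k) : PsiG k T (RhoG k T G) = RstG k T G := by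
  funext t
  rw [PsiG_apply, RstG_apply]
  by_cases ht : T ∉ t
  · rw [if_pos ht, if_pos ht, RhoG_apply, if_pos (Finset.mem_insert_self T t),
      Finset.erase_insert ht, ← mul_assoc, eta_mul_self, one_mul]
  · rw [if_neg ht, if_neg ht]

/-- GI2 -/
lemma RstG_add_RhoG_PsiG (G : Finset (Finset V) → k) :
    RstG k T G + RhoG k T (PsiG k T G) = G := by
  funext u
  rw [Pi.add_apply, RstG_apply, RhoG_apply]
  by_cases hu : T ∈ u
  · rw [if_neg (fun hc => hc hu), if_pos hu, PsiG_apply, if_pos (Finset.notMem_erase T u),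
      Finset.insert_erase hu, ← mul_assoc, eta_mul_self, one_mul, zero_add]
  · rw [if_pos hu, if_neg hu, add_zero]

/-- `PsiG` kills boundaries of chains avoiding `T` -/
lemma PsiG_Bd_of_avoid {G : Finset (Finset V) → k} (hG : ∀ u, T ∈ u → G u = 0) :
    PsiG k T (Bd k G) = 0 := by
  funext t
  rw [PsiG_apply, Pi.zero_apply]
  split
  · rw [Bd_apply]
    have : ∀ F ∈ (insert T t)ᶜ, sgn k (insert T t) F * G (insert F (insert T t)) = 0 := by
      intro F _
      rw [hG _ (Finset.mem_insert_of_mem (Finset.mem_insert_self T t)), mul_zero]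
    rw [Finset.sum_congr rfl this, Finset.sum_const_zero, mul_zero]
  · rfl

/-- GI3: the key sign computation -/
lemma PsiG_Bd_RhoG {G : Finset (Finset V) → k} (hG : ∀ u, T ∈ u → G u = 0) :
    PsiG k T (Bd k (RhoG k T G)) = RstG k T (Bd k G) := by
  funext t
  rw [PsiG_apply, RstG_apply]
  by_cases ht : T ∉ t
  · rw [if_pos ht, if_pos ht, Bd_apply, Bd_apply, Finset.compl_insert, Finset.mul_sum]
    have hstep : ∀ F ∈ tᶜ.erase T,
        eta k T t * (sgn k (insert T t) F * RhoG k T G (insert F (insert T t)))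
        = sgn k t F * G (insert F t) := by
      intro F hF
      obtain ⟨hFT, hFc⟩ := Finset.mem_erase.mp hF
      have hFt : F ∉ t := Finset.mem_compl.mp hFc
      have hTFt : T ∉ insert F t := by
        intro hc
        rcases Finset.mem_insert.mp hc with h | h
        · exact hFT h.symm
        · exact ht h
      rw [RhoG_apply, if_pos (Finset.mem_insert_of_mem (Finset.mem_insert_self T t)),
        Finset.insert_comm, Finset.erase_insert hTFt, eta_insert hFt,
        sgn_insert ht F]
      have h2 := eta_mul_self (k := k) (T := T) t
      rcases Classical.em (WellOrderingRel T F) with h | h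
      · rw [if_pos h]
        linear_combination (sgn k t F * G (insert F t)) * h2
      · rw [if_neg h]
        linear_combination (sgn k t F * G (insert F t)) * h2
    rw [Finset.sum_congr rfl hstep]
    -- now compare with the full sum over tᶜ : the T-term vanishes
    have hTc : T ∈ tᶜ := Finset.mem_compl.mpr ht
    rw [← Finset.add_sum_erase tᶜ (fun F => sgn k t F * G (insert F t)) hTc,
      hG _ (Finset.mem_insert_self T t), mul_zero, zero_add]
  · rw [if_neg ht, if_neg ht]

end SCP
end snakeprelim


noncomputable section snakeops
open scoped Classical
open SComplex

namespace SCP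
variable {k : Type} [Field k] {V : Type} [Fintype V] [DecidableEq V]
variable (k) (K : SComplex V) (T : Finset V)

/-- the restriction `C(Γ) → C(A)` -/
def piC (n : ℕ) : chainSpace k (Gam K T) n →ₗ[k] chainSpace k (Ast K T) n :=
  res k (Ast K T) n ∘ₗ ext k (Gam K T) n

/-- the extension-by-zero `C(A) → C(Γ)` -/
def iotaC (n : ℕ) : chainSpace k (Ast K T) n →ₗ[k] chainSpace k (Gam K T) n :=
  res k (Gam K T) n ∘ₗ ext k (Ast K T) n

/-- the (shifted) quotient map `C(Γ) → C(L)[1]` -/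
def psiC (n : ℕ) : chainSpace k (Gam K T) (n+1) →ₗ[k] chainSpace k (Lk2 K T) n :=
  res k (Lk2 K T) n ∘ₗ PsiG k T ∘ₗ ext k (Gam K T) (n+1)

/-- the splitting `C(L)[1] → C(Γ)` -/
def rhoC (n : ℕ) : chainSpace k (Lk2 K T) n →ₗ[k] chainSpace k (Gam K T) (n+1) :=
  res k (Gam K T) (n+1) ∘ₗ RhoG k T ∘ₗ ext k (Lk2 K T) n

variable {k K T}

lemma spt_mono {n : ℕ} {G : Finset (Finset V) → k} (h : Spt (Ast K T) n G) :
    Spt (Gam K T) n G :=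
  fun s hs => ⟨Ast_faces_subset s (h s hs).1, (h s hs).2⟩

lemma spt_RhoG (hT : T ∈ K.faces) (hTne : T ≠ ∅) {n : ℕ} {G : Finset (Finset V) → k} (h : Spt (Lk2 K T) n G) :
    Spt (Gam K T) (n+1) (RhoG k T G) := by
  intro u hu
  rw [RhoG_apply] at hu
  by_cases hTu : T ∈ u
  · rw [if_pos hTu] at hu
    have hG : G (u.erase T) ≠ 0 := fun h0 => hu (by rw [h0, mul_zero])
    obtain ⟨hf, hc⟩ := h _ hG
    obtain ⟨hTg, hins⟩ := (mem_Lk2_iff hT hTne _).mp hf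
    rw [Finset.insert_erase hTu] at hins
    refine ⟨hins, ?_⟩
    rw [← Finset.card_erase_add_one hTu, hc]
  · rw [if_neg hTu] at hu
    exact absurd rfl hu

lemma spt_PsiG (hT : T ∈ K.faces) (hTne : T ≠ ∅) {n : ℕ} {G : Finset (Finset V) → k} (h : Spt (Gam K T) (n+1) G) :
    Spt (Lk2 K T) n (PsiG k T G) := by
  intro t ht
  rw [PsiG_apply] at ht
  by_cases hTt : T ∉ t
  · rw [if_pos hTt] at ht
    have hG : G (insert T t) ≠ 0 := fun h0 => ht (by rw [h0, mul_zero])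
    obtain ⟨hf, hc⟩ := h _ hG
    refine ⟨(mem_Lk2_iff hT hTne t).mpr ⟨hTt, hf⟩, ?_⟩
    rw [Finset.card_insert_of_notMem hTt] at hc
    exact Nat.succ_injective hc
  · rw [if_neg hTt] at ht
    exact absurd rfl ht

lemma ext_A_avoid (n : ℕ) (e : chainSpace k (Ast K T) n) :
    ∀ u, T ∈ u → ext k (Ast K T) n e u = 0 := by
  intro u hu
  rw [ext_apply]
  exact dif_neg (fun hc => ((mem_Ast_iff u).mp hc.1).2 hu)

lemma ext_L_avoid (hT : T ∈ K.faces) (hTne : T ≠ ∅) (n : ℕ) (x : chainSpace k (Lk2 K T) n) :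
    ∀ u, T ∈ u → ext k (Lk2 K T) n x u = 0 := by
  intro u hu
  rw [ext_apply]
  exact dif_neg (fun hc => not_T_mem_of_Lk2 hT hTne hc.1 hu)

lemma PsiG_of_avoid {G : Finset (Finset V) → k} (hG : ∀ u, T ∈ u → G u = 0) :
    PsiG k T G = 0 := by
  funext t
  rw [PsiG_apply, Pi.zero_apply]
  split
  · rw [hG _ (Finset.mem_insert_self T t), mul_zero]
  · rfl

lemma res_L_RstG (hT : T ∈ K.faces) (hTne : T ≠ ∅) (n : ℕ) (G : Finset (Finset V) → k) :
    res k (Lk2 K T) n (RstG k T G) = res k (Lk2 K T) n G := by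
  funext t
  rw [res_apply, res_apply, RstG_apply, if_pos (not_T_mem_of_Lk2 hT hTne t.2.1)]

lemma res_Gam0_RstG (G : Finset (Finset V) → k) :
    res k (Gam K T) 0 (RstG k T G) = res k (Gam K T) 0 G := by
  funext t
  have ht : t.1 = ∅ := Finset.card_eq_zero.mp t.2.2
  rw [res_apply, res_apply, RstG_apply, if_pos (by rw [ht]; exact Finset.notMem_empty T)]

lemma extA_resA {n : ℕ} {G : Finset (Finset V) → k} (h : Spt (Gam K T) n G) :
    ext k (Ast K T) n (res k (Ast K T) n G) = RstG k T G := by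
  funext s
  rw [ext_apply, RstG_apply]
  by_cases hs : s ∈ (Ast K T).faces ∧ s.card = n
  · rw [dif_pos hs, if_pos ((mem_Ast_iff s).mp hs.1).2]
    rfl
  · rw [dif_neg hs]
    by_cases hTs : T ∉ s
    · rw [if_pos hTs]
      by_contra hc
      have hGs : G s ≠ 0 := fun h0 => hc h0.symm
      obtain ⟨hf, hcard⟩ := h s hGs
      exact hs ⟨(mem_Ast_iff s).mpr ⟨hf, hTs⟩, hcard⟩
    · rw [if_neg hTs]

/-- I1 -/
lemma piC_iotaC (n : ℕ) (e : chainSpace k (Ast K T) n) : piC k K T n (iotaC k K T n e) = e := by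
  show res k (Ast K T) n (ext k (Gam K T) n (res k (Gam K T) n (ext k (Ast K T) n e))) = e
  rw [ext_res (spt_mono (spt_ext _ _ e)), res_ext]

/-- I2 -/
lemma psiC_rhoC (hT : T ∈ K.faces) (hTne : T ≠ ∅) (n : ℕ) (x : chainSpace k (Lk2 K T) n) :
    psiC k K T n (rhoC k K T n x) = x := by
  show res k (Lk2 K T) n (PsiG k T (ext k (Gam K T) (n+1)
    (res k (Gam K T) (n+1) (RhoG k T (ext k (Lk2 K T) n x))))) = x
  rw [ext_res (spt_RhoG hT hTne (spt_ext _ _ x)), PsiG_RhoG, res_L_RstG hT hTne, res_ext]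

/-- I4 -/
lemma psiC_iotaC (n : ℕ) (e : chainSpace k (Ast K T) (n+1)) :
    psiC k K T n (iotaC k K T (n+1) e) = 0 := by
  show res k (Lk2 K T) n (PsiG k T (ext k (Gam K T) (n+1)
    (res k (Gam K T) (n+1) (ext k (Ast K T) (n+1) e)))) = 0
  rw [ext_res (spt_mono (spt_ext _ _ e)), PsiG_of_avoid (ext_A_avoid (n+1) e), map_zero]

/-- ID1 -/
lemma iota_pi_add_rho_psi (hT : T ∈ K.faces) (hTne : T ≠ ∅) (n : ℕ) (g : chainSpace k (Gam K T) (n+1)) :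
    iotaC k K T (n+1) (piC k K T (n+1) g) + rhoC k K T n (psiC k K T n g) = g := by
  show res k (Gam K T) (n+1) (ext k (Ast K T) (n+1) (res k (Ast K T) (n+1)
      (ext k (Gam K T) (n+1) g)))
    + res k (Gam K T) (n+1) (RhoG k T (ext k (Lk2 K T) n (res k (Lk2 K T) n
      (PsiG k T (ext k (Gam K T) (n+1) g))))) = g
  rw [extA_resA (spt_ext _ _ g), ext_res (spt_PsiG hT hTne (spt_ext _ _ g)),
    ← map_add, RstG_add_RhoG_PsiG, res_ext]

/-- ID1 at level 0 -/
lemma iota_pi_zero (g : chainSpace k (Gam K T) 0) :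
    iotaC k K T 0 (piC k K T 0 g) = g := by
  show res k (Gam K T) 0 (ext k (Ast K T) 0 (res k (Ast K T) 0 (ext k (Gam K T) 0 g))) = g
  rw [extA_resA (spt_ext _ _ g), res_Gam0_RstG, res_ext]

/-- E1 -/
lemma piC_bd_iotaC (n : ℕ) (e : chainSpace k (Ast K T) (n+1)) :
    piC k K T n (boundary k (Gam K T) n (iotaC k K T (n+1) e)) = boundary k (Ast K T) n e := by
  show res k (Ast K T) n (ext k (Gam K T) n (boundary k (Gam K T) n
    (res k (Gam K T) (n+1) (ext k (Ast K T) (n+1) e)))) = _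
  rw [boundary_eq, ext_res (spt_mono (spt_ext _ _ e)),
    ext_res (spt_mono (spt_Bd (spt_ext _ _ e))), boundary_eq]

/-- E2 -/
lemma psiC_bd_rhoC (hT : T ∈ K.faces) (hTne : T ≠ ∅) (n : ℕ) (x : chainSpace k (Lk2 K T) (n+1)) :
    psiC k K T n (boundary k (Gam K T) (n+1) (rhoC k K T (n+1) x))
      = boundary k (Lk2 K T) n x := by
  show res k (Lk2 K T) n (PsiG k T (ext k (Gam K T) (n+1) (boundary k (Gam K T) (n+1)
    (res k (Gam K T) (n+1+1) (RhoG k T (ext k (Lk2 K T) (n+1) x)))))) = _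
  rw [boundary_eq, ext_res (spt_RhoG hT hTne (spt_ext _ _ x)),
    ext_res (spt_Bd (spt_RhoG hT hTne (spt_ext _ _ x))),
    PsiG_Bd_RhoG (ext_L_avoid hT hTne (n+1) x), res_L_RstG hT hTne, boundary_eq]

/-- E3 -/
lemma psiC_bd_iotaC (n : ℕ) (e : chainSpace k (Ast K T) (n+2)) :
    psiC k K T n (boundary k (Gam K T) (n+1) (iotaC k K T (n+2) e)) = 0 := by
  show res k (Lk2 K T) n (PsiG k T (ext k (Gam K T) (n+1) (boundary k (Gam K T) (n+1)
    (res k (Gam K T) (n+1+1) (ext k (Ast K T) (n+1+1) e))))) = 0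
  rw [boundary_eq, ext_res (spt_mono (spt_ext _ _ e)),
    ext_res (spt_mono (spt_Bd (spt_ext _ _ e))),
    PsiG_Bd_of_avoid (ext_A_avoid (n+2) e), map_zero]

variable (k K T)

/-- the connecting operator -/
def SC (n : ℕ) : chainSpace k (Lk2 K T) n →ₗ[k] chainSpace k (Ast K T) n :=
  piC k K T n ∘ₗ boundary k (Gam K T) n ∘ₗ rhoC k K T n

variable {k K T}

lemma SC_apply (n : ℕ) (x : chainSpace k (Lk2 K T) n) :
    SC k K T n x = piC k K T n (boundary k (Gam K T) n (rhoC k K T n x)) := rfl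

/-- the connecting operator anticommutes with the boundary -/
lemma bd_SC (hT : T ∈ K.faces) (hTne : T ≠ ∅) (n : ℕ) (x : chainSpace k (Lk2 K T) (n+1)) :
    boundary k (Ast K T) n (SC k K T (n+1) x) = - SC k K T n (boundary k (Lk2 K T) n x) := by
  have hid : iotaC k K T (n+1) (piC k K T (n+1)
        (boundary k (Gam K T) (n+1) (rhoC k K T (n+1) x)))
      = boundary k (Gam K T) (n+1) (rhoC k K T (n+1) x)
        - rhoC k K T n (psiC k K T n (boundary k (Gam K T) (n+1) (rhoC k K T (n+1) x))) := by
    rw [eq_sub_iff_add_eq]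
    exact iota_pi_add_rho_psi hT hTne n _
  calc boundary k (Ast K T) n (SC k K T (n+1) x)
      = piC k K T n (boundary k (Gam K T) n (iotaC k K T (n+1) (SC k K T (n+1) x))) :=
        (piC_bd_iotaC n _).symm
    _ = piC k K T n (boundary k (Gam K T) n
          (boundary k (Gam K T) (n+1) (rhoC k K T (n+1) x)
            - rhoC k K T n (psiC k K T n (boundary k (Gam K T) (n+1) (rhoC k K T (n+1) x))))) := by
        rw [SC_apply, hid]
    _ = - piC k K T n (boundary k (Gam K T) n
          (rhoC k K T n (psiC k K T n (boundary k (Gam K T) (n+1) (rhoC k K T (n+1) x))))) := by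
        rw [map_sub, boundary_boundary, zero_sub, map_neg]
    _ = - SC k K T n (psiC k K T n (boundary k (Gam K T) (n+1) (rhoC k K T (n+1) x))) := rfl
    _ = - SC k K T n (boundary k (Lk2 K T) n x) := by rw [psiC_bd_rhoC hT hTne n x]

/-- the connecting operator sends boundaries to boundaries -/
lemma SC_boundary (hT : T ∈ K.faces) (hTne : T ≠ ∅) (m : ℕ) (y : chainSpace k (Lk2 K T) (m+1)) :
    SC k K T m (boundary k (Lk2 K T) m y)
      = boundary k (Ast K T) m
          (- piC k K T (m+1) (boundary k (Gam K T) (m+1) (rhoC k K T (m+1) y))) := by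
  have hid : rhoC k K T m (psiC k K T m (boundary k (Gam K T) (m+1) (rhoC k K T (m+1) y)))
      = boundary k (Gam K T) (m+1) (rhoC k K T (m+1) y)
        - iotaC k K T (m+1) (piC k K T (m+1)
            (boundary k (Gam K T) (m+1) (rhoC k K T (m+1) y))) := by
    rw [eq_sub_iff_add_eq]
    exact (add_comm _ _).trans (iota_pi_add_rho_psi hT hTne m _)
  calc SC k K T m (boundary k (Lk2 K T) m y)
      = piC k K T m (boundary k (Gam K T) m (rhoC k K T m
          (psiC k K T m (boundary k (Gam K T) (m+1) (rhoC k K T (m+1) y))))) := by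
        rw [SC_apply, psiC_bd_rhoC hT hTne m y]
    _ = piC k K T m (boundary k (Gam K T) m
          (boundary k (Gam K T) (m+1) (rhoC k K T (m+1) y)
            - iotaC k K T (m+1) (piC k K T (m+1)
                (boundary k (Gam K T) (m+1) (rhoC k K T (m+1) y))))) := by rw [hid]
    _ = - piC k K T m (boundary k (Gam K T) m (iotaC k K T (m+1) (piC k K T (m+1)
          (boundary k (Gam K T) (m+1) (rhoC k K T (m+1) y))))) := by
        rw [map_sub, boundary_boundary, zero_sub, map_neg]
    _ = - boundary k (Ast K T) m (piC k K T (m+1)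
          (boundary k (Gam K T) (m+1) (rhoC k K T (m+1) y))) := by rw [piC_bd_iotaC]
    _ = boundary k (Ast K T) m (- piC k K T (m+1)
          (boundary k (Gam K T) (m+1) (rhoC k K T (m+1) y))) := (map_neg _ _).symm

end SCP
end snakeops


noncomputable section snakeiso
open scoped Classical
open SComplex

namespace SCP
variable {k : Type} [Field k] {V : Type} [Fintype V] [DecidableEq V]
variable {K : SComplex V} {T : Finset V}

lemma Hlv_trivial {W : Type} [Fintype W] [DecidableEq W] {X : SComplex W} {m : ℕ}
    (h : Subsingleton (Hlv k X m)) {z : chainSpace k X m} (hz : z ∈ cycles k X m) :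
    ∃ y, boundary k X m y = z := by
  have h0 : (Submodule.Quotient.mk (⟨z, hz⟩ : cycles k X m) : Hlv k X m) = 0 :=
    Subsingleton.elim _ _
  have h1 := (Submodule.Quotient.mk_eq_zero _).mp h0
  rw [Submodule.mem_comap] at h1
  obtain ⟨y, hy⟩ := h1
  exact ⟨y, hy⟩

lemma mk_eq_zero_of_range {W : Type} [Fintype W] [DecidableEq W] {X : SComplex W} {m : ℕ}
    {z : cycles k X m} (h : ∃ y, boundary k X m y = (z : chainSpace k X m)) :
    (Submodule.Quotient.mk z : Hlv k X m) = 0 := by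
  rw [Submodule.Quotient.mk_eq_zero, Submodule.mem_comap]
  exact h

lemma bd_iotaC (hT : T ∈ K.faces) (hTne : T ≠ ∅) (n : ℕ) (e : chainSpace k (Ast K T) (n+1)) :
    boundary k (Gam K T) n (iotaC k K T (n+1) e) = iotaC k K T n (boundary k (Ast K T) n e) := by
  match n with
  | 0 =>
    conv_lhs => rw [← iota_pi_zero (boundary k (Gam K T) 0 (iotaC k K T 1 e))]
    rw [piC_bd_iotaC 0 e]
  | Nat.succ n =>
    calc boundary k (Gam K T) (n+1) (iotaC k K T (n+2) e)
        = iotaC k K T (n+1) (piC k K T (n+1) (boundary k (Gam K T) (n+1) (iotaC k K T (n+2) e)))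
          + rhoC k K T n (psiC k K T n (boundary k (Gam K T) (n+1) (iotaC k K T (n+2) e))) :=
          (iota_pi_add_rho_psi hT hTne n _).symm
      _ = iotaC k K T (n+1) (boundary k (Ast K T) (n+1) e) := by
          rw [piC_bd_iotaC, psiC_bd_iotaC, map_zero, add_zero]

lemma bd_rhoC (hT : T ∈ K.faces) (hTne : T ≠ ∅) (m : ℕ) (x : chainSpace k (Lk2 K T) m)
    (hx : x ∈ cycles k (Lk2 K T) m) :
    boundary k (Gam K T) m (rhoC k K T m x) = iotaC k K T m (SC k K T m x) := by
  match m with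
  | 0 =>
    rw [SC_apply]
    exact (iota_pi_zero _).symm
  | Nat.succ n =>
    rw [cycles, LinearMap.mem_ker] at hx
    calc boundary k (Gam K T) (n+1) (rhoC k K T (n+1) x)
        = iotaC k K T (n+1) (piC k K T (n+1) (boundary k (Gam K T) (n+1) (rhoC k K T (n+1) x)))
          + rhoC k K T n (psiC k K T n (boundary k (Gam K T) (n+1) (rhoC k K T (n+1) x))) :=
          (iota_pi_add_rho_psi hT hTne n _).symm
      _ = iotaC k K T (n+1) (SC k K T (n+1) x) := by
          rw [psiC_bd_rhoC hT hTne n x, hx, map_zero, add_zero, ← SC_apply]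

lemma iotaC_mem_cycles (hT : T ∈ K.faces) (hTne : T ≠ ∅) (m : ℕ)
    {e : chainSpace k (Ast K T) m} (he : e ∈ cycles k (Ast K T) m) :
    iotaC k K T m e ∈ cycles k (Gam K T) m := by
  match m with
  | 0 => exact Submodule.mem_top
  | Nat.succ n =>
    rw [cycles, LinearMap.mem_ker] at he ⊢
    rw [bd_iotaC hT hTne n e, he, map_zero]

lemma SC_mapCycles (hT : T ∈ K.faces) (hTne : T ≠ ∅) (m : ℕ) :
    ∀ x ∈ cycles k (Lk2 K T) m, SC k K T m x ∈ cycles k (Ast K T) m := by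
  match m with
  | 0 => exact fun x _ => Submodule.mem_top
  | Nat.succ n =>
    intro x hx
    rw [cycles, LinearMap.mem_ker] at hx ⊢
    rw [bd_SC hT hTne n x, hx, map_zero, neg_zero]

/-- the connecting homomorphism on homology -/
def SCq (hT : T ∈ K.faces) (hTne : T ≠ ∅) (m : ℕ) :
    Hlv k (Lk2 K T) m →ₗ[k] Hlv k (Ast K T) m :=
  Submodule.liftQ _ ((Submodule.mkQ _).comp
    ((SC k K T m).restrict (SC_mapCycles hT hTne m))) (by
      intro x hx
      rw [Submodule.mem_comap] at hx
      obtain ⟨y, hy⟩ := hx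
      rw [LinearMap.mem_ker, LinearMap.comp_apply, Submodule.mkQ_apply,
        Submodule.Quotient.mk_eq_zero, Submodule.mem_comap]
      refine ⟨- piC k K T (m+1) (boundary k (Gam K T) (m+1) (rhoC k K T (m+1) y)), ?_⟩
      have : (cycles k (Ast K T) m).subtype ((SC k K T m).restrict (SC_mapCycles hT hTne m) x)
          = SC k K T m ((cycles k (Lk2 K T) m).subtype x) := rfl
      rw [this, ← hy, SC_boundary hT hTne m y])

lemma SCq_mk (hT : T ∈ K.faces) (hTne : T ≠ ∅) (m : ℕ) (x : cycles k (Lk2 K T) m) :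
    SCq (k := k) hT hTne m (Submodule.Quotient.mk x)
      = Submodule.Quotient.mk ((SC k K T m).restrict (SC_mapCycles hT hTne m) x) := rfl

/-- the snake-lemma isomorphism -/
lemma SCq_bijective (hT : T ∈ K.faces) (hTne : T ≠ ∅) (m : ℕ)
    (hH1 : Subsingleton (Hlv k (Gam K T) (m+1)))
    (hH2 : Subsingleton (Hlv k (Gam K T) m)) :
    Function.Bijective (SCq (k := k) hT hTne m) := by
  constructor
  · -- injective
    rw [← LinearMap.ker_eq_bot (M := Hlv k (Lk2 K T) m)]
    rw [Submodule.eq_bot_iff]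
    intro q hq
    rw [LinearMap.mem_ker] at hq
    obtain ⟨x, rfl⟩ := Submodule.Quotient.mk_surjective _ q
    rw [SCq_mk] at hq
    rw [Submodule.Quotient.mk_eq_zero, Submodule.mem_comap] at hq ⊢
    obtain ⟨e, he⟩ := hq
    -- he : boundary A m e = SC m x
    have he' : boundary k (Ast K T) m e = SC k K T m ((cycles k (Lk2 K T) m).subtype x) := he
    -- the cycle in Γ
    set g := rhoC k K T m ((cycles k (Lk2 K T) m).subtype x) - iotaC k K T (m+1) e with hg
    have hgcyc : g ∈ cycles k (Gam K T) (m+1) := by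
      rw [cycles, LinearMap.mem_ker, hg, map_sub,
        bd_rhoC hT hTne m ((cycles k (Lk2 K T) m).subtype x) x.2,
        bd_iotaC hT hTne m e, ← he', sub_self]
    obtain ⟨y, hy⟩ := Hlv_trivial hH1 hgcyc
    refine ⟨psiC k K T (m+1) y, ?_⟩
    have hxpsi : (cycles k (Lk2 K T) m).subtype x
        = psiC k K T m g + psiC k K T m (iotaC k K T (m+1) e) := by
      rw [hg, map_sub, sub_add_cancel, psiC_rhoC hT hTne]
    rw [hxpsi, psiC_iotaC, add_zero, ← hy]
    -- boundary L m (psiC (m+1) y) = psiC m (boundary Γ (m+1) y)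
    have hdec := iota_pi_add_rho_psi hT hTne (m+1) y
    calc boundary k (Lk2 K T) m (psiC k K T (m+1) y)
        = psiC k K T m (boundary k (Gam K T) (m+1) (rhoC k K T (m+1) (psiC k K T (m+1) y))) :=
          (psiC_bd_rhoC hT hTne m _).symm
      _ = psiC k K T m (boundary k (Gam K T) (m+1) y)
          - psiC k K T m (boundary k (Gam K T) (m+1) (iotaC k K T (m+2) (piC k K T (m+2) y))) := by
          rw [show rhoC k K T (m+1) (psiC k K T (m+1) y)
              = y - iotaC k K T (m+2) (piC k K T (m+2) y) by
            rw [eq_sub_iff_add_eq]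
            exact (add_comm _ _).trans hdec, map_sub, map_sub]
      _ = psiC k K T m (boundary k (Gam K T) (m+1) y) := by
          rw [psiC_bd_iotaC, sub_zero]
  · -- surjective
    intro q
    obtain ⟨e, rfl⟩ := Submodule.Quotient.mk_surjective _ q
    have hecyc : iotaC k K T m ((cycles k (Ast K T) m).subtype e) ∈ cycles k (Gam K T) m :=
      iotaC_mem_cycles hT hTne m e.2
    obtain ⟨y, hy⟩ := Hlv_trivial hH2 hecyc
    -- candidate cycle in L
    have hxcyc : psiC k K T m y ∈ cycles k (Lk2 K T) m := by
      match m with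
      | 0 => exact Submodule.mem_top
      | Nat.succ n =>
        rw [cycles, LinearMap.mem_ker]
        calc boundary k (Lk2 K T) n (psiC k K T (n+1) y)
            = psiC k K T n (boundary k (Gam K T) (n+1)
                (rhoC k K T (n+1) (psiC k K T (n+1) y))) := (psiC_bd_rhoC hT hTne n _).symm
          _ = psiC k K T n (boundary k (Gam K T) (n+1) y)
              - psiC k K T n (boundary k (Gam K T) (n+1)
                  (iotaC k K T (n+2) (piC k K T (n+2) y))) := by
              rw [show rhoC k K T (n+1) (psiC k K T (n+1) y)
                  = y - iotaC k K T (n+2) (piC k K T (n+2) y) by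
                rw [eq_sub_iff_add_eq]
                exact (add_comm _ _).trans (iota_pi_add_rho_psi hT hTne (n+1) y), map_sub, map_sub]
          _ = psiC k K T n (iotaC k K T (n+1) ((cycles k (Ast K T) (n+1)).subtype e)) := by
              rw [psiC_bd_iotaC, sub_zero, hy]
          _ = 0 := psiC_iotaC n _
    refine ⟨Submodule.Quotient.mk ⟨psiC k K T m y, hxcyc⟩, ?_⟩
    rw [SCq_mk, Submodule.Quotient.eq, Submodule.mem_comap]
    refine ⟨- piC k K T (m+1) y, ?_⟩
    have hcoe : (cycles k (Ast K T) m).subtype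
        ((SC k K T m).restrict (SC_mapCycles hT hTne m) ⟨psiC k K T m y, hxcyc⟩ - e)
        = SC k K T m (psiC k K T m y) - (cycles k (Ast K T) m).subtype e := rfl
    rw [hcoe]
    have hSCval : SC k K T m (psiC k K T m y)
        = (cycles k (Ast K T) m).subtype e - boundary k (Ast K T) m (piC k K T (m+1) y) := by
      calc SC k K T m (psiC k K T m y)
          = piC k K T m (boundary k (Gam K T) m (rhoC k K T m (psiC k K T m y))) := SC_apply m _
        _ = piC k K T m (boundary k (Gam K T) m y)
            - piC k K T m (boundary k (Gam K T) m (iotaC k K T (m+1) (piC k K T (m+1) y))) := by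
            rw [show rhoC k K T m (psiC k K T m y)
                = y - iotaC k K T (m+1) (piC k K T (m+1) y) by
              rw [eq_sub_iff_add_eq]
              exact (add_comm _ _).trans (iota_pi_add_rho_psi hT hTne m y), map_sub, map_sub]
        _ = (cycles k (Ast K T) m).subtype e - boundary k (Ast K T) m (piC k K T (m+1) y) := by
            rw [piC_bd_iotaC, hy, piC_iotaC]
    rw [hSCval, map_neg, sub_sub_cancel_left]

/-- the snake-lemma isomorphism on homology -/
def snakeEquiv (hT : T ∈ K.faces) (hTne : T ≠ ∅) (m : ℕ)
    (hH1 : Subsingleton (Hlv k (Gam K T) (m+1)))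
    (hH2 : Subsingleton (Hlv k (Gam K T) m)) :
    Hlv k (Lk2 K T) m ≃ₗ[k] Hlv k (Ast K T) m :=
  LinearEquiv.ofBijective (SCq hT hTne m) (SCq_bijective hT hTne m hH1 hH2)

end SCP
end snakeiso


noncomputable section basisops
open scoped Classical
open SComplex

namespace SCP
variable {k : Type} [Field k] {W W₁ W₂ : Type} [Fintype W] [DecidableEq W]
  [Fintype W₁] [DecidableEq W₁] [Fintype W₂] [DecidableEq W₂]

variable (k)

/-- delta function basis -/
def dlt (s : Finset W) : Finset W → k := fun t => if t = s then 1 else 0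

/-- linear extension of a map defined on the basis -/
def Lam (E : Finset W₁ → (Finset W₂ → k)) : (Finset W₁ → k) →ₗ[k] (Finset W₂ → k) where
  toFun G := ∑ s : Finset W₁, G s • E s
  map_add' := by
    intro g h
    rw [← Finset.sum_add_distrib]
    exact Finset.sum_congr rfl fun s _ => by rw [Pi.add_apply, add_smul]
  map_smul' := by
    intro c g
    rw [RingHom.id_apply, Finset.smul_sum]
    exact Finset.sum_congr rfl fun s _ => by rw [Pi.smul_apply, smul_smul, smul_eq_mul]

variable {k}

lemma dlt_self (s : Finset W) : dlt k s s = 1 := if_pos rfl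

lemma dlt_ne {s t : Finset W} (h : t ≠ s) : dlt k s t = 0 := if_neg h

lemma sum_dlt (G : Finset W → k) : ∑ s : Finset W, G s • dlt k s = G := by
  funext t
  rw [Finset.sum_apply]
  rw [Finset.sum_eq_single_of_mem t (Finset.mem_univ t)
    (fun s _ hst => by rw [Pi.smul_apply, dlt_ne (Ne.symm hst), smul_zero])]
  rw [Pi.smul_apply, dlt_self, smul_eq_mul, mul_one]

lemma Lam_dlt (E : Finset W₁ → (Finset W₂ → k)) (s : Finset W₁) :
    Lam k E (dlt k s) = E s := by
  show ∑ u : Finset W₁, dlt k s u • E u = E s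
  rw [Finset.sum_eq_single_of_mem s (Finset.mem_univ s)
    (fun u _ hus => by rw [dlt_ne hus, zero_smul])]
  rw [dlt_self, one_smul]

lemma Lam_apply (E : Finset W₁ → (Finset W₂ → k)) (G : Finset W₁ → k) :
    Lam k E G = ∑ s : Finset W₁, G s • E s := rfl

/-- expand a linear map over the delta basis -/
lemma map_eq_sum_dlt (f : (Finset W₁ → k) →ₗ[k] (Finset W₂ → k)) (G : Finset W₁ → k) :
    f G = ∑ s : Finset W₁, G s • f (dlt k s) := by
  conv_lhs => rw [← sum_dlt G]
  rw [map_sum]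
  exact Finset.sum_congr rfl fun s _ => by rw [map_smul]

lemma supp_Bd_dlt {σ s : Finset W} (h : Bd k (dlt k σ) s ≠ 0) :
    s ⊆ σ ∧ s.card + 1 = σ.card := by
  rw [Bd_apply] at h
  obtain ⟨v, hv, hne⟩ := Finset.exists_ne_zero_of_sum_ne_zero h
  have hd : dlt k σ (insert v s) ≠ 0 := fun h0 => hne (by rw [h0, mul_zero])
  have he : insert v s = σ := by
    by_contra hc
    exact hd (dlt_ne hc)
  rw [← he]
  exact ⟨Finset.subset_insert v s, by
    rw [Finset.card_insert_of_notMem (Finset.mem_compl.mp hv)]⟩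

lemma Bd_of_card_zero {G : Finset W → k} (h : ∀ s, G s ≠ 0 → s.card = 0) :
    Bd k G = 0 := by
  funext t
  rw [Bd_apply, Pi.zero_apply]
  refine Finset.sum_eq_zero fun v hv => ?_
  have : G (insert v t) = 0 := by
    by_contra hc
    have := h _ hc
    rw [Finset.card_insert_of_notMem (Finset.mem_compl.mp hv)] at this
    exact Nat.succ_ne_zero _ this
  rw [this, mul_zero]

lemma Bd_dlt_empty : Bd k (dlt k (∅ : Finset W)) = 0 :=
  Bd_of_card_zero (fun s hs => by
    have h0 : s = ∅ := by
      by_contra hc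
      exact hs (dlt_ne hc)
    rw [h0, Finset.card_empty])

end SCP
end basisops


noncomputable section sdops
open scoped Classical
open SComplex

namespace SCP
variable (k : Type) [Field k] {V : Type} [Fintype V] [DecidableEq V] (T : Finset V) (v₀ : V)

/-- the barycentric subdivision operator, on basis elements -/
def sdFun : ℕ → Finset V → (Finset (Finset V) → k)
  | 0, _ => dlt k ∅
  | (n+1), σ => Ca k (T ∪ σ) (∑ s : Finset V, Bd k (dlt k σ) s • sdFun n s)

/-- the barycentric subdivision chain map (globally) -/
def SD : (Finset V → k) →ₗ[k] (Finset (Finset V) → k) :=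
  Lam k (fun σ => sdFun k T σ.card σ)

/-- a chosen vertex for the reverse map -/
def vtx (c : Finset (Finset V)) : V :=
  if h : (c.sup id \ T).Nonempty then h.choose else v₀

/-- the homotopy inverse of subdivision, on basis elements -/
def lamFun : ℕ → Finset (Finset V) → (Finset V → k)
  | 0, _ => dlt k ∅
  | (n+1), c => Ca k (vtx T v₀ c) (∑ c' : Finset (Finset V), Bd k (dlt k c) c' • lamFun n c')

/-- the homotopy inverse of subdivision (globally) -/
def LAM : (Finset (Finset V) → k) →ₗ[k] (Finset V → k) :=
  Lam k (fun c => lamFun k T v₀ c.card c)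

/-- apex for the first homotopy -/
def apx1 (σ : Finset V) : V := if h : σ.Nonempty then h.choose else v₀

/-- first homotopy (`LAM ∘ SD ≃ id`), on basis elements -/
def h1Fun : ℕ → Finset V → (Finset V → k)
  | 0, _ => 0
  | (n+1), σ => Ca k (apx1 v₀ σ)
      (LAM k T v₀ (SD k T (dlt k σ)) - dlt k σ - ∑ s : Finset V, Bd k (dlt k σ) s • h1Fun n s)

def H1 : (Finset V → k) →ₗ[k] (Finset V → k) :=
  Lam k (fun σ => h1Fun k T v₀ σ.card σ)

/-- second homotopy (`SD ∘ LAM ≃ id`), on basis elements -/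
def h2Fun : ℕ → Finset (Finset V) → (Finset (Finset V) → k)
  | 0, _ => 0
  | (n+1), c => Ca k (c.sup id)
      (SD k T (LAM k T v₀ (dlt k c)) - dlt k c
        - ∑ c' : Finset (Finset V), Bd k (dlt k c) c' • h2Fun n c')

def H2 : (Finset (Finset V) → k) →ₗ[k] (Finset (Finset V) → k) :=
  Lam k (fun c => h2Fun k T v₀ c.card c)

variable {k T v₀}

/-- expansion at a fixed level -/
lemma Lam_eq_level {W₁ W₂ : Type} [Fintype W₁] [DecidableEq W₁] [Fintype W₂] [DecidableEq W₂]
    (F : ℕ → Finset W₁ → (Finset W₂ → k)) {G : Finset W₁ → k} {n : ℕ}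
    (h : ∀ s, G s ≠ 0 → s.card = n) :
    Lam k (fun s => F s.card s) G = ∑ s : Finset W₁, G s • F n s := by
  rw [Lam_apply]
  refine Finset.sum_congr rfl fun s _ => ?_
  by_cases hG : G s = 0
  · rw [hG, zero_smul, zero_smul]
  · rw [h s hG]

lemma SD_dlt (σ : Finset V) : SD k T (dlt k σ) = sdFun k T σ.card σ := Lam_dlt _ _

lemma LAM_dlt (c : Finset (Finset V)) : LAM k T v₀ (dlt k c) = lamFun k T v₀ c.card c :=
  Lam_dlt _ _

lemma H1_dlt (σ : Finset V) : H1 k T v₀ (dlt k σ) = h1Fun k T v₀ σ.card σ := Lam_dlt _ _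

lemma H2_dlt (c : Finset (Finset V)) : H2 k T v₀ (dlt k c) = h2Fun k T v₀ c.card c := Lam_dlt _ _

lemma card_of_Bd_dlt_ne {W : Type} [Fintype W] [DecidableEq W] {σ : Finset W} {n : ℕ}
    (hσ : σ.card = n + 1) : ∀ s, Bd k (dlt k σ) s ≠ 0 → s.card = n := by
  intro s hs
  have := (supp_Bd_dlt hs).2
  omega

/-- `sd` is a chain map, on basis elements -/
lemma Bd_sdFun : ∀ (n : ℕ) (σ : Finset V), σ.card = n →
    Bd k (sdFun k T n σ) = SD k T (Bd k (dlt k σ)) := by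
  intro n
  induction n with
  | zero =>
    intro σ hσ
    rw [Finset.card_eq_zero.mp hσ]
    show Bd k (dlt k (∅ : Finset (Finset V))) = SD k T (Bd k (dlt k (∅ : Finset V)))
    rw [Bd_dlt_empty, Bd_dlt_empty, map_zero]
  | succ n ih =>
    intro σ hσ
    show Bd k (Ca k (T ∪ σ) (∑ s : Finset V, Bd k (dlt k σ) s • sdFun k T n s)) = _
    have hX : (∑ s : Finset V, Bd k (dlt k σ) s • sdFun k T n s) = SD k T (Bd k (dlt k σ)) := by
      rw [SD, Lam_eq_level _ (card_of_Bd_dlt_ne hσ)]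
    have hBdX : Bd k (∑ s : Finset V, Bd k (dlt k σ) s • sdFun k T n s) = 0 := by
      rw [map_sum]
      have hcongr : ∀ s ∈ Finset.univ, Bd k (Bd k (dlt k σ) s • sdFun k T n s)
          = Bd k (dlt k σ) s • SD k T (Bd k (dlt k s)) := by
        intro s _
        rw [map_smul]
        by_cases hc : Bd k (dlt k σ) s = 0
        · rw [hc, zero_smul, zero_smul]
        · rw [ih s (card_of_Bd_dlt_ne hσ s hc)]
      rw [Finset.sum_congr rfl hcongr]
      have : ∑ s : Finset V, Bd k (dlt k σ) s • SD k T (Bd k (dlt k s))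
          = SD k T (Bd k (∑ s : Finset V, Bd k (dlt k σ) s • dlt k s)) := by
        rw [map_sum, map_sum]
        exact Finset.sum_congr rfl fun s _ => by rw [map_smul, map_smul]
      rw [this, sum_dlt, Bd_Bd, map_zero]
    have hcone := Bd_Ca_add_Ca_Bd (T ∪ σ) (∑ s : Finset V, Bd k (dlt k σ) s • sdFun k T n s)
    have : Bd k (Ca k (T ∪ σ) (∑ s : Finset V, Bd k (dlt k σ) s • sdFun k T n s))
        = (∑ s : Finset V, Bd k (dlt k σ) s • sdFun k T n s)
          - Ca k (T ∪ σ) (Bd k (∑ s : Finset V, Bd k (dlt k σ) s • sdFun k T n s)) := by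
      rw [eq_sub_iff_add_eq]
      exact hcone
    rw [this, hBdX, map_zero, sub_zero, hX]

/-- `sd` is a chain map -/
lemma Bd_SD (G : Finset V → k) : Bd k (SD k T G) = SD k T (Bd k G) := by
  conv_lhs => rw [map_eq_sum_dlt (SD k T) G, map_sum]
  conv_rhs => rw [show G = ∑ s : Finset V, G s • dlt k s from (sum_dlt G).symm]
  rw [map_sum, map_sum]
  refine Finset.sum_congr rfl fun σ _ => ?_
  rw [map_smul, map_smul, map_smul, SD_dlt, Bd_sdFun σ.card σ rfl]

/-- `lam` is a chain map, on basis elements -/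
lemma Bd_lamFun : ∀ (n : ℕ) (c : Finset (Finset V)), c.card = n →
    Bd k (lamFun k T v₀ n c) = LAM k T v₀ (Bd k (dlt k c)) := by
  intro n
  induction n with
  | zero =>
    intro c hc
    rw [Finset.card_eq_zero.mp hc]
    show Bd k (dlt k (∅ : Finset V)) = LAM k T v₀ (Bd k (dlt k (∅ : Finset (Finset V))))
    rw [Bd_dlt_empty, Bd_dlt_empty, map_zero]
  | succ n ih =>
    intro c hc
    show Bd k (Ca k (vtx T v₀ c) (∑ c' : Finset (Finset V), Bd k (dlt k c) c' • lamFun k T v₀ n c')) = _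
    have hX : (∑ c' : Finset (Finset V), Bd k (dlt k c) c' • lamFun k T v₀ n c')
        = LAM k T v₀ (Bd k (dlt k c)) := by
      rw [LAM, Lam_eq_level _ (card_of_Bd_dlt_ne hc)]
    have hBdX : Bd k (∑ c' : Finset (Finset V), Bd k (dlt k c) c' • lamFun k T v₀ n c') = 0 := by
      rw [map_sum]
      have hcongr : ∀ c' ∈ Finset.univ, Bd k (Bd k (dlt k c) c' • lamFun k T v₀ n c')
          = Bd k (dlt k c) c' • LAM k T v₀ (Bd k (dlt k c')) := by
        intro c' _
        rw [map_smul]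
        by_cases hcc : Bd k (dlt k c) c' = 0
        · rw [hcc, zero_smul, zero_smul]
        · rw [ih c' (card_of_Bd_dlt_ne hc c' hcc)]
      rw [Finset.sum_congr rfl hcongr]
      have : ∑ c' : Finset (Finset V), Bd k (dlt k c) c' • LAM k T v₀ (Bd k (dlt k c'))
          = LAM k T v₀ (Bd k (∑ c' : Finset (Finset V), Bd k (dlt k c) c' • dlt k c')) := by
        rw [map_sum, map_sum]
        exact Finset.sum_congr rfl fun c' _ => by rw [map_smul, map_smul]
      rw [this, sum_dlt, Bd_Bd, map_zero]
    have : Bd k (Ca k (vtx T v₀ c) (∑ c' : Finset (Finset V), Bd k (dlt k c) c' • lamFun k T v₀ n c'))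
        = (∑ c' : Finset (Finset V), Bd k (dlt k c) c' • lamFun k T v₀ n c')
          - Ca k (vtx T v₀ c) (Bd k (∑ c' : Finset (Finset V), Bd k (dlt k c) c' • lamFun k T v₀ n c')) := by
      rw [eq_sub_iff_add_eq]
      exact Bd_Ca_add_Ca_Bd _ _
    rw [this, hBdX, map_zero, sub_zero, hX]

/-- `lam` is a chain map -/
lemma Bd_LAM (G : Finset (Finset V) → k) : Bd k (LAM k T v₀ G) = LAM k T v₀ (Bd k G) := by
  conv_lhs => rw [map_eq_sum_dlt (LAM k T v₀) G, map_sum]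
  conv_rhs => rw [show G = ∑ c : Finset (Finset V), G c • dlt k c from (sum_dlt G).symm]
  rw [map_sum, map_sum]
  refine Finset.sum_congr rfl fun c _ => ?_
  rw [map_smul, map_smul, map_smul, LAM_dlt, Bd_lamFun c.card c rfl]

end SCP
end sdops


noncomputable section htpids
open scoped Classical
open SComplex

namespace SCP
variable {k : Type} [Field k] {V : Type} [Fintype V] [DecidableEq V] {T : Finset V} {v₀ : V}

lemma sum_smul_two {W₁ W₂ W₃ : Type} [Fintype W₁] [DecidableEq W₁] [Fintype W₂] [DecidableEq W₂]
    [Fintype W₃] [DecidableEq W₃]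
    (f : (Finset W₂ → k) →ₗ[k] (Finset W₃ → k)) (g : (Finset W₁ → k) →ₗ[k] (Finset W₂ → k))
    (cf : Finset W₁ → k) :
    ∑ s : Finset W₁, cf s • f (g (dlt k s)) = f (g cf) := by
  have h := map_eq_sum_dlt (f.comp g) cf
  simp only [LinearMap.comp_apply] at h
  exact h.symm

/-- first homotopy identity, on basis elements -/
lemma Bd_h1Fun : ∀ (n : ℕ) (σ : Finset V), σ.card = n →
    Bd k (h1Fun k T v₀ n σ)
      = LAM k T v₀ (SD k T (dlt k σ)) - dlt k σ - H1 k T v₀ (Bd k (dlt k σ)) := by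
  intro n
  induction n with
  | zero =>
    intro σ hσ
    rw [Finset.card_eq_zero.mp hσ]
    show Bd k (0 : Finset V → k) = _
    rw [map_zero, SD_dlt, Finset.card_empty]
    show (0:Finset V → k) = LAM k T v₀ (dlt k (∅ : Finset (Finset V))) - dlt k ∅ - _
    rw [LAM_dlt, Finset.card_empty]
    show (0:Finset V → k) = dlt k (∅:Finset V) - dlt k ∅ - H1 k T v₀ (Bd k (dlt k (∅:Finset V)))
    rw [Bd_dlt_empty, map_zero, sub_self, zero_sub, neg_zero]
  | succ n ih =>
    intro σ hσ
    show Bd k (Ca k (apx1 v₀ σ) (LAM k T v₀ (SD k T (dlt k σ)) - dlt k σ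
      - ∑ s : Finset V, Bd k (dlt k σ) s • h1Fun k T v₀ n s)) = _
    set w := LAM k T v₀ (SD k T (dlt k σ)) - dlt k σ
      - ∑ s : Finset V, Bd k (dlt k σ) s • h1Fun k T v₀ n s with hw
    have hY : (∑ s : Finset V, Bd k (dlt k σ) s • h1Fun k T v₀ n s)
        = H1 k T v₀ (Bd k (dlt k σ)) := by
      rw [H1, Lam_eq_level _ (card_of_Bd_dlt_ne hσ)]
    have hBdY : Bd k (∑ s : Finset V, Bd k (dlt k σ) s • h1Fun k T v₀ n s)
        = LAM k T v₀ (SD k T (Bd k (dlt k σ))) - Bd k (dlt k σ) := by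
      rw [map_sum]
      have hcongr : ∀ s ∈ Finset.univ, Bd k (Bd k (dlt k σ) s • h1Fun k T v₀ n s)
          = Bd k (dlt k σ) s • (LAM k T v₀ (SD k T (dlt k s)) - dlt k s
              - H1 k T v₀ (Bd k (dlt k s))) := by
        intro s _
        rw [map_smul]
        by_cases hc : Bd k (dlt k σ) s = 0
        · rw [hc, zero_smul, zero_smul]
        · rw [ih s (card_of_Bd_dlt_ne hσ s hc)]
      rw [Finset.sum_congr rfl hcongr]
      have hsplit : ∀ s ∈ Finset.univ, Bd k (dlt k σ) s • (LAM k T v₀ (SD k T (dlt k s)) - dlt k s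
              - H1 k T v₀ (Bd k (dlt k s)))
          = Bd k (dlt k σ) s • LAM k T v₀ (SD k T (dlt k s)) - Bd k (dlt k σ) s • dlt k s
              - Bd k (dlt k σ) s • H1 k T v₀ (Bd k (dlt k s)) := by
        intro s _
        rw [smul_sub, smul_sub]
      rw [Finset.sum_congr rfl hsplit, Finset.sum_sub_distrib, Finset.sum_sub_distrib,
        sum_smul_two (LAM k T v₀) (SD k T), sum_dlt,
        sum_smul_two (H1 k T v₀) (Bd k), Bd_Bd, map_zero, sub_zero]
    have hBdw : Bd k w = 0 := by
      rw [hw, map_sub, map_sub, hBdY, Bd_LAM, Bd_SD, sub_self]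
    have hcone : Bd k (Ca k (apx1 v₀ σ) w) = w - Ca k (apx1 v₀ σ) (Bd k w) := by
      rw [eq_sub_iff_add_eq]
      exact Bd_Ca_add_Ca_Bd _ _
    rw [hcone, hBdw, map_zero, sub_zero, hw, hY]

/-- first homotopy identity -/
lemma Bd_H1 (G : Finset V → k) :
    Bd k (H1 k T v₀ G) = LAM k T v₀ (SD k T G) - G - H1 k T v₀ (Bd k G) := by
  have h := map_eq_sum_dlt ((Bd k).comp (H1 k T v₀)) G
  simp only [LinearMap.comp_apply] at h
  rw [h]
  have hcongr : ∀ σ ∈ Finset.univ, G σ • Bd k (H1 k T v₀ (dlt k σ))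
      = G σ • LAM k T v₀ (SD k T (dlt k σ)) - G σ • dlt k σ
          - G σ • H1 k T v₀ (Bd k (dlt k σ)) := by
    intro σ _
    rw [H1_dlt, Bd_h1Fun σ.card σ rfl, smul_sub, smul_sub]
  rw [Finset.sum_congr rfl hcongr, Finset.sum_sub_distrib, Finset.sum_sub_distrib,
    sum_smul_two (LAM k T v₀) (SD k T), sum_dlt, sum_smul_two (H1 k T v₀) (Bd k)]

/-- second homotopy identity, on basis elements -/
lemma Bd_h2Fun : ∀ (n : ℕ) (c : Finset (Finset V)), c.card = n →
    Bd k (h2Fun k T v₀ n c)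
      = SD k T (LAM k T v₀ (dlt k c)) - dlt k c - H2 k T v₀ (Bd k (dlt k c)) := by
  intro n
  induction n with
  | zero =>
    intro c hc
    rw [Finset.card_eq_zero.mp hc]
    show Bd k (0 : Finset (Finset V) → k) = _
    rw [map_zero, LAM_dlt, Finset.card_empty]
    show (0:Finset (Finset V) → k) = SD k T (dlt k (∅ : Finset V)) - dlt k ∅ - _
    rw [SD_dlt, Finset.card_empty]
    show (0:Finset (Finset V) → k) = dlt k (∅:Finset (Finset V)) - dlt k ∅
      - H2 k T v₀ (Bd k (dlt k (∅:Finset (Finset V))))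
    rw [Bd_dlt_empty, map_zero, sub_self, zero_sub, neg_zero]
  | succ n ih =>
    intro c hc
    show Bd k (Ca k (c.sup id) (SD k T (LAM k T v₀ (dlt k c)) - dlt k c
      - ∑ c' : Finset (Finset V), Bd k (dlt k c) c' • h2Fun k T v₀ n c')) = _
    set w := SD k T (LAM k T v₀ (dlt k c)) - dlt k c
      - ∑ c' : Finset (Finset V), Bd k (dlt k c) c' • h2Fun k T v₀ n c' with hw
    have hY : (∑ c' : Finset (Finset V), Bd k (dlt k c) c' • h2Fun k T v₀ n c')
        = H2 k T v₀ (Bd k (dlt k c)) := by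
      rw [H2, Lam_eq_level _ (card_of_Bd_dlt_ne hc)]
    have hBdY : Bd k (∑ c' : Finset (Finset V), Bd k (dlt k c) c' • h2Fun k T v₀ n c')
        = SD k T (LAM k T v₀ (Bd k (dlt k c))) - Bd k (dlt k c) := by
      rw [map_sum]
      have hcongr : ∀ c' ∈ Finset.univ, Bd k (Bd k (dlt k c) c' • h2Fun k T v₀ n c')
          = Bd k (dlt k c) c' • (SD k T (LAM k T v₀ (dlt k c')) - dlt k c'
              - H2 k T v₀ (Bd k (dlt k c'))) := by
        intro c' _
        rw [map_smul]
        by_cases hcc : Bd k (dlt k c) c' = 0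
        · rw [hcc, zero_smul, zero_smul]
        · rw [ih c' (card_of_Bd_dlt_ne hc c' hcc)]
      rw [Finset.sum_congr rfl hcongr]
      have hsplit : ∀ c' ∈ Finset.univ, Bd k (dlt k c) c' • (SD k T (LAM k T v₀ (dlt k c'))
              - dlt k c' - H2 k T v₀ (Bd k (dlt k c')))
          = Bd k (dlt k c) c' • SD k T (LAM k T v₀ (dlt k c')) - Bd k (dlt k c) c' • dlt k c'
              - Bd k (dlt k c) c' • H2 k T v₀ (Bd k (dlt k c')) := by
        intro c' _
        rw [smul_sub, smul_sub]
      rw [Finset.sum_congr rfl hsplit, Finset.sum_sub_distrib, Finset.sum_sub_distrib,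
        sum_smul_two (SD k T) (LAM k T v₀), sum_dlt,
        sum_smul_two (H2 k T v₀) (Bd k), Bd_Bd, map_zero, sub_zero]
    have hBdw : Bd k w = 0 := by
      rw [hw, map_sub, map_sub, hBdY, Bd_SD, Bd_LAM, sub_self]
    have hcone : Bd k (Ca k (c.sup id) w) = w - Ca k (c.sup id) (Bd k w) := by
      rw [eq_sub_iff_add_eq]
      exact Bd_Ca_add_Ca_Bd _ _
    rw [hcone, hBdw, map_zero, sub_zero, hw, hY]

/-- second homotopy identity -/
lemma Bd_H2 (G : Finset (Finset V) → k) :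
    Bd k (H2 k T v₀ G) = SD k T (LAM k T v₀ G) - G - H2 k T v₀ (Bd k G) := by
  have h := map_eq_sum_dlt ((Bd k).comp (H2 k T v₀)) G
  simp only [LinearMap.comp_apply] at h
  rw [h]
  have hcongr : ∀ c ∈ Finset.univ, G c • Bd k (H2 k T v₀ (dlt k c))
      = G c • SD k T (LAM k T v₀ (dlt k c)) - G c • dlt k c
          - G c • H2 k T v₀ (Bd k (dlt k c)) := by
    intro c _
    rw [H2_dlt, Bd_h2Fun c.card c rfl, smul_sub, smul_sub]
  rw [Finset.sum_congr rfl hcongr, Finset.sum_sub_distrib, Finset.sum_sub_distrib,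
    sum_smul_two (SD k T) (LAM k T v₀), sum_dlt, sum_smul_two (H2 k T v₀) (Bd k)]

end SCP
end htpids


noncomputable section sptlemmas
open scoped Classical
open SComplex

namespace SCP
variable {k : Type} [Field k] {V : Type} [Fintype V] [DecidableEq V]
variable {K : SComplex V} {T : Finset V}

lemma sum_smul_apply_ne_zero {W₁ W₂ : Type} [Fintype W₁] [DecidableEq W₁]
    {cf : Finset W₁ → k} {u : Finset W₁ → (Finset W₂ → k)} {x : Finset W₂}
    (h : (∑ s : Finset W₁, cf s • u s) x ≠ 0) : ∃ s, cf s ≠ 0 ∧ u s x ≠ 0 := by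
  rw [Finset.sum_apply] at h
  obtain ⟨s, _, hne⟩ := Finset.exists_ne_zero_of_sum_ne_zero h
  rw [Pi.smul_apply, smul_eq_mul] at hne
  exact ⟨s, left_ne_zero_of_mul hne, right_ne_zero_of_mul hne⟩

lemma Ca_ne_zero {W : Type} [Fintype W] [DecidableEq W] {a : W} {G : Finset W → k}
    {t : Finset W} (h : Ca k a G t ≠ 0) :
    a ∈ t ∧ G (t.erase a) ≠ 0 := by
  rw [Ca_apply] at h
  by_cases hat : a ∈ t
  · rw [if_pos hat] at h
    exact ⟨hat, right_ne_zero_of_mul h⟩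
  · rw [if_neg hat] at h
    exact absurd rfl h

lemma mem_Gam_iff (s : Finset (Finset V)) :
    s ∈ (Gam K T).faces ↔ (∀ F ∈ s, F ∈ K.faces ∧ T.card - 1 < F.card)
      ∧ ∀ F ∈ s, ∀ G ∈ s, F ⊆ G ∨ G ⊆ F := Iff.rfl

/-- elements of faces of the link `L` are faces strictly containing `T` -/
lemma Lk2_elem (hT : T ∈ K.faces) (hTne : T ≠ ∅) {c : Finset (Finset V)}
    (hc : c ∈ (Lk2 K T).faces) {F : Finset V} (hF : F ∈ c) :
    F ∈ K.faces ∧ T ⊆ F ∧ F ≠ T := by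
  obtain ⟨hTc, hins⟩ := (mem_Lk2_iff hT hTne c).mp hc
  obtain ⟨helts, hchain⟩ := (mem_Gam_iff (insert T c)).mp hins
  have hFi : F ∈ insert T c := Finset.mem_insert_of_mem hF
  have hFK := (helts F hFi).1
  have hFcard := (helts F hFi).2
  have hFT : F ≠ T := fun h0 => hTc (h0 ▸ hF)
  refine ⟨hFK, ?_, hFT⟩
  rcases hchain F hFi T (Finset.mem_insert_self T c) with h | h
  · -- F ⊆ T forces F = T, contradiction
    exfalso
    apply hFT
    apply Finset.Subset.antisymm h
    have hTpos : 0 < T.card := Finset.card_pos.mpr (Finset.nonempty_iff_ne_empty.mpr hTne)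
    have : T.card ≤ F.card := by omega
    exact Finset.eq_of_subset_of_card_le h this ▸ subset_rfl
  · exact h

/-- faces of `L` are faces of `Γ` -/
lemma Lk2_face_Gam {c : Finset (Finset V)} (hc : c ∈ (Lk2 K T).faces) :
    c ∈ (Gam K T).faces := by
  rcases hc with rfl | ⟨_, hu⟩
  · exact (Gam K T).empty_mem
  · exact (Gam K T).down_closed hu Finset.subset_union_right

/-- the sup of a nonempty chain is its maximum element -/
lemma sup_mem_of_Gam {c : Finset (Finset V)} (hc : c ∈ (Gam K T).faces)
    (hne : c.Nonempty) : c.sup id ∈ c ∧ ∀ F ∈ c, F ⊆ c.sup id := by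
  obtain ⟨M, hM, hmax'⟩ := Finset.exists_maximal hne
  have hmax : ∀ x ∈ c, ¬ M < x := fun x hx hlt => lt_irrefl _ (lt_of_lt_of_le hlt (hmax' hx hlt.le))
  have hMall : ∀ F ∈ c, F ⊆ M := by
    intro F hF
    rcases hc.2 F hF M hM with h | h
    · exact h
    · by_cases hFM : F = M
      · exact hFM ▸ subset_rfl
      · exact absurd (Finset.ssubset_iff_subset_ne.mpr ⟨h, Ne.symm hFM⟩) (hmax F hF)
  have hsup : c.sup id = M := le_antisymm (Finset.sup_le hMall) (Finset.le_sup (f := id) hM)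
  rw [hsup]
  exact ⟨hM, hMall⟩

/-- building a new face of `L` by adding a dominating element -/
lemma insert_mem_Lk2 (hT : T ∈ K.faces) (hTne : T ≠ ∅) {M : Finset V}
    (hM : M ∈ K.faces) (hTM : T ⊆ M) (hMT : M ≠ T) {d : Finset (Finset V)}
    (hd : d ∈ (Lk2 K T).faces) (hsub : ∀ F ∈ d, F ⊆ M) :
    insert M d ∈ (Lk2 K T).faces := by
  obtain ⟨hTd, hins⟩ := (mem_Lk2_iff hT hTne d).mp hd
  obtain ⟨helts, hchain⟩ := (mem_Gam_iff (insert T d)).mp hins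
  rw [mem_Lk2_iff hT hTne]
  have hTpos : 0 < T.card := Finset.card_pos.mpr (Finset.nonempty_iff_ne_empty.mpr hTne)
  constructor
  · intro hc
    rcases Finset.mem_insert.mp hc with h | h
    · exact hMT h.symm
    · exact hTd h
  · rw [mem_Gam_iff]
    constructor
    · intro F hF
      rcases Finset.mem_insert.mp hF with rfl | hF2
      · exact ⟨hT, Nat.sub_lt hTpos one_pos⟩
      · rcases Finset.mem_insert.mp hF2 with rfl | hF3
        · refine ⟨hM, ?_⟩
          have := Finset.card_le_card hTM
          omega
        · exact helts F (Finset.mem_insert_of_mem hF3)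
    · intro F hF G hG
      have hcomp : ∀ X ∈ insert T (insert M d), X ⊆ M ∨ M ⊆ X := by
        intro X hX
        rcases Finset.mem_insert.mp hX with rfl | hX2
        · exact Or.inl hTM
        · rcases Finset.mem_insert.mp hX2 with rfl | hX3
          · exact Or.inl subset_rfl
          · exact Or.inl (hsub X hX3)
      have hmemTd : ∀ X ∈ insert T (insert M d), X = M ∨ X ∈ insert T d := by
        intro X hX
        rcases Finset.mem_insert.mp hX with rfl | hX2
        · exact Or.inr (Finset.mem_insert_self X d)
        · rcases Finset.mem_insert.mp hX2 with rfl | hX3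
          · exact Or.inl rfl
          · exact Or.inr (Finset.mem_insert_of_mem hX3)
      rcases hmemTd F hF with rfl | hF'
      · rcases hcomp G hG with h | h
        · exact Or.inr h
        · exact Or.inl h
      · rcases hmemTd G hG with rfl | hG'
        · rcases hcomp F hF with h | h
          · exact Or.inl h
          · exact Or.inr h
        · exact hchain F hF' G hG'

/-- every face of the link, together with `T`, is a face of `K` -/
lemma link_union_mem (hT : T ∈ K.faces) {σ : Finset V} (hσ : σ ∈ (link K T).faces) :
    Disjoint T σ ∧ T ∪ σ ∈ K.faces := by
  rcases hσ with rfl | ⟨h1, h2⟩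
  · exact ⟨Finset.disjoint_empty_right T, by rwa [Finset.union_empty]⟩
  · exact ⟨h1, h2⟩

end SCP
end sptlemmas


noncomputable section sptrec
open scoped Classical
open SComplex

namespace SCP
variable {k : Type} [Field k] {V : Type} [Fintype V] [DecidableEq V]
variable {K : SComplex V} {T : Finset V} {v₀ : V}

lemma TunionNeT {σ : Finset V} (hd : Disjoint T σ) (hne : σ.Nonempty) : T ∪ σ ≠ T := by
  intro h0
  obtain ⟨v, hv⟩ := hne
  have : v ∈ T := h0 ▸ Finset.mem_union_right T hv
  exact (Finset.disjoint_left.mp hd this) hv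

/-- support and carrier of the subdivision operator -/
lemma spt_sdFun (hT : T ∈ K.faces) (hTne : T ≠ ∅) : ∀ (n : ℕ) (σ : Finset V),
    σ ∈ (link K T).faces → σ.card = n → ∀ c, sdFun k T n σ c ≠ 0 →
      c ∈ (Lk2 K T).faces ∧ c.card = n ∧ ∀ F ∈ c, F ⊆ T ∪ σ := by
  intro n
  induction n with
  | zero =>
    intro σ hσf hσc c hc
    simp only [sdFun] at hc
    have hce : c = ∅ := by
      by_contra h0
      exact hc (dlt_ne h0)
    subst hce
    exact ⟨(Lk2 K T).empty_mem, Finset.card_empty, fun F hF => absurd hF (Finset.notMem_empty F)⟩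
  | succ n ih =>
    intro σ hσf hσc c hc
    simp only [sdFun] at hc
    obtain ⟨hMc, hXne⟩ := Ca_ne_zero hc
    obtain ⟨s, hbs, hsd⟩ := sum_smul_apply_ne_zero hXne
    obtain ⟨hsub, hcard⟩ := supp_Bd_dlt hbs
    have hsf : s ∈ (link K T).faces := (link K T).down_closed hσf hsub
    have hscard : s.card = n := by omega
    obtain ⟨hc'f, hc'card, hc'sub⟩ := ih s hsf hscard _ hsd
    have hσne : σ.Nonempty := Finset.card_pos.mp (by omega)
    obtain ⟨hdisj, hMK⟩ := link_union_mem hT hσf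
    have hMT : T ∪ σ ≠ T := TunionNeT hdisj hσne
    have hLface : insert (T ∪ σ) (c.erase (T ∪ σ)) ∈ (Lk2 K T).faces :=
      insert_mem_Lk2 hT hTne hMK Finset.subset_union_left hMT hc'f
        (fun F hF => (hc'sub F hF).trans (Finset.union_subset_union_right hsub))
    have hceq : c = insert (T ∪ σ) (c.erase (T ∪ σ)) := (Finset.insert_erase hMc).symm
    refine ⟨hceq ▸ hLface, ?_, ?_⟩
    · rw [hceq, Finset.card_insert_of_notMem (Finset.notMem_erase _ _), hc'card]
    · intro F hF
      rw [hceq] at hF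
      rcases Finset.mem_insert.mp hF with rfl | hF2
      · exact subset_rfl
      · exact (hc'sub F hF2).trans (Finset.union_subset_union_right hsub)

/-- support and carrier of the reverse map -/
lemma spt_lamFun (hT : T ∈ K.faces) (hTne : T ≠ ∅) : ∀ (n : ℕ) (c : Finset (Finset V)),
    c ∈ (Lk2 K T).faces → c.card = n → ∀ s, lamFun k T v₀ n c s ≠ 0 →
      s ∈ (link K T).faces ∧ s.card = n ∧ s ⊆ c.sup id \ T := by
  intro n
  induction n with
  | zero =>
    intro c hcf hcc s hs
    simp only [lamFun] at hs
    have hse : s = ∅ := by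
      by_contra h0
      exact hs (dlt_ne h0)
    subst hse
    exact ⟨(link K T).empty_mem, Finset.card_empty, Finset.empty_subset _⟩
  | succ n ih =>
    intro c hcf hcc s hs
    simp only [lamFun] at hs
    obtain ⟨hvs, hXne⟩ := Ca_ne_zero hs
    obtain ⟨c', hbc, hlam⟩ := sum_smul_apply_ne_zero hXne
    obtain ⟨hsubc, hcardc⟩ := supp_Bd_dlt hbc
    have hc'f : c' ∈ (Lk2 K T).faces := (Lk2 K T).down_closed hcf hsubc
    have hc'card : c'.card = n := by omega
    obtain ⟨hs'f, hs'card, hs'sub⟩ := ih c' hc'f hc'card _ hlam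
    have hcne : c.Nonempty := Finset.card_pos.mp (by omega)
    obtain ⟨hsupmem, hsupall⟩ := sup_mem_of_Gam (Lk2_face_Gam hcf) hcne
    obtain ⟨hsupK, hTsup, hsupT⟩ := Lk2_elem hT hTne hcf hsupmem
    have hnon : (c.sup id \ T).Nonempty := by
      rw [Finset.sdiff_nonempty]
      intro h0
      exact hsupT (Finset.Subset.antisymm h0 hTsup)
    have hvtx : vtx T v₀ c ∈ c.sup id \ T := by
      rw [vtx, dif_pos hnon]
      exact hnon.choose_spec
    have hseq : s = insert (vtx T v₀ c) (s.erase (vtx T v₀ c)) := (Finset.insert_erase hvs).symm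
    have hsupmono : c'.sup id ⊆ c.sup id := Finset.sup_mono hsubc
    have hssub : s ⊆ c.sup id \ T := by
      rw [hseq]
      exact Finset.insert_subset hvtx
        (hs'sub.trans (Finset.sdiff_subset_sdiff hsupmono subset_rfl))
    refine ⟨?_, ?_, hssub⟩
    · right
      refine ⟨?_, ?_⟩
      · rw [Finset.disjoint_left]
        intro a ha has
        exact (Finset.mem_sdiff.mp (hssub has)).2 ha
      · refine K.down_closed hsupK ?_
        apply Finset.union_subset hTsup
        exact hssub.trans ((Finset.sdiff_subset).trans subset_rfl)
    · rw [hseq, Finset.card_insert_of_notMem (Finset.notMem_erase _ _), hs'card]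

/-- support of the first homotopy -/
lemma spt_h1Fun (hT : T ∈ K.faces) (hTne : T ≠ ∅) : ∀ (n : ℕ) (σ : Finset V),
    σ ∈ (link K T).faces → σ.card = n → ∀ s, h1Fun k T v₀ n σ s ≠ 0 →
      s ⊆ σ ∧ s.card = n + 1 := by
  intro n
  induction n with
  | zero =>
    intro σ hσf hσc s hs
    simp only [h1Fun, Pi.zero_apply] at hs
    exact absurd rfl hs
  | succ n ih =>
    intro σ hσf hσc s hs
    simp only [h1Fun] at hs
    obtain ⟨hvs, hwne⟩ := Ca_ne_zero hs
    have hσne : σ.Nonempty := Finset.card_pos.mp (by omega)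
    have hapx : apx1 v₀ σ ∈ σ := by
      rw [apx1, dif_pos hσne]
      exact hσne.choose_spec
    obtain ⟨hdisj, hTσK⟩ := link_union_mem hT hσf
    set s' := s.erase (apx1 v₀ σ) with hs'def
    have h3 : LAM k T v₀ (SD k T (dlt k σ)) s' ≠ 0 ∨ dlt k σ s' ≠ 0
        ∨ (∑ s₂ : Finset V, Bd k (dlt k σ) s₂ • h1Fun k T v₀ n s₂) s' ≠ 0 := by
      by_contra h0
      push_neg at h0
      obtain ⟨h1, h2, h3'⟩ := h0
      apply hwne
      rw [Pi.sub_apply, Pi.sub_apply, h1, h2, h3', sub_zero, sub_zero]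
    have hQ : s' ⊆ σ ∧ s'.card = n + 1 := by
      rcases h3 with hcase | hcase | hcase
      · rw [LAM, Lam_apply] at hcase
        obtain ⟨c, hSDne, hlamne⟩ := sum_smul_apply_ne_zero hcase
        rw [SD_dlt, hσc] at hSDne
        obtain ⟨hcf, hccard, hcsub⟩ := spt_sdFun hT hTne (n+1) σ hσf hσc c hSDne
        obtain ⟨hs'f, hs'card, hs'sub⟩ := spt_lamFun hT hTne c.card c hcf rfl _ hlamne
        constructor
        · refine hs'sub.trans ?_
          have hsup : c.sup id ⊆ T ∪ σ := Finset.sup_le (fun F hF => hcsub F hF)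
          refine (Finset.sdiff_subset_sdiff hsup subset_rfl).trans ?_
          rw [Finset.union_sdiff_cancel_left hdisj]
        · rw [hs'card, hccard]
      · have : s' = σ := by
          by_contra h0
          exact hcase (dlt_ne h0)
        rw [this]
        exact ⟨subset_rfl, hσc⟩
      · obtain ⟨s₂, hb, hh⟩ := sum_smul_apply_ne_zero hcase
        obtain ⟨hsub2, hcard2⟩ := supp_Bd_dlt hb
        have hs₂f : s₂ ∈ (link K T).faces := (link K T).down_closed hσf hsub2
        have hs₂card : s₂.card = n := by omega
        obtain ⟨hsubs, hcards⟩ := ih s₂ hs₂f hs₂card _ hh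
        exact ⟨hsubs.trans hsub2, hcards⟩
    have hseq : s = insert (apx1 v₀ σ) s' := (Finset.insert_erase hvs).symm
    constructor
    · rw [hseq]
      exact Finset.insert_subset hapx hQ.1
    · rw [hseq, Finset.card_insert_of_notMem (Finset.notMem_erase _ _), hQ.2]

/-- support of the second homotopy -/
lemma spt_h2Fun (hT : T ∈ K.faces) (hTne : T ≠ ∅) : ∀ (n : ℕ) (c : Finset (Finset V)),
    c ∈ (Lk2 K T).faces → c.card = n → ∀ d, h2Fun k T v₀ n c d ≠ 0 →
      d ∈ (Lk2 K T).faces ∧ d.card = n + 1 ∧ ∀ F ∈ d, F ⊆ c.sup id := by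
  intro n
  induction n with
  | zero =>
    intro c hcf hcc d hd
    simp only [h2Fun, Pi.zero_apply] at hd
    exact absurd rfl hd
  | succ n ih =>
    intro c hcf hcc d hd
    simp only [h2Fun] at hd
    obtain ⟨hsupd, hwne⟩ := Ca_ne_zero hd
    have hcne : c.Nonempty := Finset.card_pos.mp (by omega)
    obtain ⟨hsupmem, hsupall⟩ := sup_mem_of_Gam (Lk2_face_Gam hcf) hcne
    obtain ⟨hsupK, hTsup, hsupT⟩ := Lk2_elem hT hTne hcf hsupmem
    set d' := d.erase (c.sup id) with hd'def
    have h3 : SD k T (LAM k T v₀ (dlt k c)) d' ≠ 0 ∨ dlt k c d' ≠ 0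
        ∨ (∑ c₂ : Finset (Finset V), Bd k (dlt k c) c₂ • h2Fun k T v₀ n c₂) d' ≠ 0 := by
      by_contra h0
      push_neg at h0
      obtain ⟨h1, h2, h3'⟩ := h0
      apply hwne
      rw [Pi.sub_apply, Pi.sub_apply, h1, h2, h3', sub_zero, sub_zero]
    have hQ : d' ∈ (Lk2 K T).faces ∧ d'.card = n + 1 ∧ ∀ F ∈ d', F ⊆ c.sup id := by
      rcases h3 with hcase | hcase | hcase
      · rw [SD, Lam_apply] at hcase
        obtain ⟨s, hLAMne, hsdne⟩ := sum_smul_apply_ne_zero hcase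
        rw [LAM_dlt, hcc] at hLAMne
        obtain ⟨hsf, hscard, hssub⟩ := spt_lamFun hT hTne (n+1) c hcf hcc s hLAMne
        obtain ⟨hd'f, hd'card, hd'sub⟩ := spt_sdFun hT hTne s.card s hsf rfl _ hsdne
        refine ⟨hd'f, by rw [hd'card, hscard], ?_⟩
        intro F hF
        refine (hd'sub F hF).trans ?_
        refine Finset.union_subset hTsup (hssub.trans ?_)
        exact Finset.sdiff_subset
      · have : d' = c := by
          by_contra h0
          exact hcase (dlt_ne h0)
        rw [this]
        exact ⟨hcf, hcc, hsupall⟩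
      · obtain ⟨c₂, hb, hh⟩ := sum_smul_apply_ne_zero hcase
        obtain ⟨hsub2, hcard2⟩ := supp_Bd_dlt hb
        have hc₂f : c₂ ∈ (Lk2 K T).faces := (Lk2 K T).down_closed hcf hsub2
        have hc₂card : c₂.card = n := by omega
        obtain ⟨hd'f, hd'card, hd'sub⟩ := ih c₂ hc₂f hc₂card _ hh
        exact ⟨hd'f, hd'card, fun F hF =>
          (hd'sub F hF).trans (Finset.sup_mono hsub2)⟩
    have hdeq : d = insert (c.sup id) d' := (Finset.insert_erase hsupd).symm
    have hLface : insert (c.sup id) d' ∈ (Lk2 K T).faces :=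
      insert_mem_Lk2 hT hTne hsupK hTsup hsupT hQ.1 hQ.2.2
    refine ⟨hdeq ▸ hLface, ?_, ?_⟩
    · rw [hdeq, Finset.card_insert_of_notMem (Finset.notMem_erase _ _), hQ.2.1]
    · intro F hF
      rw [hdeq] at hF
      rcases Finset.mem_insert.mp hF with rfl | hF2
      · exact subset_rfl
      · exact hQ.2.2 F hF2

end SCP
end sptrec


noncomputable section sdchain
open scoped Classical
open SComplex

namespace SCP
variable {k : Type} [Field k] {V : Type} [Fintype V] [DecidableEq V]
variable {K : SComplex V} {T : Finset V} {v₀ : V}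

lemma spt_SD (hT : T ∈ K.faces) (hTne : T ≠ ∅) {n : ℕ} {G : Finset V → k}
    (h : Spt (link K T) n G) : Spt (Lk2 K T) n (SD k T G) := by
  intro c hc
  rw [SD, Lam_apply] at hc
  obtain ⟨σ, hG, hsd⟩ := sum_smul_apply_ne_zero hc
  obtain ⟨hσf, hσc⟩ := h σ hG
  have := spt_sdFun hT hTne σ.card σ hσf rfl c hsd
  exact ⟨this.1, by rw [this.2.1, hσc]⟩

lemma spt_LAM (hT : T ∈ K.faces) (hTne : T ≠ ∅) {n : ℕ} {G : Finset (Finset V) → k}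
    (h : Spt (Lk2 K T) n G) : Spt (link K T) n (LAM k T v₀ G) := by
  intro s hs
  rw [LAM, Lam_apply] at hs
  obtain ⟨c, hG, hlam⟩ := sum_smul_apply_ne_zero hs
  obtain ⟨hcf, hcc⟩ := h c hG
  have := spt_lamFun hT hTne c.card c hcf rfl s hlam
  exact ⟨this.1, by rw [this.2.1, hcc]⟩

lemma spt_H1 (hT : T ∈ K.faces) (hTne : T ≠ ∅) {n : ℕ} {G : Finset V → k}
    (h : Spt (link K T) n G) : Spt (link K T) (n+1) (H1 k T v₀ G) := by
  intro s hs
  rw [H1, Lam_apply] at hs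
  obtain ⟨σ, hG, hh⟩ := sum_smul_apply_ne_zero hs
  obtain ⟨hσf, hσc⟩ := h σ hG
  have := spt_h1Fun hT hTne σ.card σ hσf rfl s hh
  exact ⟨(link K T).down_closed hσf this.1, by rw [this.2, hσc]⟩

lemma spt_H2 (hT : T ∈ K.faces) (hTne : T ≠ ∅) {n : ℕ} {G : Finset (Finset V) → k}
    (h : Spt (Lk2 K T) n G) : Spt (Lk2 K T) (n+1) (H2 k T v₀ G) := by
  intro d hd
  rw [H2, Lam_apply] at hd
  obtain ⟨c, hG, hh⟩ := sum_smul_apply_ne_zero hd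
  obtain ⟨hcf, hcc⟩ := h c hG
  have := spt_h2Fun hT hTne c.card c hcf rfl d hh
  exact ⟨this.1, by rw [this.2.1, hcc]⟩

variable (k K T v₀)

def sdC (n : ℕ) : chainSpace k (link K T) n →ₗ[k] chainSpace k (Lk2 K T) n :=
  res k (Lk2 K T) n ∘ₗ SD k T ∘ₗ ext k (link K T) n

def lamC (n : ℕ) : chainSpace k (Lk2 K T) n →ₗ[k] chainSpace k (link K T) n :=
  res k (link K T) n ∘ₗ LAM k T v₀ ∘ₗ ext k (Lk2 K T) n

def h1C (n : ℕ) : chainSpace k (link K T) n →ₗ[k] chainSpace k (link K T) (n+1) :=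
  res k (link K T) (n+1) ∘ₗ H1 k T v₀ ∘ₗ ext k (link K T) n

def h2C (n : ℕ) : chainSpace k (Lk2 K T) n →ₗ[k] chainSpace k (Lk2 K T) (n+1) :=
  res k (Lk2 K T) (n+1) ∘ₗ H2 k T v₀ ∘ₗ ext k (Lk2 K T) n

variable {k K T v₀}

lemma sdC_comm (hT : T ∈ K.faces) (hTne : T ≠ ∅) (n : ℕ)
    (g : chainSpace k (link K T) (n+1)) :
    sdC k K T n (boundary k (link K T) n g) = boundary k (Lk2 K T) n (sdC k K T (n+1) g) := by
  show res k (Lk2 K T) n (SD k T (ext k (link K T) n (boundary k (link K T) n g)))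
    = boundary k (Lk2 K T) n (res k (Lk2 K T) (n+1) (SD k T (ext k (link K T) (n+1) g)))
  rw [boundary_eq, boundary_eq, ext_res (spt_Bd (spt_ext _ _ g)),
    ext_res (spt_SD hT hTne (spt_ext _ _ g)), Bd_SD]

lemma lamC_comm (hT : T ∈ K.faces) (hTne : T ≠ ∅) (n : ℕ)
    (g : chainSpace k (Lk2 K T) (n+1)) :
    lamC k K T v₀ n (boundary k (Lk2 K T) n g)
      = boundary k (link K T) n (lamC k K T v₀ (n+1) g) := by
  show res k (link K T) n (LAM k T v₀ (ext k (Lk2 K T) n (boundary k (Lk2 K T) n g)))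
    = boundary k (link K T) n (res k (link K T) (n+1) (LAM k T v₀ (ext k (Lk2 K T) (n+1) g)))
  rw [boundary_eq, boundary_eq, ext_res (spt_Bd (spt_ext _ _ g)),
    ext_res (spt_LAM hT hTne (spt_ext _ _ g)), Bd_LAM]

variable (k K T v₀)

def sdCM (hT : T ∈ K.faces) (hTne : T ≠ ∅) : CM k (link K T) (Lk2 K T) where
  f := sdC k K T
  comm := sdC_comm hT hTne

def lamCM (hT : T ∈ K.faces) (hTne : T ≠ ∅) : CM k (Lk2 K T) (link K T) where
  f := lamC k K T v₀
  comm := lamC_comm hT hTne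

variable {k K T v₀}

/-- first homotopy at level 0 -/
lemma h1_hom0 (hT : T ∈ K.faces) (hTne : T ≠ ∅) (g : chainSpace k (link K T) 0) :
    lamC k K T v₀ 0 (sdC k K T 0 g) - g = boundary k (link K T) 0 (h1C k K T v₀ 0 g) := by
  have hBdX : Bd k (ext k (link K T) 0 g) = 0 :=
    Bd_of_card_zero (fun s hs => (spt_ext _ _ g s hs).2)
  have hid := Bd_H1 (T := T) (v₀ := v₀) (ext k (link K T) 0 g)
  rw [hBdX, map_zero, sub_zero] at hid
  -- hid : Bd (H1 X) = LAM (SD X) - X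
  show res k (link K T) 0 (LAM k T v₀ (ext k (Lk2 K T) 0 (res k (Lk2 K T) 0
      (SD k T (ext k (link K T) 0 g))))) - g
    = boundary k (link K T) 0 (res k (link K T) 1 (H1 k T v₀ (ext k (link K T) 0 g)))
  rw [ext_res (spt_SD hT hTne (spt_ext _ _ g)), boundary_eq,
    ext_res (spt_H1 hT hTne (spt_ext _ _ g)), hid, map_sub, res_ext]

/-- first homotopy at positive levels -/
lemma h1_homS (hT : T ∈ K.faces) (hTne : T ≠ ∅) (n : ℕ) (g : chainSpace k (link K T) (n+1)) :
    lamC k K T v₀ (n+1) (sdC k K T (n+1) g) - g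
      = boundary k (link K T) (n+1) (h1C k K T v₀ (n+1) g)
        + h1C k K T v₀ n (boundary k (link K T) n g) := by
  have hid := Bd_H1 (T := T) (v₀ := v₀) (ext k (link K T) (n+1) g)
  show res k (link K T) (n+1) (LAM k T v₀ (ext k (Lk2 K T) (n+1) (res k (Lk2 K T) (n+1)
      (SD k T (ext k (link K T) (n+1) g))))) - g
    = boundary k (link K T) (n+1) (res k (link K T) (n+2) (H1 k T v₀ (ext k (link K T) (n+1) g)))
      + res k (link K T) (n+1) (H1 k T v₀ (ext k (link K T) n
          (boundary k (link K T) n g)))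
  rw [ext_res (spt_SD hT hTne (spt_ext _ _ g)), boundary_eq,
    ext_res (spt_H1 hT hTne (spt_ext _ _ g)),
    show ext k (link K T) n (boundary k (link K T) n g)
      = Bd k (ext k (link K T) (n+1) g) by
        rw [boundary_eq, ext_res (spt_Bd (spt_ext _ _ g))]]
  have : LAM k T v₀ (SD k T (ext k (link K T) (n+1) g))
      = ext k (link K T) (n+1) g + Bd k (H1 k T v₀ (ext k (link K T) (n+1) g))
        + H1 k T v₀ (Bd k (ext k (link K T) (n+1) g)) := by
    rw [hid]
    abel
  rw [this, map_add, map_add, res_ext]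
  abel

/-- second homotopy at level 0 -/
lemma h2_hom0 (hT : T ∈ K.faces) (hTne : T ≠ ∅) (g : chainSpace k (Lk2 K T) 0) :
    sdC k K T 0 (lamC k K T v₀ 0 g) - g = boundary k (Lk2 K T) 0 (h2C k K T v₀ 0 g) := by
  have hBdX : Bd k (ext k (Lk2 K T) 0 g) = 0 :=
    Bd_of_card_zero (fun s hs => (spt_ext _ _ g s hs).2)
  have hid := Bd_H2 (T := T) (v₀ := v₀) (ext k (Lk2 K T) 0 g)
  rw [hBdX, map_zero, sub_zero] at hid
  show res k (Lk2 K T) 0 (SD k T (ext k (link K T) 0 (res k (link K T) 0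
      (LAM k T v₀ (ext k (Lk2 K T) 0 g))))) - g
    = boundary k (Lk2 K T) 0 (res k (Lk2 K T) 1 (H2 k T v₀ (ext k (Lk2 K T) 0 g)))
  rw [ext_res (spt_LAM hT hTne (spt_ext _ _ g)), boundary_eq,
    ext_res (spt_H2 hT hTne (spt_ext _ _ g)), hid, map_sub, res_ext]

/-- second homotopy at positive levels -/
lemma h2_homS (hT : T ∈ K.faces) (hTne : T ≠ ∅) (n : ℕ) (g : chainSpace k (Lk2 K T) (n+1)) :
    sdC k K T (n+1) (lamC k K T v₀ (n+1) g) - g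
      = boundary k (Lk2 K T) (n+1) (h2C k K T v₀ (n+1) g)
        + h2C k K T v₀ n (boundary k (Lk2 K T) n g) := by
  have hid := Bd_H2 (T := T) (v₀ := v₀) (ext k (Lk2 K T) (n+1) g)
  show res k (Lk2 K T) (n+1) (SD k T (ext k (link K T) (n+1) (res k (link K T) (n+1)
      (LAM k T v₀ (ext k (Lk2 K T) (n+1) g))))) - g
    = boundary k (Lk2 K T) (n+1) (res k (Lk2 K T) (n+2) (H2 k T v₀ (ext k (Lk2 K T) (n+1) g)))
      + res k (Lk2 K T) (n+1) (H2 k T v₀ (ext k (Lk2 K T) n (boundary k (Lk2 K T) n g)))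
  rw [ext_res (spt_LAM hT hTne (spt_ext _ _ g)), boundary_eq,
    ext_res (spt_H2 hT hTne (spt_ext _ _ g)),
    show ext k (Lk2 K T) n (boundary k (Lk2 K T) n g)
      = Bd k (ext k (Lk2 K T) (n+1) g) by
        rw [boundary_eq, ext_res (spt_Bd (spt_ext _ _ g))]]
  have : SD k T (LAM k T v₀ (ext k (Lk2 K T) (n+1) g))
      = ext k (Lk2 K T) (n+1) g + Bd k (H2 k T v₀ (ext k (Lk2 K T) (n+1) g))
        + H2 k T v₀ (Bd k (ext k (Lk2 K T) (n+1) g)) := by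
    rw [hid]
    abel
  rw [this, map_add, map_add, res_ext]
  abel

/-- the subdivision homotopy equivalence on homology -/
def sdEquivH (hT : T ∈ K.faces) (hTne : T ≠ ∅) (v₀ : V) (m : ℕ) :
    Hlv k (link K T) m ≃ₗ[k] Hlv k (Lk2 K T) m :=
  CM.equivH (sdCM k K T hT hTne) (lamCM k K T v₀ hT hTne)
    (h1C k K T v₀)
    (fun g => h1_hom0 hT hTne g)
    (fun n g => h1_homS hT hTne n g)
    (h2C k K T v₀)
    (fun g => h2_hom0 hT hTne g)
    (fun n g => h2_homS hT hTne n g)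
    m

end SCP
end sdchain


noncomputable section finalassembly
open scoped Classical
open SComplex

namespace SCP
variable {k : Type} [Field k] {V : Type} [Fintype V] [DecidableEq V]

lemma Hred_eq_of_lt {W : Type} [Fintype W] [DecidableEq W] (X : SComplex W) {i : ℤ}
    (h : i < -1) : Hred k X i = ModuleCat.of k PUnit := by
  rw [Hred, if_pos h]

lemma Hred_eq_of_ge {W : Type} [Fintype W] [DecidableEq W] (X : SComplex W) {i : ℤ}
    (h : ¬ i < -1) : Hred k X i = ModuleCat.of k (Hlv k X (i + 1).toNat) := by
  rw [Hred, if_neg h]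

/-- transport a `Subsingleton` hypothesis on `Hred` to `Hlv` -/
lemma subsingleton_Hlv {W : Type} [Fintype W] [DecidableEq W] {X : SComplex W} {i : ℤ} {m : ℕ}
    (him : (i + 1).toNat = m) (h : ¬ i < -1) (hs : Subsingleton ↥(Hred k X i)) :
    Subsingleton (Hlv k X m) := by
  subst him
  rw [Hred_eq_of_ge X h] at hs
  exact hs

/-- the equivalence between `Hred` and `Hlv` -/
def HredEquiv {W : Type} [Fintype W] [DecidableEq W] (X : SComplex W) {i : ℤ} {m : ℕ}
    (him : (i + 1).toNat = m) (h : ¬ i < -1) :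
    ↥(Hred k X i) ≃ₗ[k] Hlv k X m := by
  subst him
  exact (CategoryTheory.eqToIso (Hred_eq_of_ge X h)).toLinearEquiv

end SCP


open SComplex SCP in
open SComplex in
/-- If `T` is a nonempty non-facet face with `|T| = k` and
`H̃ᵢ([Δ]_{>k-1}) = H̃ᵢ₋₁([Δ]_{>k-1}) = 0`, then
`H̃ᵢ₋₁(lk_Δ(T)) ≅ H̃ᵢ₋₁(ast_{[Δ]_{>k-1}}(ρ(T)))`. -/
theorem link_iso_antistar_in_orderComplex
    {V : Type} [Fintype V] [DecidableEq V] (k : Type) [Field k]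
    (K : SComplex V) (T : Finset V) (hT : T ∈ K.faces) (hTne : T ≠ ∅)
    (hTnf : ¬ K.IsFacet T) (i : ℤ)
    (h1 : Subsingleton ↥(Hred k (orderComplex K (T.card - 1)) i))
    (h2 : Subsingleton ↥(Hred k (orderComplex K (T.card - 1)) (i - 1))) :
    Nonempty (↥(Hred k (link K T) (i - 1)) ≃ₗ[k]
      ↥(Hred k ((orderComplex K (T.card - 1)).restrict {s | s ≠ T}) (i - 1))) := by
  by_cases hi : i < 0
  · -- degenerate degrees: both sides are `PUnit`
    have hlt : i - 1 < -1 := by omega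
    have e1 := (CategoryTheory.eqToIso (Hred_eq_of_lt (k := k) (link K T) hlt)).toLinearEquiv
    have e2 := (CategoryTheory.eqToIso (Hred_eq_of_lt (k := k)
      ((orderComplex K (T.card - 1)).restrict {s | s ≠ T}) hlt)).toLinearEquiv
    exact ⟨e1.trans e2.symm⟩
  · -- main case
    have hge : ¬ i - 1 < -1 := by omega
    have him1 : (i - 1 + 1).toNat = i.toNat := by omega
    have him2 : (i + 1).toNat = i.toNat + 1 := by omega
    set m := i.toNat with hm
    have hH1 : Subsingleton (Hlv k (Gam K T) (m + 1)) :=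
      subsingleton_Hlv him2 (by omega) h1
    have hH2 : Subsingleton (Hlv k (Gam K T) m) :=
      subsingleton_Hlv him1 hge h2
    have v₀ : V := (Finset.nonempty_iff_ne_empty.mpr hTne).choose
    have e1 : ↥(Hred k (link K T) (i - 1)) ≃ₗ[k] Hlv k (link K T) m :=
      HredEquiv (link K T) him1 hge
    have e2 : Hlv k (link K T) m ≃ₗ[k] Hlv k (Lk2 K T) m := sdEquivH hT hTne v₀ m
    have e3 : Hlv k (Lk2 K T) m ≃ₗ[k] Hlv k (Ast K T) m := snakeEquiv hT hTne m hH1 hH2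
    have e4 : ↥(Hred k ((orderComplex K (T.card - 1)).restrict {s | s ≠ T}) (i - 1))
        ≃ₗ[k] Hlv k (Ast K T) m :=
      HredEquiv ((orderComplex K (T.card - 1)).restrict {s | s ≠ T}) him1 hge
    exact ⟨e1.trans (e2.trans (e3.trans e4.symm))⟩
end finalassembly
end glob
end

section
/- Let Δ be a simplicial complex and fix an integer m. If H̃_{i−1}(N_{j+1}(Δ)) = 0 for all i, j ≥ 0 with i + j < m, then m ≤ s(Δ), the minimal cardinality of a facet of Δ. -/
set_option autoImplicit false
set_option maxHeartbeats 1000000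
set_option synthInstance.maxHeartbeats 400000

section Aux

open SComplex

variable {V : Type} [Fintype V] [DecidableEq V] (k : Type) [Field k]

lemma aux_not_subsingleton (K : SComplex V) (ℓ : ℕ)
    (x : chainSpace k K ℓ) (hx : x ∈ cycles k K ℓ)
    (hnb : x ∉ LinearMap.range (boundary k K ℓ)) :
    ¬ Subsingleton ((cycles k K ℓ) ⧸
      (Submodule.comap (cycles k K ℓ).subtype (LinearMap.range (boundary k K ℓ)))) := by
  intro h
  apply hnb
  have h0 : (Submodule.Quotient.mk (⟨x, hx⟩ : cycles k K ℓ) :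
      (cycles k K ℓ) ⧸ (Submodule.comap (cycles k K ℓ).subtype
        (LinearMap.range (boundary k K ℓ)))) = 0 := Subsingleton.elim _ _
  rw [Submodule.Quotient.mk_eq_zero, Submodule.mem_comap] at h0
  simpa using h0

lemma aux_mem_nerve_iff {r : ℕ} (A : Fin r → Finset V) (i : ℕ) (F : Finset (Fin r)) :
    F ∈ (nerve A i).faces ↔ ∀ hF : F.Nonempty, i ≤ (F.inf' hF A).card := Iff.rfl

end Aux

open SComplex in
/-- If `H̃ᵢ₋₁(N_{j+1}(Δ)) = 0` for all `i, j ≥ 0` with `i + j < m`, then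
`m ≤ s(Δ)`, the minimal cardinality of a facet of `Δ`. -/
theorem le_min_facet_card_of_nerve_vanishing
    {V : Type} [Fintype V] [DecidableEq V] (k : Type) [Field k]
    (K : SComplex V) {r : ℕ} (A : Fin r → Finset V) (hA : K.FacetEnum A)
    (m : ℤ)
    (hvan : ∀ i j : ℕ, (i : ℤ) + (j : ℤ) < m →
      Subsingleton ↥(Hred k (nerve A (j + 1)) ((i : ℤ) - 1))) :
    ∀ a : Fin r, m ≤ ((A a).card : ℤ) := by
  intro a
  by_contra hlt
  push_neg at hlt
  obtain ⟨a₀, -, hmin⟩ := Finset.exists_min_image Finset.univ (fun b : Fin r => (A b).card)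
    ⟨a, Finset.mem_univ a⟩
  have hcm : ((A a₀).card : ℤ) < m :=
    lt_of_le_of_lt (by exact_mod_cast hmin a (Finset.mem_univ a)) hlt
  set c := (A a₀).card with hc
  have hfacet : ∀ b : Fin r, K.IsFacet (A b) := fun b => (hA.2 (A b)).mpr ⟨b, rfl⟩
  by_cases hvert : ∃ b : Fin r, c + 1 ≤ (A b).card
  · -- N_c has an isolated vertex a₀ and another vertex b : H̃₀(N_c) ≠ 0
    obtain ⟨b, hbcard⟩ := hvert
    have hba : b ≠ a₀ := by
      intro h; rw [h] at hbcard; omega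
    have hc1 : 1 ≤ c := by
      by_contra h0
      have hc0 : A a₀ = ∅ := Finset.card_eq_zero.mp (by omega)
      have hEq := (hfacet a₀).2 (A b) (hfacet b).1 (by rw [hc0]; exact Finset.empty_subset _)
      rw [hEq] at hbcard
      omega
    set N := nerve A c with hN
    have hmemsing : ∀ v : Fin r, ({v} : Finset (Fin r)) ∈ N.faces ↔ c ≤ (A v).card := by
      intro v
      rw [hN, aux_mem_nerve_iff]
      constructor
      · intro hm
        have := hm ⟨v, Finset.mem_singleton_self v⟩
        rwa [Finset.inf'_singleton] at this
      · intro hv hF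
        rwa [Finset.inf'_singleton]
    have hfa : ({a₀} : Finset (Fin r)) ∈ N.faces := (hmemsing a₀).mpr le_rfl
    have hfb : ({b} : Finset (Fin r)) ∈ N.faces := (hmemsing b).mpr (by omega)
    have hnoedge : ∀ v : Fin r, v ≠ a₀ → insert v ({a₀} : Finset (Fin r)) ∉ N.faces := by
      intro v hvne hm
      rw [hN, aux_mem_nerve_iff] at hm
      have hne : (insert v ({a₀} : Finset (Fin r))).Nonempty := ⟨v, Finset.mem_insert_self _ _⟩
      have h1 := hm hne
      have hSa : (insert v ({a₀} : Finset (Fin r))).inf' hne A ⊆ A a₀ :=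
        Finset.inf'_le A (Finset.mem_insert_of_mem (Finset.mem_singleton_self a₀))
      have hSv : (insert v ({a₀} : Finset (Fin r))).inf' hne A ⊆ A v :=
        Finset.inf'_le A (Finset.mem_insert_self _ _)
      have hEq : (insert v ({a₀} : Finset (Fin r))).inf' hne A = A a₀ :=
        Finset.eq_of_subset_of_card_le hSa (by rw [← hc]; exact h1)
      have hsub2 : A a₀ ⊆ A v := hEq ▸ hSv
      have := (hfacet a₀).2 (A v) (hfacet v).1 hsub2
      exact hvne (hA.1 this)
    set x : chainSpace k N 1 :=
      fun s => if s.1 = {a₀} then (1 : k) else if s.1 = {b} then -1 else 0 with hx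
    have hxval : ∀ (s : Finset (Fin r)) (hs : s ∈ N.faces ∧ s.card = 1),
        x ⟨s, hs⟩ = if s = {a₀} then (1 : k) else if s = {b} then -1 else 0 := by
      intro s hs; rw [hx]
    have hxcyc : x ∈ cycles k N 1 := by
      show x ∈ LinearMap.ker (boundary k N 0)
      rw [LinearMap.mem_ker]
      funext t
      obtain ⟨t1, ht1⟩ := t
      have ht : t1 = ∅ := Finset.card_eq_zero.mp ht1.2
      subst ht
      simp only [boundary, LinearMap.coe_mk, AddHom.coe_mk, Pi.zero_apply]
      refine Eq.trans (Finset.sum_congr rfl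
        (g := fun v : {y // y ∈ (∅ : Finset (Fin r))ᶜ} =>
          (if (v : Fin r) = a₀ then (1 : k) else 0) +
            (if (v : Fin r) = b then (-1 : k) else 0)) ?_) ?_
      · rintro ⟨w, hw⟩ -
        show _ = (if w = a₀ then (1 : k) else 0) + (if w = b then (-1 : k) else 0)
        have hw1 : insert w (∅ : Finset (Fin r)) = {w} := by simp
        by_cases hf : insert w (∅ : Finset (Fin r)) ∈ N.faces
        · rw [dif_pos hf, hxval]
          simp only [Finset.coe_empty, Set.empty_inter, Set.ncard_empty, pow_zero, one_mul, hw1]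
          rcases eq_or_ne w a₀ with hwa | hwa
          · subst hwa
            simp [Finset.singleton_inj, hba.symm]
          · rcases eq_or_ne w b with hwb | hwb
            · subst hwb
              simp [Finset.singleton_inj, hwa]
            · simp [Finset.singleton_inj, hwa, hwb]
        · rw [dif_neg hf]
          have hwa : w ≠ a₀ := fun h => hf (by rw [hw1, h]; exact hfa)
          have hwb : w ≠ b := fun h => hf (by rw [hw1, h]; exact hfb)
          simp [hwa, hwb]
      · rw [Finset.sum_attach ((∅ : Finset (Fin r))ᶜ)
          (fun w => (if w = a₀ then (1 : k) else 0) + (if w = b then (-1 : k) else 0))]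
        rw [Finset.sum_add_distrib]
        simp [Finset.sum_ite_eq']
    have hxnb : x ∉ LinearMap.range (boundary k N 1) := by
      rintro ⟨g, hg⟩
      have h0 : boundary k N 1 g ⟨{a₀}, hfa, Finset.card_singleton a₀⟩ = 0 := by
        simp only [boundary, LinearMap.coe_mk, AddHom.coe_mk]
        refine Finset.sum_eq_zero ?_
        intro v _
        refine dif_neg (hnoedge v.1 ?_)
        have := Finset.mem_compl.mp v.2
        simpa using this
      rw [hg, hxval] at h0
      simp at h0
    refine aux_not_subsingleton k N 1 x hxcyc hxnb ?_
    have hvs := hvan 1 (c - 1) (by omega)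
    rw [show c - 1 + 1 = c from by omega, ← hN] at hvs
    have h2 : ((1 : ℕ) : ℤ) - 1 = 0 := by norm_num
    rw [h2] at hvs
    simp only [Hred, show ¬((0 : ℤ) < -1) from by norm_num, if_false] at hvs
    exact hvs
  · -- N_{c+1} has no vertices : H̃₋₁ ≠ 0
    push_neg at hvert
    set N := nerve A (c + 1) with hN
    set x : chainSpace k N 0 := fun _ => (1 : k) with hx
    have hxcyc : x ∈ cycles k N 0 := by
      show x ∈ (⊤ : Submodule k (chainSpace k N 0))
      trivial
    have hxnb : x ∉ LinearMap.range (boundary k N 0) := by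
      rintro ⟨g, hg⟩
      have h0 : boundary k N 0 g ⟨∅, N.empty_mem, Finset.card_empty⟩ = 0 := by
        simp only [boundary, LinearMap.coe_mk, AddHom.coe_mk]
        refine Finset.sum_eq_zero ?_
        intro v _
        refine dif_neg ?_
        intro hm
        rw [hN, aux_mem_nerve_iff] at hm
        have hne : (insert v.1 (∅ : Finset (Fin r))).Nonempty :=
          ⟨v.1, Finset.mem_insert_self _ _⟩
        have h2 := hm hne
        have h3 : (insert v.1 (∅ : Finset (Fin r))).inf' hne A ⊆ A v.1 :=
          Finset.inf'_le A (Finset.mem_insert_self _ _)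
        have h4 := le_trans h2 (Finset.card_le_card h3)
        have := hvert v.1
        omega
      rw [hg] at h0
      rw [hx] at h0
      exact one_ne_zero h0
    refine aux_not_subsingleton k N 0 x hxcyc hxnb ?_
    have hvs := hvan 0 c (by omega)
    rw [← hN] at hvs
    have h2 : ((0 : ℕ) : ℤ) - 1 = -1 := by norm_num
    rw [h2] at hvs
    simp only [Hred, show ¬((-1 : ℤ) < -1) from by norm_num, if_false] at hvs
    exact hvs
end

section
/- Let Δ be a simplicial complex of dimension d−1. Then for every k ≥ 1, the h-vector entries of Δ satisfy h_k(Δ) = (−1)^{k−1} Σ_{j≥1} C(d−j, k−1) · χ̃(N_j(Δ)), where C(d−j,k−1) is a binomial coefficient. -/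
set_option autoImplicit false
set_option maxHeartbeats 1000000
set_option synthInstance.maxHeartbeats 400000

section AuxLemmas

open Finset
open scoped Classical

lemma myIccChoose (m : ℕ) : ∀ n : ℕ, ∑ l ∈ Icc 1 n, (l-1).choose m = n.choose (m+1) := by
  intro n
  induction n with
  | zero => simp
  | succ n ih =>
    rw [Finset.sum_Icc_succ_top (by omega), ih, Nat.choose_succ_succ]
    simp [Nat.add_comm]

lemma myIccIf (d n m : ℕ) (hn : n ≤ d) :
    ∑ l ∈ Icc 1 d, (if l ≤ n then (((l-1).choose m : ℤ)) else 0) = (n.choose (m+1) : ℤ) := by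
  rw [← Finset.sum_filter]
  have h1 : (Icc 1 d).filter (· ≤ n) = Icc 1 n := by
    ext x; simp only [mem_filter, mem_Icc]; omega
  rw [h1, ← Nat.cast_sum, myIccChoose]

lemma myKey (p : ℕ) : ∀ n m : ℕ, p ≤ n →
    ∑ t ∈ Finset.range (m+1), (-1:ℤ)^(m-t) * ((n-t).choose (m-t) : ℤ) * (p.choose t : ℤ)
      = (-1)^m * ((n-p).choose m : ℤ) := by
  induction p with
  | zero =>
    intro n m _
    rw [Finset.sum_eq_single 0]
    · simp
    · intro t _ ht
      rcases Nat.exists_eq_succ_of_ne_zero ht with ⟨k, rfl⟩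
      simp
    · simp
  | succ p ih =>
    intro n m h
    match m with
    | 0 => simp
    | m + 1 =>
      rw [Finset.sum_range_succ']
      have e1 : ∀ t, ((p+1).choose (t+1) : ℤ) = (p.choose t : ℤ) + (p.choose (t+1) : ℤ) := by
        intro t; rw [Nat.choose_succ_succ]; push_cast; ring
      have split : ∑ t ∈ Finset.range (m+1),
            (-1:ℤ)^(m+1-(t+1)) * ((n-(t+1)).choose (m+1-(t+1)) : ℤ) * ((p+1).choose (t+1) : ℤ)
          = (∑ t ∈ Finset.range (m+1),
              (-1:ℤ)^(m+1-(t+1)) * ((n-(t+1)).choose (m+1-(t+1)) : ℤ) * (p.choose (t+1) : ℤ))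
            + ∑ t ∈ Finset.range (m+1),
              (-1:ℤ)^(m-t) * (((n-1)-t).choose (m-t) : ℤ) * (p.choose t : ℤ) := by
        rw [← Finset.sum_add_distrib]
        refine Finset.sum_congr rfl fun t _ => ?_
        rw [e1]
        have h2 : m + 1 - (t+1) = m - t := by omega
        have h3 : n - (t+1) = (n-1) - t := by omega
        rw [h2, h3]; ring
      rw [split]
      have hA : (∑ t ∈ Finset.range (m+1),
              (-1:ℤ)^(m+1-(t+1)) * ((n-(t+1)).choose (m+1-(t+1)) : ℤ) * (p.choose (t+1) : ℤ))
            + (-1:ℤ)^(m+1-0) * ((n-0).choose (m+1-0) : ℤ) * ((p+1).choose 0 : ℤ)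
          = (-1)^(m+1) * ((n-p).choose (m+1) : ℤ) := by
        have := ih n (m+1) (by omega)
        rw [Finset.sum_range_succ'] at this
        rw [← this]
        norm_num
      have hB : ∑ t ∈ Finset.range (m+1),
            (-1:ℤ)^(m-t) * (((n-1)-t).choose (m-t) : ℤ) * (p.choose t : ℤ)
          = (-1)^m * (((n-1)-p).choose m : ℤ) := ih (n-1) m (by omega)
      rw [add_right_comm, hA, hB]
      have h4 : (n-1) - p = n - (p+1) := by omega
      have h5 : n - p = (n - (p+1)) + 1 := by omega
      rw [h4, h5, Nat.choose_succ_succ]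
      push_cast; ring

lemma mySumPow {α : Type*} [DecidableEq α] (G : Finset α) :
    ∑ F ∈ G.powerset.filter Finset.Nonempty, (-1:ℤ)^(F.card - 1)
      = if G.Nonempty then 1 else 0 := by
  have h := Finset.sum_powerset_neg_one_pow_card (x := G)
  rw [← Finset.sum_filter_add_sum_filter_not G.powerset Finset.Nonempty] at h
  have h2 : G.powerset.filter (fun F => ¬ F.Nonempty) = {∅} := by
    ext F
    simp only [Finset.mem_filter, Finset.mem_powerset, Finset.not_nonempty_iff_eq_empty,
      Finset.mem_singleton]
    constructor
    · rintro ⟨_, h⟩; exact h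
    · rintro rfl; exact ⟨Finset.empty_subset G, rfl⟩
  rw [h2, Finset.sum_singleton] at h
  simp only [Finset.card_empty, pow_zero] at h
  have h3 : ∑ F ∈ G.powerset.filter Finset.Nonempty, (-1:ℤ)^(F.card - 1)
      = - ∑ F ∈ G.powerset.filter Finset.Nonempty, (-1:ℤ)^(F.card) := by
    rw [← Finset.sum_neg_distrib]
    refine Finset.sum_congr rfl fun F hF => ?_
    simp only [Finset.mem_filter] at hF
    obtain ⟨c, hc2⟩ : ∃ c, F.card = c + 1 :=
      ⟨F.card - 1, by have := Finset.card_pos.mpr hF.2; omega⟩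
    rw [hc2]
    simp [pow_succ]
  by_cases hG : G = ∅
  · subst hG
    rw [Finset.powerset_empty]
    simp [Finset.filter_singleton]
  · rw [h3]
    rw [if_neg hG] at h
    have hsum : ∑ F ∈ G.powerset.filter Finset.Nonempty, (-1:ℤ)^(F.card) = -1 := by linarith
    rw [hsum, if_pos (Finset.nonempty_iff_ne_empty.mpr hG)]
    ring


section Aux2

open Finset
open scoped Classical

variable {V : Type}

lemma myFvec [Fintype V] (K : SComplex V) (h : ℕ) :
    SComplex.fvec K h =
      (univ.filter (fun s : Finset V => s ∈ K.faces ∧ s.card = h + 1)).card := by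
  rw [SComplex.fvec, ← Set.ncard_coe_finset]
  congr 1
  ext s; simp

lemma myEuler [Fintype V] (K : SComplex V) :
    SComplex.euler K =
      ∑ s ∈ univ.filter (fun s : Finset V => s ∈ K.faces ∧ s.Nonempty),
        (-1:ℤ)^(s.card - 1) := by
  rw [← Finset.sum_fiberwise_of_maps_to
    (t := Finset.range (Fintype.card V + 1)) (g := fun s : Finset V => s.card - 1)
    (fun s _ => by
      simp only [Finset.mem_range]
      have : s.card ≤ Fintype.card V := Finset.card_le_univ s
      omega)]
  rw [SComplex.euler]
  refine Finset.sum_congr rfl fun h _ => ?_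
  have hset : (univ.filter (fun s : Finset V => s ∈ K.faces ∧ s.Nonempty)).filter
      (fun s => s.card - 1 = h)
      = univ.filter (fun s : Finset V => s ∈ K.faces ∧ s.card = h + 1) := by
    ext s
    simp only [Finset.mem_filter, Finset.mem_univ, true_and, Finset.nonempty_iff_ne_empty]
    constructor
    · rintro ⟨⟨h1, h2⟩, h3⟩
      have hc : s.card ≠ 0 := fun hc => h2 (Finset.card_eq_zero.mp hc)
      exact ⟨h1, by omega⟩
    · rintro ⟨h1, h2⟩
      have hc : s.card ≠ 0 := by omega
      exact ⟨⟨h1, fun he => hc (by rw [he]; simp)⟩, by omega⟩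
  rw [hset, myFvec]
  have hterm : ∀ s ∈ univ.filter (fun s : Finset V => s ∈ K.faces ∧ s.card = h + 1),
      (-1:ℤ)^(s.card - 1) = (-1:ℤ)^h := by
    intro s hs
    simp only [Finset.mem_filter] at hs
    rw [show s.card - 1 = h by omega]
  rw [Finset.sum_congr rfl hterm, Finset.sum_const]
  simp [mul_comm]

lemma myFaceIff [Fintype V] (K : SComplex V) {r : ℕ} (A : Fin r → Finset V)
    (hA : K.FacetEnum A) (s : Finset V) :
    s ∈ K.faces ↔ ∃ a, s ⊆ A a := by
  constructor
  · intro hs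
    obtain ⟨t, ht, hmax⟩ := Finset.exists_max_image
      (univ.filter fun t : Finset V => t ∈ K.faces ∧ s ⊆ t) Finset.card
      ⟨s, Finset.mem_filter.mpr ⟨Finset.mem_univ s, hs, le_refl s⟩⟩
    rw [Finset.mem_filter] at ht
    have hfacet : K.IsFacet t := by
      refine ⟨ht.2.1, fun u hu htu => ?_⟩
      exact (Finset.eq_of_subset_of_card_le htu
        (hmax u (Finset.mem_filter.mpr ⟨Finset.mem_univ u, hu, ht.2.2.trans htu⟩))).symm
    obtain ⟨a, ha⟩ := (hA.2 t).mp hfacet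
    exact ⟨a, ha ▸ ht.2.2⟩
  · rintro ⟨a, ha⟩
    have hf : K.IsFacet (A a) := (hA.2 (A a)).mpr ⟨a, rfl⟩
    exact K.down_closed hf.1 ha

noncomputable def II [DecidableEq V] {r : ℕ} (A : Fin r → Finset V)
    (F : Finset (Fin r)) : Finset V :=
  if hF : F.Nonempty then F.inf' hF A else ∅

lemma II_of_nonempty [DecidableEq V] {r : ℕ} (A : Fin r → Finset V) {F : Finset (Fin r)}
    (hF : F.Nonempty) : II A F = F.inf' hF A := dif_pos hF

lemma subset_II_iff [DecidableEq V] {r : ℕ} (A : Fin r → Finset V) {F : Finset (Fin r)}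
    (hF : F.Nonempty) (s : Finset V) : s ⊆ II A F ↔ ∀ a ∈ F, s ⊆ A a := by
  rw [II_of_nonempty A hF]
  exact Finset.le_inf'_iff hF A

lemma myNerveEuler [Fintype V] [DecidableEq V] {r : ℕ} (A : Fin r → Finset V) (l : ℕ) :
    SComplex.euler (SComplex.nerve A l) =
      ∑ F ∈ (univ : Finset (Finset (Fin r))).filter Finset.Nonempty,
        (if l ≤ (II A F).card then (-1:ℤ)^(F.card - 1) else 0) := by
  rw [myEuler, ← Finset.sum_filter, Finset.filter_filter]
  congr 1
  ext F
  simp only [Finset.mem_filter, Finset.mem_univ, true_and, SComplex.nerve,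
    Set.mem_setOf_eq]
  constructor
  · rintro ⟨hf, hne⟩
    refine ⟨hne, ?_⟩
    rw [II_of_nonempty A hne]
    exact hf hne
  · rintro ⟨hne, hl⟩
    refine ⟨fun hF => ?_, hne⟩
    rw [II_of_nonempty A hne] at hl
    exact hl

lemma myCount [Fintype V] [DecidableEq V] (K : SComplex V) {r : ℕ} (A : Fin r → Finset V)
    (hA : K.FacetEnum A) (d : ℕ) (hd : ∀ s ∈ K.faces, s.card ≤ d)
    (m : ℕ) (hm : 1 ≤ m) :
    (SComplex.fvec K (m-1) : ℤ)
      = (d.choose m : ℤ) + ∑ l ∈ Icc 1 d, ((l-1).choose (m-1) : ℤ)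
          * SComplex.reducedEuler (SComplex.nerve A l) := by
  set NE := (univ : Finset (Finset (Fin r))).filter Finset.Nonempty with hNE
  have cardII : ∀ F ∈ NE, (II A F).card ≤ d := by
    intro F hF
    rw [hNE, Finset.mem_filter] at hF
    obtain ⟨a, ha⟩ := hF.2
    have h1 : II A F ⊆ A a := by
      rw [II_of_nonempty A hF.2]
      exact Finset.inf'_le A ha
    have h2 : A a ∈ K.faces := ((hA.2 (A a)).mpr ⟨a, rfl⟩).1
    exact le_trans (Finset.card_le_card h1) (hd _ h2)
  -- Step B : inclusion-exclusion count
  have stepB : (SComplex.fvec K (m-1) : ℤ)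
      = ∑ F ∈ NE, (-1:ℤ)^(F.card - 1) * ((II A F).card.choose m : ℤ) := by
    have hchoose : ∀ F ∈ NE, (((II A F).card.choose m : ℕ) : ℤ)
        = ∑ s ∈ univ.filter (fun s : Finset V => s.card = m),
            (if s ⊆ II A F then (1:ℤ) else 0) := by
      intro F hF
      rw [Finset.sum_boole]
      have hps : (univ.filter (fun s : Finset V => s.card = m)).filter
          (fun s => s ⊆ II A F) = Finset.powersetCard m (II A F) := by
        ext s
        simp [Finset.mem_powersetCard, and_comm]
      rw [hps, Finset.card_powersetCard]
    rw [Finset.sum_congr rfl (fun F hF => by rw [hchoose F hF])]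
    have hmul : ∀ F ∈ NE, (-1:ℤ)^(F.card - 1) *
          (∑ s ∈ univ.filter (fun s : Finset V => s.card = m),
            (if s ⊆ II A F then (1:ℤ) else 0))
        = ∑ s ∈ univ.filter (fun s : Finset V => s.card = m),
            (if s ⊆ II A F then (-1:ℤ)^(F.card - 1) else 0) := by
      intro F _
      rw [Finset.mul_sum]
      exact Finset.sum_congr rfl fun s _ => by rw [mul_ite, mul_one, mul_zero]
    rw [Finset.sum_congr rfl hmul, Finset.sum_comm]
    have inner : ∀ s : Finset V,
        (∑ F ∈ NE, if s ⊆ II A F then (-1:ℤ)^(F.card - 1) else 0)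
          = if s ∈ K.faces then 1 else 0 := by
      intro s
      have hsub : ∀ F ∈ NE, (s ⊆ II A F ↔ F ⊆ univ.filter (fun a : Fin r => s ⊆ A a)) := by
        intro F hF
        rw [hNE, Finset.mem_filter] at hF
        rw [subset_II_iff A hF.2]
        constructor
        · intro h a haF
          exact Finset.mem_filter.mpr ⟨Finset.mem_univ a, h a haF⟩
        · intro h a haF
          exact (Finset.mem_filter.mp (h haF)).2
      rw [Finset.sum_congr rfl (fun F hF => if_congr (hsub F hF) rfl rfl)]
      rw [← Finset.sum_filter]
      have hflt : NE.filter (· ⊆ univ.filter (fun a : Fin r => s ⊆ A a))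
          = (univ.filter (fun a : Fin r => s ⊆ A a)).powerset.filter Finset.Nonempty := by
        ext F
        simp only [hNE, Finset.mem_filter, Finset.mem_univ, true_and,
          Finset.mem_powerset]
        exact and_comm
      rw [hflt, mySumPow]
      have hiff : (univ.filter (fun a : Fin r => s ⊆ A a)).Nonempty ↔ s ∈ K.faces := by
        rw [myFaceIff K A hA s]
        constructor
        · rintro ⟨a, ha⟩; exact ⟨a, (Finset.mem_filter.mp ha).2⟩
        · rintro ⟨a, ha⟩; exact ⟨a, Finset.mem_filter.mpr ⟨Finset.mem_univ a, ha⟩⟩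
      rw [if_congr hiff rfl rfl]
    rw [Finset.sum_congr rfl (fun s _ => inner s), Finset.sum_boole, myFvec,
      show m - 1 + 1 = m by omega]
    congr 1
    rw [Finset.filter_filter]
    congr 1
    ext s
    simp only [Finset.mem_filter, Finset.mem_univ, true_and]
    exact and_comm
  -- Step C : split binomial coefficient over levels
  have stepC : ∀ F ∈ NE, ((II A F).card.choose m : ℤ)
      = ∑ l ∈ Icc 1 d, (if l ≤ (II A F).card then ((l-1).choose (m-1) : ℤ) else 0) := by
    intro F hF
    rw [myIccIf d _ (m-1) (cardII F hF), show m - 1 + 1 = m by omega]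
  rw [stepB, Finset.sum_congr rfl (fun F hF => by rw [stepC F hF])]
  have hmul2 : ∀ F ∈ NE, (-1:ℤ)^(F.card - 1) *
        (∑ l ∈ Icc 1 d, if l ≤ (II A F).card then ((l-1).choose (m-1) : ℤ) else 0)
      = ∑ l ∈ Icc 1 d,
          (if l ≤ (II A F).card then (-1:ℤ)^(F.card - 1) else 0) * ((l-1).choose (m-1) : ℤ) := by
    intro F _
    rw [Finset.mul_sum]
    refine Finset.sum_congr rfl fun l _ => ?_
    rw [mul_ite, ite_mul, zero_mul, mul_zero, mul_comm]
  rw [Finset.sum_congr rfl hmul2, Finset.sum_comm]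
  have hsum_l : ∀ l ∈ Icc 1 d,
      (∑ F ∈ NE, (if l ≤ (II A F).card then (-1:ℤ)^(F.card - 1) else 0)
          * ((l-1).choose (m-1) : ℤ))
        = ((l-1).choose (m-1) : ℤ) * (SComplex.reducedEuler (SComplex.nerve A l) + 1) := by
    intro l _
    rw [← Finset.sum_mul, ← myNerveEuler A l, SComplex.reducedEuler]
    ring
  rw [Finset.sum_congr rfl hsum_l]
  have expand : ∑ l ∈ Icc 1 d, ((l-1).choose (m-1) : ℤ)
        * (SComplex.reducedEuler (SComplex.nerve A l) + 1)
      = (∑ l ∈ Icc 1 d, ((l-1).choose (m-1) : ℤ))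
        + ∑ l ∈ Icc 1 d, ((l-1).choose (m-1) : ℤ)
            * SComplex.reducedEuler (SComplex.nerve A l) := by
    rw [← Finset.sum_add_distrib]
    refine Finset.sum_congr rfl fun l _ => by ring
  rw [expand, ← Nat.cast_sum, myIccChoose, show m - 1 + 1 = m by omega]

end Aux2


open SComplex in
/-- The `h`-vector formula: for `k ≥ 1`,
`h_k(Δ) = (-1)^{k-1} Σ_{j ≥ 1} C(d-j, k-1) χ̃(N_j(Δ))`. -/
theorem hvec_eq_sum_nerve_reducedEuler
    {V : Type} [Fintype V] [DecidableEq V]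
    (K : SComplex V) {r : ℕ} (A : Fin r → Finset V) (hA : K.FacetEnum A)
    (d : ℕ) (hd : ∀ s ∈ K.faces, s.card ≤ d) (hd' : ∃ s ∈ K.faces, s.card = d)
    (j : ℕ) (hj1 : 1 ≤ j) (hjd : j ≤ d) :
    hvec K d j = (-1) ^ (j - 1) *
      ∑ l ∈ Finset.Icc 1 d, ((d - l).choose (j - 1) : ℤ) *
        reducedEuler (nerve A l) := by
  classical
  rw [SComplex.hvec]
  have hterm : ∀ i ∈ Finset.range (j+1),
      (-1:ℤ)^(j-i) * ((d-i).choose (j-i) : ℤ)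
          * (if i = 0 then 1 else (SComplex.fvec K (i-1) : ℤ))
        = (-1:ℤ)^(j-i) * ((d-i).choose (j-i) : ℤ) * (d.choose i : ℤ)
          + (if i = 0 then 0 else (-1:ℤ)^(j-i) * ((d-i).choose (j-i) : ℤ)
              * ∑ l ∈ Finset.Icc 1 d, ((l-1).choose (i-1) : ℤ)
                  * SComplex.reducedEuler (SComplex.nerve A l)) := by
    intro i _
    by_cases hi : i = 0
    · subst hi; simp
    · rw [if_neg hi, if_neg hi, myCount K A hA d hd i (by omega)]
      ring
  rw [Finset.sum_congr rfl hterm, Finset.sum_add_distrib]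
  have hS1 : ∑ i ∈ Finset.range (j+1),
      (-1:ℤ)^(j-i) * ((d-i).choose (j-i) : ℤ) * (d.choose i : ℤ) = 0 := by
    rw [myKey d d j (le_refl d), Nat.sub_self, Nat.choose_eq_zero_of_lt (by omega)]
    simp
  rw [hS1, zero_add, Finset.sum_range_succ', if_pos rfl, add_zero]
  have hterm2 : ∀ t ∈ Finset.range j,
      (if t+1 = 0 then 0 else (-1:ℤ)^(j-(t+1)) * ((d-(t+1)).choose (j-(t+1)) : ℤ)
          * ∑ l ∈ Finset.Icc 1 d, ((l-1).choose (t+1-1) : ℤ)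
              * SComplex.reducedEuler (SComplex.nerve A l))
        = ∑ l ∈ Finset.Icc 1 d, (-1:ℤ)^((j-1)-t) * (((d-1)-t).choose ((j-1)-t) : ℤ)
            * (((l-1).choose t : ℤ) * SComplex.reducedEuler (SComplex.nerve A l)) := by
    intro t _
    rw [if_neg (Nat.succ_ne_zero t), show j - (t+1) = (j-1) - t by omega,
      show d - (t+1) = (d-1) - t by omega, show t + 1 - 1 = t by omega,
      Finset.mul_sum]
  rw [Finset.sum_congr rfl hterm2, Finset.sum_comm]
  have hfin : ∀ l ∈ Finset.Icc 1 d,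
      ∑ t ∈ Finset.range j, (-1:ℤ)^((j-1)-t) * (((d-1)-t).choose ((j-1)-t) : ℤ)
          * (((l-1).choose t : ℤ) * SComplex.reducedEuler (SComplex.nerve A l))
        = (-1:ℤ)^(j-1)
            * (((d-l).choose (j-1) : ℤ) * SComplex.reducedEuler (SComplex.nerve A l)) := by
    intro l hl
    rw [Finset.mem_Icc] at hl
    have h1 := myKey (l-1) (d-1) (j-1) (by omega)
    rw [show j - 1 + 1 = j by omega] at h1
    rw [show (d-1) - (l-1) = d - l by omega] at h1
    have h3 : ∑ t ∈ Finset.range j, (-1:ℤ)^((j-1)-t) * (((d-1)-t).choose ((j-1)-t) : ℤ)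
          * (((l-1).choose t : ℤ) * SComplex.reducedEuler (SComplex.nerve A l))
        = (∑ t ∈ Finset.range j, (-1:ℤ)^((j-1)-t) * (((d-1)-t).choose ((j-1)-t) : ℤ)
            * ((l-1).choose t : ℤ)) * SComplex.reducedEuler (SComplex.nerve A l) := by
      rw [Finset.sum_mul]
      exact Finset.sum_congr rfl fun t _ => by ring
    rw [h3, h1]
    ring
  rw [Finset.sum_congr rfl hfin, Finset.mul_sum]
end AuxLemmas
end

section
/- Let Δ_1 and Δ_2 be simplicial complexes such that H̃_{i−1}(N_j(Δ_1)) ≅ H̃_{i−1}(N_j(Δ_2)) for all i and all j ≥ 1. Then Δ_1 and Δ_2 have identical f-vectors and identical h-vectors. -/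
set_option autoImplicit false
set_option maxHeartbeats 1000000
set_option synthInstance.maxHeartbeats 400000

namespace SCAux
open SComplex

variable {V : Type}

/-- The sign used in the boundary map. -/
noncomputable def sgn (k : Type) [Field k] (t : Finset V) (v : V) : k :=
  (-1 : k) ^ (((↑t : Set V) ∩ {w | WellOrderingRel w v}).ncard)

open Classical in
/-- Evaluation of a chain on an arbitrary finset (zero if not a face of the right size). -/
noncomputable def cval (k : Type) [Field k] (K : SComplex V) (ℓ : ℕ)
    (g : chainSpace k K ℓ) (s : Finset V) : k :=
  if h : s ∈ K.faces ∧ s.card = ℓ then g ⟨s, h⟩ else 0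

open Classical in
/-- A single term of the boundary map, as a function of an arbitrary vertex. -/
noncomputable def bterm (k : Type) [Field k] [DecidableEq V] (K : SComplex V) (ℓ : ℕ)
    (g : chainSpace k K (ℓ + 1)) (t : Finset V) (v : V) : k :=
  if v ∈ t then 0 else sgn k t v * cval k K (ℓ + 1) g (insert v t)

lemma bterm_of_not_face (k : Type) [Field k] [DecidableEq V] (K : SComplex V) (ℓ : ℕ)
    (g : chainSpace k K (ℓ + 1)) (t : Finset V) (v : V)
    (h : insert v t ∉ K.faces) : bterm k K ℓ g t v = 0 := by
  rw [bterm, cval, dif_neg (fun hc => h hc.1)]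
  simp

lemma boundary_apply {V : Type} [Fintype V] [DecidableEq V] (k : Type) [Field k]
    (K : SComplex V) (ℓ : ℕ) (g : chainSpace k K (ℓ + 1))
    (t : {s : Finset V // s ∈ K.faces ∧ s.card = ℓ}) :
    boundary k K ℓ g t = ∑ v ∈ Finset.univ, bterm k K ℓ g t.1 v := by
  classical
  show (∑ v ∈ t.1ᶜ.attach, _) = _
  rw [show (∑ v ∈ t.1ᶜ.attach,
      if h : insert v.1 t.1 ∈ K.faces then
        ((-1 : k) ^ (((↑t.1 : Set V) ∩ {w | WellOrderingRel w v.1}).ncard)) *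
          g ⟨insert v.1 t.1, h, by
            rw [Finset.card_insert_of_notMem (Finset.mem_compl.mp v.2), t.2.2]⟩
      else 0) = ∑ v ∈ t.1ᶜ.attach, bterm k K ℓ g t.1 v.1 from
    Finset.sum_congr rfl fun v _ => ?_, Finset.sum_attach,
    ← Finset.sum_subset (Finset.subset_univ t.1ᶜ) ?_]
  · intro x _ hx
    rw [bterm, if_pos (by simpa using hx)]
  · have hv : v.1 ∉ t.1 := Finset.mem_compl.mp v.2
    rw [bterm, if_neg hv, cval, sgn]
    by_cases h : insert v.1 t.1 ∈ K.faces
    · rw [dif_pos h, dif_pos ⟨h, by rw [Finset.card_insert_of_notMem hv, t.2.2]⟩]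
    · rw [dif_neg h, dif_neg (fun hc => h hc.1), mul_zero]

lemma sgn_mul_sgn (k : Type) [Field k] [DecidableEq V] {t : Finset V} {v w : V}
    (hw : w ∉ t) (hr : WellOrderingRel w v) :
    sgn k t v * sgn k (insert v t) w = -(sgn k t w * sgn k (insert w t) v) := by
  classical
  haveI : IsWellOrder V WellOrderingRel := WellOrderingRel.isWellOrder
  have hasymm : ¬ WellOrderingRel v w := fun h =>
    (Std.Irrefl.irrefl (r := WellOrderingRel) w) (IsTrans.trans _ _ _ hr h)
  have h1 : ((↑(insert v t) : Set V) ∩ {x | WellOrderingRel x w}) =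
      ((↑t : Set V) ∩ {x | WellOrderingRel x w}) := by
    rw [Finset.coe_insert]
    exact Set.insert_inter_of_notMem (show v ∉ {x | WellOrderingRel x w} from hasymm)
  have h2 : ((↑(insert w t) : Set V) ∩ {x | WellOrderingRel x v}) =
      insert w ((↑t : Set V) ∩ {x | WellOrderingRel x v}) := by
    rw [Finset.coe_insert]
    exact Set.insert_inter_of_mem (show w ∈ {x | WellOrderingRel x v} from hr)
  have h3 : (insert w ((↑t : Set V) ∩ {x | WellOrderingRel x v})).ncard =
      ((↑t : Set V) ∩ {x | WellOrderingRel x v}).ncard + 1 := by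
    rw [Set.ncard_insert_of_notMem (fun hc => hw (by exact_mod_cast hc.1))
      (t.finite_toSet.inter_of_left _)]
  rw [sgn, sgn, sgn, sgn, h1, h2, h3, pow_succ]
  ring

lemma sgn_skew (k : Type) [Field k] [DecidableEq V] {t : Finset V} {v w : V}
    (hv : v ∉ t) (hw : w ∉ t) (hvw : v ≠ w) :
    sgn k t v * sgn k (insert v t) w = -(sgn k t w * sgn k (insert w t) v) := by
  haveI : IsWellOrder V WellOrderingRel := WellOrderingRel.isWellOrder
  rcases trichotomous_of WellOrderingRel v w with h | h | h
  · rw [sgn_mul_sgn k hv h, neg_neg]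
  · exact absurd h hvw
  · exact sgn_mul_sgn k hw h

end SCAux
namespace SCAux
open SComplex

variable {V : Type}

open Classical in
noncomputable def dterm (k : Type) [Field k] [DecidableEq V] (K : SComplex V) (ℓ : ℕ)
    (g : chainSpace k K (ℓ + 2)) (t : Finset V) (v w : V) : k :=
  if v ∈ t then 0 else sgn k t v * bterm k K (ℓ + 1) g (insert v t) w

lemma dterm_diag (k : Type) [Field k] [DecidableEq V] (K : SComplex V) (ℓ : ℕ)
    (g : chainSpace k K (ℓ + 2)) (t : Finset V) (v : V) : dterm k K ℓ g t v v = 0 := by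
  rw [dterm]
  by_cases h : v ∈ t
  · rw [if_pos h]
  · rw [if_neg h, bterm, if_pos (Finset.mem_insert_self v t), mul_zero]

lemma dterm_skew (k : Type) [Field k] [DecidableEq V] (K : SComplex V) (ℓ : ℕ)
    (g : chainSpace k K (ℓ + 2)) (t : Finset V) (v w : V) :
    dterm k K ℓ g t v w + dterm k K ℓ g t w v = 0 := by
  classical
  by_cases hvw : v = w
  · rw [hvw, dterm_diag, add_zero]
  rw [dterm, dterm]
  by_cases hv : v ∈ t <;> by_cases hw : w ∈ t
  · rw [if_pos hv, if_pos hw, add_zero]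
  · rw [if_pos hv, if_neg hw, zero_add, bterm, if_pos (Finset.mem_insert_of_mem hv), mul_zero]
  · rw [if_neg hv, if_pos hw, add_zero, bterm, if_pos (Finset.mem_insert_of_mem hw), mul_zero]
  · rw [if_neg hv, if_neg hw, bterm, bterm,
      if_neg (by simp only [Finset.mem_insert, not_or]; exact ⟨fun h => hvw h.symm, hw⟩),
      if_neg (by simp only [Finset.mem_insert, not_or]; exact ⟨hvw, hv⟩),
      show insert v (insert w t) = insert w (insert v t) from Finset.insert_comm v w t,
      ← mul_assoc, ← mul_assoc, ← add_mul, sgn_skew k hv hw hvw]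
    ring

lemma boundary_boundary {V : Type} [Fintype V] [DecidableEq V] (k : Type) [Field k]
    (K : SComplex V) (ℓ : ℕ) (g : chainSpace k K (ℓ + 2))
    (t : {s : Finset V // s ∈ K.faces ∧ s.card = ℓ}) :
    boundary k K ℓ (boundary k K (ℓ + 1) g) t = 0 := by
  classical
  rw [boundary_apply]
  have hterm : ∀ v ∈ (Finset.univ : Finset V),
      bterm k K ℓ (boundary k K (ℓ + 1) g) t.1 v = ∑ w ∈ Finset.univ, dterm k K ℓ g t.1 v w := by
    intro v _
    rw [bterm]
    by_cases hv : v ∈ t.1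
    · rw [if_pos hv]
      exact (Finset.sum_eq_zero fun w _ => by rw [dterm, if_pos hv]).symm
    · rw [if_neg hv, cval]
      have hsum : ∀ w ∈ (Finset.univ : Finset V), dterm k K ℓ g t.1 v w =
          sgn k t.1 v * bterm k K (ℓ + 1) g (insert v t.1) w := fun w _ => by
        rw [dterm, if_neg hv]
      rw [Finset.sum_congr rfl hsum, ← Finset.mul_sum]
      congr 1
      by_cases hface : insert v t.1 ∈ K.faces
      · have hcond : insert v t.1 ∈ K.faces ∧ (insert v t.1).card = ℓ + 1 :=
          ⟨hface, by rw [Finset.card_insert_of_notMem hv, t.2.2]⟩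
        rw [dif_pos hcond]
        exact boundary_apply k K (ℓ + 1) g ⟨insert v t.1, hcond⟩
      · rw [dif_neg (fun hc => hface hc.1)]
        exact (Finset.sum_eq_zero fun w _ => bterm_of_not_face k K (ℓ + 1) g _ w
          (fun hc => hface (K.down_closed hc (Finset.subset_insert _ _)))).symm
  rw [Finset.sum_congr rfl hterm, ← Finset.sum_product']
  refine Finset.sum_ninvolution (fun p => (p.2, p.1))
    (fun p => dterm_skew k K ℓ g t.1 p.1 p.2)
    (fun p hne heq => hne ?_) (fun p => Finset.mem_univ _) (fun p => rfl)
  have h12 : p.2 = p.1 := congrArg Prod.fst heq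
  show dterm k K ℓ g t.1 p.1 p.2 = 0
  rw [← h12]
  exact dterm_diag k K ℓ g t.1 p.2

lemma range_boundary_le_cycles {V : Type} [Fintype V] [DecidableEq V] (k : Type) [Field k]
    (K : SComplex V) (ℓ : ℕ) :
    LinearMap.range (boundary k K ℓ) ≤ cycles k K ℓ := by
  cases ℓ with
  | zero => exact le_top
  | succ n =>
    rintro x ⟨g, rfl⟩
    show boundary k K n (boundary k K (n + 1) g) = 0
    funext t
    exact boundary_boundary k K n g t

end SCAux
namespace SCAux
open SComplex

section Dim
variable {V : Type} [Fintype V] [DecidableEq V] (k : Type) [Field k] (K : SComplex V)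

instance chainFD (ℓ : ℕ) : FiniteDimensional k (chainSpace k K ℓ) := by
  have : Finite {s : Finset V // s ∈ K.faces ∧ s.card = ℓ} := Subtype.finite
  infer_instance

noncomputable def cdim (ℓ : ℕ) : ℕ := Module.finrank k (chainSpace k K ℓ)
noncomputable def zdim (ℓ : ℕ) : ℕ := Module.finrank k ↥(cycles k K ℓ)
noncomputable def bdim (ℓ : ℕ) : ℕ := Module.finrank k ↥(LinearMap.range (boundary k K ℓ))

lemma cdim_eq (ℓ : ℕ) : cdim k K ℓ = Set.ncard {s : Finset V | s ∈ K.faces ∧ s.card = ℓ} := by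
  classical
  haveI := Fintype.ofFinite {s : Finset V // s ∈ K.faces ∧ s.card = ℓ}
  rw [cdim, Module.finrank_pi, ← Nat.card_eq_fintype_card]
  exact Nat.card_coe_set_eq _

lemma cdim_zero : cdim k K 0 = 1 := by
  rw [cdim_eq]
  have : {s : Finset V | s ∈ K.faces ∧ s.card = 0} = {∅} := by
    ext s
    simp only [Set.mem_setOf_eq, Set.mem_singleton_iff, Finset.card_eq_zero]
    exact ⟨fun h => h.2, fun h => ⟨h ▸ K.empty_mem, h⟩⟩
  rw [this, Set.ncard_singleton]

lemma cdim_succ (ℓ : ℕ) : cdim k K (ℓ + 1) = fvec K ℓ := by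
  rw [cdim_eq, fvec]

lemma cdim_vanish (ℓ : ℕ) (h : Fintype.card V < ℓ) : cdim k K ℓ = 0 := by
  rw [cdim_eq]
  have : {s : Finset V | s ∈ K.faces ∧ s.card = ℓ} = ∅ := by
    ext s
    simp only [Set.mem_setOf_eq, Set.mem_empty_iff_false, iff_false, not_and]
    intro _ hc
    exact absurd (hc ▸ s.card_le_univ) (by omega)
  rw [this, Set.ncard_empty]

lemma fvec_vanish (h : ℕ) (hh : Fintype.card V < h + 1) : fvec K h = 0 := by
  rw [fvec]
  have : {s : Finset V | s ∈ K.faces ∧ s.card = h + 1} = ∅ := by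
    ext s
    simp only [Set.mem_setOf_eq, Set.mem_empty_iff_false, iff_false, not_and]
    intro _ hc
    exact absurd (hc ▸ s.card_le_univ) (by omega)
  rw [this, Set.ncard_empty]

lemma zdim_zero : zdim k K 0 = cdim k K 0 := by
  rw [zdim, cdim]
  exact finrank_top k (chainSpace k K 0)

lemma rank_nullity (ℓ : ℕ) : cdim k K (ℓ + 1) = bdim k K ℓ + zdim k K (ℓ + 1) := by
  rw [cdim, bdim, zdim]
  exact (LinearMap.finrank_range_add_finrank_ker (boundary k K ℓ)).symm

lemma bdim_vanish (ℓ : ℕ) (h : Fintype.card V ≤ ℓ) : bdim k K ℓ = 0 := by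
  have h1 : bdim k K ℓ ≤ cdim k K (ℓ + 1) := LinearMap.finrank_range_le _
  have h2 : cdim k K (ℓ + 1) = 0 := cdim_vanish k K (ℓ + 1) (by omega)
  omega

lemma hdim_add_bdim (ℓ : ℕ) :
    Module.finrank k ↥(Hred k K ((ℓ : ℤ) - 1)) + bdim k K ℓ = zdim k K ℓ := by
  have he : Hred k K ((ℓ : ℤ) - 1) = ModuleCat.of k
      ((cycles k K ℓ) ⧸ (Submodule.comap (cycles k K ℓ).subtype
        (LinearMap.range (boundary k K ℓ)))) := by
    have h2 : ((ℓ : ℤ) - 1 + 1).toNat = ℓ := by omega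
    rw [Hred, if_neg (show ¬((ℓ : ℤ) - 1 < -1) by omega)]
    exact congrArg (fun n : ℕ => ModuleCat.of k
      (↥(cycles k K n) ⧸ Submodule.comap (cycles k K n).subtype
        (LinearMap.range (boundary k K n)))) h2
  rw [he]
  have hle := range_boundary_le_cycles k K ℓ
  have h1 := Submodule.finrank_quotient_add_finrank (R := k) (M := ↥(cycles k K ℓ))
    (Submodule.comap (cycles k K ℓ).subtype (LinearMap.range (boundary k K ℓ)))
  have h2 : Module.finrank k ↥(Submodule.comap (cycles k K ℓ).subtype
      (LinearMap.range (boundary k K ℓ))) = bdim k K ℓ :=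
    LinearEquiv.finrank_eq (Submodule.comapSubtypeEquivOfLe hle)
  rw [h2] at h1
  exact h1

lemma tele (T : ℕ) :
    ∑ ℓ ∈ Finset.range (T + 1), (-1 : ℤ) ^ ℓ * (Module.finrank k ↥(Hred k K ((ℓ : ℤ) - 1)) : ℤ)
      = ∑ ℓ ∈ Finset.range (T + 1), (-1 : ℤ) ^ ℓ * (cdim k K ℓ : ℤ)
        - (-1 : ℤ) ^ T * (bdim k K T : ℤ) := by
  induction T with
  | zero =>
    have h1 := hdim_add_bdim k K 0
    have h2 := zdim_zero k K
    norm_num [Finset.sum_range_one] at h1 ⊢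
    omega
  | succ n ih =>
    rw [Finset.sum_range_succ
        (fun ℓ => (-1 : ℤ) ^ ℓ * (Module.finrank k ↥(Hred k K ((ℓ : ℤ) - 1)) : ℤ)) (n + 1),
      Finset.sum_range_succ (fun ℓ => (-1 : ℤ) ^ ℓ * (cdim k K ℓ : ℤ)) (n + 1), ih]
    have e1 : (Module.finrank k ↥(Hred k K (((n + 1 : ℕ) : ℤ) - 1)) : ℤ)
        = (zdim k K (n + 1) : ℤ) - (bdim k K (n + 1) : ℤ) := by
      have := hdim_add_bdim k K (n + 1)
      omega
    have e2 : (cdim k K (n + 1) : ℤ) = (bdim k K n : ℤ) + (zdim k K (n + 1) : ℤ) := by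
      have := rank_nullity k K n
      omega
    rw [e1, e2, pow_succ]
    ring

lemma euler_eq_one_sub_hsum (T : ℕ) (hT : Fintype.card V + 1 ≤ T) :
    euler K = 1 - ∑ ℓ ∈ Finset.range (T + 1),
      (-1 : ℤ) ^ ℓ * (Module.finrank k ↥(Hred k K ((ℓ : ℤ) - 1)) : ℤ) := by
  rw [tele, bdim_vanish k K T (by omega)]
  rw [Finset.sum_range_succ' (fun ℓ => (-1 : ℤ) ^ ℓ * (cdim k K ℓ : ℤ)) T]
  have h0 : (-1 : ℤ) ^ 0 * (cdim k K 0 : ℤ) = 1 := by rw [cdim_zero]; ring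
  have hstep : ∀ i ∈ Finset.range T, (-1 : ℤ) ^ (i + 1) * (cdim k K (i + 1) : ℤ)
      = -((-1 : ℤ) ^ i * (fvec K i : ℤ)) := by
    intro i _
    rw [cdim_succ, pow_succ]
    ring
  rw [Finset.sum_congr rfl hstep, Finset.sum_neg_distrib]
  have heuler : euler K = ∑ i ∈ Finset.range T, (-1 : ℤ) ^ i * (fvec K i : ℤ) := by
    rw [euler]
    refine Finset.sum_subset (Finset.range_subset_range.mpr (by omega)) ?_
    intro x _ hx
    rw [fvec_vanish K x (by simp at hx ⊢; omega)]
    ring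
  rw [← heuler, cdim_zero]
  push_cast
  ring

end Dim
end SCAux
namespace SCAux
open SComplex

section Comb
variable {V : Type} [Fintype V] [DecidableEq V]

lemma fvec_eq_card (K : SComplex V) [DecidablePred (· ∈ K.faces)] (i : ℕ) :
    fvec K i = (Finset.univ.filter (fun s : Finset V => s ∈ K.faces ∧ s.card = i + 1)).card := by
  rw [fvec, ← Set.ncard_coe_finset]
  congr 1
  ext s
  simp

lemma euler_eq_sum_faces (K : SComplex V) [DecidablePred (· ∈ K.faces)] :
    euler K = ∑ S ∈ Finset.univ.filter (fun S : Finset V => S ∈ K.faces ∧ S ≠ ∅),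
      (-1 : ℤ) ^ (S.card - 1) := by
  classical
  rw [euler, ← Finset.sum_fiberwise_of_maps_to (g := fun S : Finset V => S.card - 1)
      (t := Finset.range (Fintype.card V + 1))
      (fun S hS => by
        simp only [Finset.mem_range]
        have := S.card_le_univ
        omega)
      (fun S => (-1 : ℤ) ^ (S.card - 1))]
  refine Finset.sum_congr rfl fun h _ => ?_
  have hfil : (Finset.univ.filter (fun S : Finset V => S ∈ K.faces ∧ S ≠ ∅)).filter
      (fun S => S.card - 1 = h) =
      Finset.univ.filter (fun s : Finset V => s ∈ K.faces ∧ s.card = h + 1) := by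
    ext S
    simp only [Finset.mem_filter, Finset.mem_univ, true_and]
    constructor
    · rintro ⟨⟨h1, h2⟩, h3⟩
      have : S.card ≠ 0 := fun hc => h2 (Finset.card_eq_zero.mp hc)
      exact ⟨h1, by omega⟩
    · rintro ⟨h1, h2⟩
      refine ⟨⟨h1, fun hc => ?_⟩, by omega⟩
      rw [hc, Finset.card_empty] at h2
      omega
  rw [hfil, fvec_eq_card]
  rw [Finset.sum_congr rfl (fun S hS => show (-1 : ℤ) ^ (S.card - 1) = (-1 : ℤ) ^ h by
    have h2 : S.card = h + 1 := (Finset.mem_filter.mp hS).2.2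
    rw [show S.card - 1 = h by omega])]
  rw [Finset.sum_const, nsmul_eq_mul, mul_comm]

lemma hockey (i : ℕ) (hi : 1 ≤ i) (m : ℕ) :
    ∑ j ∈ Finset.Icc i m, (j - 1).choose (i - 1) = m.choose i := by
  induction m with
  | zero =>
    rw [Finset.Icc_eq_empty (by omega), Finset.sum_empty,
      Nat.choose_eq_zero_of_lt (by omega)]
  | succ n ih =>
    by_cases h : i ≤ n + 1
    · rw [← Finset.insert_Icc_right_eq_Icc_add_one h, Finset.sum_insert (by simp), ih]
      have h2 : i = (i - 1) + 1 := by omega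
      rw [show n + 1 - 1 = n from rfl, h2, Nat.choose_succ_succ]
      rw [show i - 1 + 1 - 1 = i - 1 from rfl, ← h2, Nat.succ_eq_add_one, ← h2]
    · rw [Finset.Icc_eq_empty (by omega), Finset.sum_empty,
        Nat.choose_eq_zero_of_lt (by omega)]

lemma exists_facet_index {K : SComplex V} {r : ℕ} {A : Fin r → Finset V} (hA : K.FacetEnum A)
    {s : Finset V} (hs : s ∈ K.faces) : ∃ a, s ⊆ A a := by
  have hfin : {t : Finset V | t ∈ K.faces ∧ s ⊆ t}.Finite := Set.toFinite _
  obtain ⟨t, ht, hmax⟩ := Set.Finite.exists_maximalFor Finset.card _ hfin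
    ⟨s, hs, subset_rfl⟩
  have hfacet : K.IsFacet t := by
    refine ⟨ht.1, fun u hu htu => ?_⟩
    have hc : u.card ≤ t.card := hmax (j := u) ⟨hu, ht.2.trans htu⟩ (Finset.card_le_card htu)
    exact (Finset.eq_of_subset_of_card_le htu (by omega)).symm
  obtain ⟨a, ha⟩ := (hA.2 t).mp hfacet
  exact ⟨a, ha ▸ ht.2⟩

end Comb
end SCAux
namespace SCAux
open SComplex

section Key
variable {V : Type} [Fintype V] [DecidableEq V]

noncomputable def mfun {r : ℕ} (A : Fin r → Finset V) (S : Finset (Fin r)) : ℕ :=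
  if h : S.Nonempty then (S.inf' h A).card else 0

def tfun {r : ℕ} (A : Fin r → Finset V) (F : Finset V) : Finset (Fin r) :=
  Finset.univ.filter (fun a => F ⊆ A a)

lemma powerset_erase_sum {α : Type} [DecidableEq α] (T : Finset α) :
    ∑ S ∈ T.powerset.erase ∅, (-1 : ℤ) ^ (S.card - 1) = if T = ∅ then 0 else 1 := by
  have hfull := Finset.sum_powerset_neg_one_pow_card (x := T)
  rw [← Finset.add_sum_erase _ _ (Finset.empty_mem_powerset T)] at hfull
  have hneg : ∑ S ∈ T.powerset.erase ∅, (-1 : ℤ) ^ (S.card)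
      = - ∑ S ∈ T.powerset.erase ∅, (-1 : ℤ) ^ (S.card - 1) := by
    rw [← Finset.sum_neg_distrib]
    refine Finset.sum_congr rfl fun S hS => ?_
    have hne : S ≠ ∅ := (Finset.mem_erase.mp hS).1
    have hc : S.card ≠ 0 := fun h => hne (Finset.card_eq_zero.mp h)
    conv_lhs => rw [show S.card = (S.card - 1) + 1 by omega]
    rw [pow_succ]
    ring
  rw [hneg, Finset.card_empty, pow_zero] at hfull
  split_ifs at hfull ⊢ with h
  · linarith
  · linarith

lemma key_identity (K : SComplex V) {r : ℕ} (A : Fin r → Finset V) (hA : K.FacetEnum A)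
    (i M : ℕ) (hi : 1 ≤ i) (hM : ∀ s ∈ K.faces, s.card ≤ M) :
    (fvec K (i - 1) : ℤ) =
      ∑ j ∈ Finset.Icc i M, ((j - 1).choose (i - 1) : ℤ) * euler (nerve A j) := by
  classical
  have hAface : ∀ a, A a ∈ K.faces := fun a => ((hA.2 (A a)).mpr ⟨a, rfl⟩).1
  have hinf_face : ∀ (S : Finset (Fin r)) (h : S.Nonempty), S.inf' h A ∈ K.faces := by
    intro S h
    obtain ⟨a, ha⟩ := h
    exact K.down_closed (hAface a) (Finset.inf'_le A ha)
  have hmle : ∀ S : Finset (Fin r), mfun A S ≤ M := by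
    intro S
    rw [mfun]
    by_cases h : S.Nonempty
    · rw [dif_pos h]; exact hM _ (hinf_face S h)
    · rw [dif_neg h]; omega
  set Q : Finset (Finset (Fin r)) := Finset.univ.filter (fun S => S ≠ ∅) with hQ
  set R : Finset (Finset V) := Finset.univ.filter (fun F : Finset V => F.card = i) with hR
  -- Step 1: Euler characteristic of the nerve as a sum over nonempty index sets
  have h1 : ∀ j : ℕ, euler (nerve A j)
      = ∑ S ∈ Q, (if j ≤ mfun A S then (-1 : ℤ) ^ (S.card - 1) else 0) := by
    intro j
    rw [euler_eq_sum_faces (nerve A j), ← Finset.sum_filter]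
    congr 1
    ext S
    simp only [hQ, Finset.mem_filter, Finset.mem_univ, true_and, Finset.filter_filter]
    constructor
    · rintro ⟨hf, hne⟩
      have hS : S.Nonempty := Finset.nonempty_iff_ne_empty.mpr hne
      refine ⟨hne, ?_⟩
      rw [mfun, dif_pos hS]
      exact hf hS
    · rintro ⟨hne, hj⟩
      have hS : S.Nonempty := Finset.nonempty_iff_ne_empty.mpr hne
      rw [mfun, dif_pos hS] at hj
      exact ⟨fun _ => hj, hne⟩
  -- Step 2: swap the sums over j and S
  have h2 : ∑ j ∈ Finset.Icc i M, ((j - 1).choose (i - 1) : ℤ) * euler (nerve A j)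
      = ∑ S ∈ Q, (-1 : ℤ) ^ (S.card - 1) * ((mfun A S).choose i : ℤ) := by
    rw [Finset.sum_congr rfl (fun j (_ : j ∈ Finset.Icc i M) => by
      rw [h1 j, Finset.mul_sum])]
    rw [Finset.sum_comm]
    refine Finset.sum_congr rfl fun S _ => ?_
    have hfil : (Finset.Icc i M).filter (fun j => j ≤ mfun A S) = Finset.Icc i (mfun A S) := by
      ext j
      simp only [Finset.mem_filter, Finset.mem_Icc]
      have := hmle S
      omega
    calc ∑ j ∈ Finset.Icc i M, ((j - 1).choose (i - 1) : ℤ) *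
          (if j ≤ mfun A S then (-1 : ℤ) ^ (S.card - 1) else 0)
        = ∑ j ∈ Finset.Icc i M, (if j ≤ mfun A S then
            ((j - 1).choose (i - 1) : ℤ) * (-1 : ℤ) ^ (S.card - 1) else 0) :=
          Finset.sum_congr rfl fun j _ => by split_ifs <;> ring
      _ = ∑ j ∈ (Finset.Icc i M).filter (fun j => j ≤ mfun A S),
            ((j - 1).choose (i - 1) : ℤ) * (-1 : ℤ) ^ (S.card - 1) :=
          (Finset.sum_filter _ _).symm
      _ = ∑ j ∈ Finset.Icc i (mfun A S),
            ((j - 1).choose (i - 1) : ℤ) * (-1 : ℤ) ^ (S.card - 1) := by rw [hfil]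
      _ = (∑ j ∈ Finset.Icc i (mfun A S), ((j - 1).choose (i - 1) : ℤ))
            * (-1 : ℤ) ^ (S.card - 1) := by rw [← Finset.sum_mul]
      _ = ((mfun A S).choose i : ℤ) * (-1 : ℤ) ^ (S.card - 1) := by
          congr 1
          exact_mod_cast congrArg (Nat.cast (R := ℤ)) (hockey i hi (mfun A S))
      _ = (-1 : ℤ) ^ (S.card - 1) * ((mfun A S).choose i : ℤ) := mul_comm _ _
  -- Step 3: the binomial coefficient as a count of i-subsets
  have h3 : ∀ S ∈ Q, ((mfun A S).choose i : ℤ)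
      = ∑ F ∈ R, (if S ⊆ tfun A F then (1 : ℤ) else 0) := by
    intro S hS
    have hSne : S.Nonempty := Finset.nonempty_iff_ne_empty.mpr (by
      simpa [hQ] using hS)
    have hmS : mfun A S = (S.inf' hSne A).card := by rw [mfun, dif_pos hSne]
    have hsub : ∀ F : Finset V, (S ⊆ tfun A F ↔ F ⊆ S.inf' hSne A) := by
      intro F
      constructor
      · intro h
        exact (Finset.le_inf'_iff hSne A).mpr
          (fun b hb => (Finset.mem_filter.mp (h hb)).2)
      · intro h a ha
        exact Finset.mem_filter.mpr ⟨Finset.mem_univ _, h.trans (Finset.inf'_le A ha)⟩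
    rw [Finset.sum_congr rfl (fun F (_ : F ∈ R) => by rw [if_congr (hsub F) rfl rfl]),
      Finset.sum_boole]
    have hfil : R.filter (fun F => F ⊆ S.inf' hSne A) = (S.inf' hSne A).powersetCard i := by
      ext F
      simp only [hR, Finset.mem_filter, Finset.mem_univ, true_and, Finset.mem_powersetCard]
      exact ⟨fun h => ⟨h.2, h.1⟩, fun h => ⟨h.2, h.1⟩⟩
    rw [hfil, Finset.card_powersetCard, hmS]
  -- Step 4: inner sum over S for a fixed F
  have h4 : ∀ F : Finset V, (∑ S ∈ Q, (-1 : ℤ) ^ (S.card - 1) *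
        (if S ⊆ tfun A F then (1 : ℤ) else 0))
      = if tfun A F = ∅ then 0 else 1 := by
    intro F
    rw [Finset.sum_congr rfl (fun S (_ : S ∈ Q) =>
      show (-1 : ℤ) ^ (S.card - 1) * (if S ⊆ tfun A F then (1 : ℤ) else 0)
        = if S ⊆ tfun A F then (-1 : ℤ) ^ (S.card - 1) else 0 by split_ifs <;> ring),
      ← Finset.sum_filter]
    have hfil : Q.filter (fun S => S ⊆ tfun A F) = (tfun A F).powerset.erase ∅ := by
      ext S
      simp only [hQ, Finset.mem_filter, Finset.mem_univ, true_and, Finset.mem_erase,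
        Finset.mem_powerset]
      all_goals tauto
    rw [hfil]
    exact powerset_erase_sum (tfun A F)
  -- Step 5: nonemptiness of tfun A F detects faces
  have h5 : ∀ F : Finset V, (tfun A F = ∅) ↔ F ∉ K.faces := by
    intro F
    constructor
    · intro h hF
      obtain ⟨a, ha⟩ := exists_facet_index hA hF
      have hmem : a ∈ tfun A F := Finset.mem_filter.mpr ⟨Finset.mem_univ _, ha⟩
      rw [h] at hmem
      exact absurd hmem (Finset.notMem_empty a)
    · intro h
      rw [tfun, Finset.filter_eq_empty_iff]
      exact fun a _ hsub => h (K.down_closed (hAface a) hsub)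
  -- Assemble
  rw [h2, Finset.sum_congr rfl (fun S hS => by rw [h3 S hS, Finset.mul_sum]),
    Finset.sum_comm, Finset.sum_congr rfl (fun F (_ : F ∈ R) => h4 F),
    Finset.sum_congr rfl (fun F (_ : F ∈ R) =>
      show (if tfun A F = ∅ then (0 : ℤ) else 1) = if F ∈ K.faces then (1 : ℤ) else 0 by
        by_cases hf : F ∈ K.faces
        · rw [if_neg (fun hc => ((h5 F).mp hc) hf), if_pos hf]
        · rw [if_pos ((h5 F).mpr hf), if_neg hf]),
    Finset.sum_boole]
  have hfil : R.filter (fun F => F ∈ K.faces)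
      = Finset.univ.filter (fun s : Finset V => s ∈ K.faces ∧ s.card = (i - 1) + 1) := by
    ext F
    simp only [hR, Finset.mem_filter, Finset.mem_univ, true_and]
    have : i - 1 + 1 = i := by omega
    rw [this]
    exact ⟨fun h => ⟨h.2, h.1⟩, fun h => ⟨h.2, h.1⟩⟩
  rw [hfil, ← fvec_eq_card K (i - 1)]

end Key
end SCAux
open SComplex in
/-- If two complexes have isomorphic reduced homology in all their higher
nerves, then they have identical `f`-vectors and `h`-vectors. -/
theorem fvec_hvec_eq_of_nerve_homology_iso
    {V₁ V₂ : Type} [Fintype V₁] [DecidableEq V₁] [Fintype V₂] [DecidableEq V₂]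
    (k : Type) [Field k]
    (K₁ : SComplex V₁) {r₁ : ℕ} (A₁ : Fin r₁ → Finset V₁) (hA₁ : K₁.FacetEnum A₁)
    (K₂ : SComplex V₂) {r₂ : ℕ} (A₂ : Fin r₂ → Finset V₂) (hA₂ : K₂.FacetEnum A₂)
    (d₁ : ℕ) (hd₁ : ∀ s ∈ K₁.faces, s.card ≤ d₁) (hd₁' : ∃ s ∈ K₁.faces, s.card = d₁)
    (d₂ : ℕ) (hd₂ : ∀ s ∈ K₂.faces, s.card ≤ d₂) (hd₂' : ∃ s ∈ K₂.faces, s.card = d₂)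
    (hiso : ∀ (i : ℤ) (j : ℕ), 1 ≤ j → Nonempty
      (↥(Hred k (nerve A₁ j) i) ≃ₗ[k] ↥(Hred k (nerve A₂ j) i))) :
    (∀ i : ℕ, fvec K₁ i = fvec K₂ i) ∧ d₁ = d₂ ∧
      (∀ j : ℕ, j ≤ d₁ → hvec K₁ d₁ j = hvec K₂ d₂ j) := by
  classical
  have heuler : ∀ j : ℕ, 1 ≤ j → euler (nerve A₁ j) = euler (nerve A₂ j) := by
    intro j hj
    rw [SCAux.euler_eq_one_sub_hsum k (nerve A₁ j) (max r₁ r₂ + 1)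
        (by simp only [Fintype.card_fin]; omega),
      SCAux.euler_eq_one_sub_hsum k (nerve A₂ j) (max r₁ r₂ + 1)
        (by simp only [Fintype.card_fin]; omega)]
    congr 1
    refine Finset.sum_congr rfl fun ℓ _ => ?_
    rw [LinearEquiv.finrank_eq (hiso ((ℓ : ℤ) - 1) j hj).some]
  set M := max d₁ d₂ with hMdef
  have hf1 : ∀ i : ℕ, 1 ≤ i → fvec K₁ (i - 1) = fvec K₂ (i - 1) := by
    intro i hi
    have e1 := SCAux.key_identity K₁ A₁ hA₁ i M hi
      (fun s hs => le_trans (hd₁ s hs) (le_max_left _ _))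
    have e2 := SCAux.key_identity K₂ A₂ hA₂ i M hi
      (fun s hs => le_trans (hd₂ s hs) (le_max_right _ _))
    have hZ : (fvec K₁ (i - 1) : ℤ) = (fvec K₂ (i - 1) : ℤ) := by
      rw [e1, e2]
      refine Finset.sum_congr rfl fun j hj => ?_
      rw [heuler j (le_trans hi (Finset.mem_Icc.mp hj).1)]
    exact_mod_cast hZ
  have hfv : ∀ i : ℕ, fvec K₁ i = fvec K₂ i := by
    intro i
    have := hf1 (i + 1) (by omega)
    simpa using this
  have hd21 : d₂ ≤ d₁ := by
    rcases Nat.eq_zero_or_pos d₂ with h0 | hpos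
    · omega
    · obtain ⟨s, hs, hc⟩ := hd₂'
      have hpos2 : 0 < fvec K₂ (d₂ - 1) := by
        rw [fvec]
        exact (Set.ncard_pos (Set.toFinite _)).mpr ⟨s, hs, by omega⟩
      rw [← hfv (d₂ - 1)] at hpos2
      rw [fvec] at hpos2
      have hne : {s : Finset V₁ | s ∈ K₁.faces ∧ s.card = (d₂ - 1) + 1}.ncard ≠ 0 := by omega
      obtain ⟨t, ht, htc⟩ := Set.nonempty_of_ncard_ne_zero hne
      have := hd₁ t ht
      omega
  have hd12 : d₁ ≤ d₂ := by
    rcases Nat.eq_zero_or_pos d₁ with h0 | hpos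
    · omega
    · obtain ⟨s, hs, hc⟩ := hd₁'
      have hpos1 : 0 < fvec K₁ (d₁ - 1) := by
        rw [fvec]
        exact (Set.ncard_pos (Set.toFinite _)).mpr ⟨s, hs, by omega⟩
      rw [hfv (d₁ - 1)] at hpos1
      rw [fvec] at hpos1
      have hne : {s : Finset V₂ | s ∈ K₂.faces ∧ s.card = (d₁ - 1) + 1}.ncard ≠ 0 := by omega
      obtain ⟨t, ht, htc⟩ := Set.nonempty_of_ncard_ne_zero hne
      have := hd₂ t ht
      omega
  have hd : d₁ = d₂ := le_antisymm hd12 hd21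
  refine ⟨hfv, hd, fun j _ => ?_⟩
  rw [hvec, hvec, ← hd]
  refine Finset.sum_congr rfl fun i _ => ?_
  by_cases h0 : i = 0
  · rw [if_pos h0, if_pos h0]
  · rw [if_neg h0, if_neg h0, hfv (i - 1)]
end
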